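/- arXiv:2112.13081 — 6 statements merged into one kernel-verified Lean document; each statement's English description precedes it below -/
import Mathlib

section
/- Two-sided exponential bounds for the linearized flow of the bistable ODE. Let Y : [0,∞) × R → R solve Y_τ = f(Y), Y(0,ζ) = ζ, let μ = f'(α), and let C_0 > 0 be a constant with 2C_0 > max(|α_-|, |α_+|). Then there exist positive constants C_Y and μ̄ such that for all τ > 0 and all ζ ∈ (-2C_0, 2C_0): e^{-μ̄ τ} ≤ Y_ζ(τ,ζ) ≤ C_Y e^{μ τ}. -/
open MeasureTheory Real Set Filter Topology

/-- Derivative of the squared positive part. -/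
lemma aux_posPartSq_hasDerivAt (x : ℝ) :
    HasDerivAt (fun y : ℝ => max y 0 ^ 2) (2 * max x 0) x := by
  rcases lt_trichotomy x 0 with hx | hx | hx
  · have h0 : (fun y : ℝ => max y 0 ^ 2) =ᶠ[𝓝 x] fun _ => (0 : ℝ) := by
      filter_upwards [Iio_mem_nhds hx] with y hy
      simp [max_eq_right (mem_Iio.mp hy).le]
    rw [max_eq_right hx.le, mul_zero]
    exact (hasDerivAt_const x (0 : ℝ)).congr_of_eventuallyEq h0
  · subst hx
    rw [hasDerivAt_iff_isLittleO]
    simp only [max_self, sub_zero, zero_pow, smul_eq_mul, mul_zero, sub_zero]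
    rw [Asymptotics.isLittleO_iff]
    intro c hc
    filter_upwards [Metric.eventually_nhds_iff.2 ⟨c, hc, fun {y} hy => hy⟩] with y hy
    have h1 : |max y 0| ≤ |y| := by
      rcases le_or_gt y 0 with h | h
      · simp [max_eq_right h]
      · simp [max_eq_left h.le]
    have hy' : |y| < c := by simpa [Real.dist_eq] using hy
    calc ‖max y 0 ^ 2 - 0 ^ 2‖ = |max y 0| * |max y 0| := by
          rw [sq]; simp [abs_mul]
      _ ≤ c * |y| := by
          refine mul_le_mul (le_of_lt (lt_of_le_of_lt h1 hy')) h1 (abs_nonneg _) hc.le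
      _ = c * ‖y‖ := rfl
  · have h0 : (fun y : ℝ => max y 0 ^ 2) =ᶠ[𝓝 x] fun y => y ^ 2 := by
      filter_upwards [Ioi_mem_nhds hx] with y hy
      simp [max_eq_left (mem_Ioi.mp hy).le]
    rw [max_eq_left hx.le]
    have := hasDerivAt_pow 2 x
    simpa [mul_comm] using this.congr_of_eventuallyEq h0

lemma aux_sq_cont : Continuous (fun x : ℝ => max x 0 ^ 2) := by continuity

set_option maxHeartbeats 2000000 in
/-- Two-sided exponential bounds for the linearized flow of the
bistable ODE: for `ζ ∈ (-2C₀, 2C₀)` and `τ > 0`,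
`e^{-μ̄ τ} ≤ Y_ζ(τ,ζ) ≤ C_Y e^{μ τ}` where `μ = f'(α)`. -/
theorem bistable_flow_linearization_bounds
    (f : ℝ → ℝ) (αm αc αp : ℝ)
    (hf : ContDiff ℝ 2 f)
    (hαs : αm < αc ∧ αc < αp)
    (hzeros : ∀ s : ℝ, f s = 0 ↔ s = αm ∨ s = αc ∨ s = αp)
    (hfm : deriv f αm < 0) (hfp : deriv f αp < 0) (hfc : 0 < deriv f αc)
    (hfbelow : ∀ s : ℝ, s < αm → 0 < f s) (hfabove : ∀ s : ℝ, αp < s → f s < 0)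
    (Y : ℝ → ℝ → ℝ)
    (hY0 : ∀ ζ : ℝ, Y 0 ζ = ζ)
    (hYode : ∀ ζ : ℝ, ∀ τ ∈ Ici (0 : ℝ),
      HasDerivWithinAt (fun s => Y s ζ) (f (Y τ ζ)) (Ici 0) τ)
    (C0 : ℝ) (hC0 : 0 < C0) (hC0' : max |αm| |αp| < 2 * C0) :
    ∃ CY > (0 : ℝ), ∃ μbar > (0 : ℝ),
      ∀ τ : ℝ, 0 < τ → ∀ ζ ∈ Ioo (-(2 * C0)) (2 * C0),
        Real.exp (-μbar * τ) ≤ deriv (fun z => Y τ z) ζ ∧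
        deriv (fun z => Y τ z) ζ ≤ CY * Real.exp (deriv f αc * τ) := by
  -- basic notation
  set μ := deriv f αc with hμdef
  set K : Set ℝ := Icc (-(2 * C0)) (2 * C0) with hKdef
  have hKcomp : IsCompact K := isCompact_Icc
  have hKconv : Convex ℝ K := convex_Icc _ _
  have hαmK : αm ∈ Ioo (-(2 * C0)) (2 * C0) := by
    constructor
    · have := (abs_lt.mp (lt_of_le_of_lt (le_max_left _ _) hC0')).1; linarith
    · have := (abs_lt.mp (lt_of_le_of_lt (le_max_left _ _) hC0')).2; linarith
  have hαpK : αp ∈ Ioo (-(2 * C0)) (2 * C0) := by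
    constructor
    · have := (abs_lt.mp (lt_of_le_of_lt (le_max_right _ _) hC0')).1; linarith
    · have := (abs_lt.mp (lt_of_le_of_lt (le_max_right _ _) hC0')).2; linarith
  have hfdiff : Differentiable ℝ f := hf.differentiable (by norm_num)
  have hf1cont : Continuous (deriv f) := hf.continuous_deriv (by norm_num)
  have hf1diff : Differentiable ℝ (deriv f) := by
    have h2 : ContDiff ℝ 1 (deriv f) := by
      have := ContDiff.iterate_deriv' 1 1 (f := f) (by exact_mod_cast hf)
      simp only [Function.iterate_one] at this
      exact_mod_cast this
    exact h2.differentiable (by norm_num)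
  have hf2cont : Continuous (deriv (deriv f)) := by
    have h2 : ContDiff ℝ 1 (deriv f) := by
      have := ContDiff.iterate_deriv' 1 1 (f := f) (by exact_mod_cast hf)
      simp only [Function.iterate_one] at this
      exact_mod_cast this
    exact h2.continuous_deriv le_rfl
  -- bound on |f'| over K
  obtain ⟨L, hL0, hL⟩ : ∃ L > (0 : ℝ), ∀ x ∈ K, |deriv f x| ≤ L := by
    obtain ⟨C, hC⟩ := hKcomp.exists_bound_of_continuousOn (hf1cont.continuousOn (s := K))
    exact ⟨max C 1, lt_of_lt_of_le one_pos (le_max_right _ _),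
      fun x hx => le_trans (hC x hx) (le_max_left _ _)⟩
  -- bound on |f''| over K
  obtain ⟨M, hM0, hM⟩ : ∃ M > (0 : ℝ), ∀ x ∈ K, |deriv (deriv f) x| ≤ M := by
    obtain ⟨C, hC⟩ := hKcomp.exists_bound_of_continuousOn (hf2cont.continuousOn (s := K))
    exact ⟨max C 1, lt_of_lt_of_le one_pos (le_max_right _ _),
      fun x hx => le_trans (hC x hx) (le_max_left _ _)⟩
  -- f is L-Lipschitz on K
  have hLip : ∀ x ∈ K, ∀ y ∈ K, |f y - f x| ≤ L * |y - x| := by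
    intro x hx y hy
    exact Convex.norm_image_sub_le_of_norm_hasDerivWithin_le
      (fun z hz => (hfdiff z).hasDerivAt.hasDerivWithinAt)
      (fun z hz => hL z hz) hKconv hx hy
  -- f' is M-Lipschitz on K
  have hLip' : ∀ x ∈ K, ∀ y ∈ K, |deriv f y - deriv f x| ≤ M * |y - x| := by
    intro x hx y hy
    exact Convex.norm_image_sub_le_of_norm_hasDerivWithin_le
      (fun z hz => (hf1diff z).hasDerivAt.hasDerivWithinAt)
      (fun z hz => hM z hz) hKconv hx hy
  -- Taylor bound
  have hKle : -(2 * C0) ≤ 2 * C0 := by linarith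
  have hTaylor : ∀ x ∈ K, ∀ y ∈ K, |f y - f x - deriv f x * (y - x)| ≤ M * |y - x| ^ 2 := by
    intro x hx y hy
    have hsub : uIcc x y ⊆ K := by
      rw [hKdef, ← uIcc_of_le hKle]
      exact uIcc_subset_uIcc (by rwa [uIcc_of_le hKle]) (by rwa [uIcc_of_le hKle])
    have hdist : ∀ t ∈ uIcc x y, |t - x| ≤ |y - x| := by
      intro t ht
      rcases le_total x y with h | h
      · rw [uIcc_of_le h] at ht
        rw [abs_of_nonneg (by linarith [ht.1] : (0:ℝ) ≤ t - x),
          abs_of_nonneg (by linarith [ht.1, ht.2] : (0:ℝ) ≤ y - x)]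
        linarith [ht.2]
      · rw [uIcc_of_ge h] at ht
        rw [abs_of_nonpos (by linarith [ht.2] : t - x ≤ (0:ℝ)),
          abs_of_nonpos (by linarith [ht.1, ht.2] : y - x ≤ (0:ℝ))]
        linarith [ht.1]
    have key := Convex.norm_image_sub_le_of_norm_hasDerivWithin_le
      (f := fun t => f t - deriv f x * t) (f' := fun t => deriv f t - deriv f x)
      (s := uIcc x y) (C := M * |y - x|)
      (fun t _ => (((hfdiff t).hasDerivAt.sub
        (by simpa using (hasDerivAt_id t).const_mul (deriv f x))).hasDerivWithinAt))
      (fun t ht => by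
        have h1 := hLip' x hx t (hsub ht)
        have h2 := hdist t ht
        have : |deriv f t - deriv f x| ≤ M * |y - x| :=
          le_trans h1 (mul_le_mul_of_nonneg_left h2 hM0.le)
        simpa using this)
      (convex_uIcc x y) left_mem_uIcc right_mem_uIcc
    have heq : (f y - deriv f x * y) - (f x - deriv f x * x)
        = f y - f x - deriv f x * (y - x) := by ring
    rw [Real.norm_eq_abs, Real.norm_eq_abs, heq] at key
    calc |f y - f x - deriv f x * (y - x)| ≤ M * |y - x| * |y - x| := key
      _ = M * |y - x| ^ 2 := by ring
  -- key compactness estimate : f' ≤ μ + A |f| on K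
  have hαcK : αc ∈ Ioo (-(2 * C0)) (2 * C0) :=
    ⟨lt_trans hαmK.1 hαs.1, lt_trans hαs.2 hαpK.2⟩
  obtain ⟨A, hA0, hA⟩ : ∃ A ≥ (0 : ℝ), ∀ x ∈ K, deriv f x ≤ μ + A * |f x| := by
    by_contra hcon
    push_neg at hcon
    have xseq : ∀ n : ℕ, ∃ x ∈ K, μ + (n : ℝ) * |f x| < deriv f x := fun n =>
      hcon (n : ℝ) (by positivity)
    choose x hxK hx using xseq
    obtain ⟨y, hyK, φi, hφmono, hφlim⟩ := hKcomp.tendsto_subseq hxK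
    have hbnd : ∀ n : ℕ, (n : ℝ) * |f (x n)| ≤ L + |μ| := by
      intro n
      have h1 : deriv f (x n) ≤ L := le_trans (le_abs_self _) (hL _ (hxK n))
      have := hx n
      nlinarith [neg_abs_le μ]
    -- f y = 0
    have hfy : f y = 0 := by
      have hlim1 : Tendsto (fun n => f (x (φi n))) atTop (𝓝 (f y)) :=
        (hf.continuous.tendsto y).comp hφlim
      have hlim0 : Tendsto (fun n => f (x (φi n))) atTop (𝓝 0) := by
        rw [tendsto_iff_norm_sub_tendsto_zero]
        simp only [sub_zero]
        have hb : ∀ n : ℕ, 1 ≤ n → ‖f (x (φi n))‖ ≤ (L + |μ|) / n := by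
          intro n hn
          have h1 := hbnd (φi n)
          have h2 : (n : ℝ) ≤ (φi n : ℝ) := by exact_mod_cast hφmono.le_apply
          have hn' : (0:ℝ) < n := by exact_mod_cast hn
          rw [le_div_iff₀ hn', Real.norm_eq_abs]
          calc |f (x (φi n))| * n ≤ |f (x (φi n))| * (φi n) := by
                exact mul_le_mul_of_nonneg_left h2 (abs_nonneg _)
            _ ≤ L + |μ| := by rw [mul_comm]; exact h1
        have hdiv : Tendsto (fun n : ℕ => (L + |μ|) / (n : ℝ)) atTop (𝓝 0) :=
          tendsto_const_nhds.div_atTop tendsto_natCast_atTop_atTop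
        refine squeeze_zero_norm' ?_ hdiv
        filter_upwards [eventually_ge_atTop 1] with n hn
        simpa using hb n hn
      exact tendsto_nhds_unique hlim1 hlim0
    have hμy : μ ≤ deriv f y := by
      have hlim1 : Tendsto (fun n => deriv f (x (φi n))) atTop (𝓝 (deriv f y)) :=
        (hf1cont.tendsto y).comp hφlim
      refine le_of_tendsto_of_tendsto tendsto_const_nhds hlim1 ?_
      filter_upwards with n
      have h1 := hx (φi n)
      have : (0:ℝ) ≤ (φi n : ℝ) * |f (x (φi n))| := by positivity
      linarith
    have hyc : y = αc := by
      rcases (hzeros y).mp hfy with h | h | h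
      · exfalso; rw [h] at hμy; linarith
      · exact h
      · exfalso; rw [h] at hμy; linarith
    rw [hyc] at hφlim
    -- choose δ > 0 so that deriv f ≥ μ/2 on the δ-neighbourhood of αc
    obtain ⟨δ, hδ0, hδ⟩ : ∃ δ > (0:ℝ), ∀ t : ℝ, |t - αc| ≤ δ → μ / 2 ≤ deriv f t := by
      have : ∀ᶠ t in 𝓝 αc, μ / 2 < deriv f t :=
        (hf1cont.tendsto αc).eventually (eventually_gt_nhds (by linarith))
      obtain ⟨ε, hε0, hε⟩ := Metric.eventually_nhds_iff.mp this
      exact ⟨ε / 2, by linarith, fun t ht =>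
        (hε (show dist t αc < ε by rw [Real.dist_eq]; linarith)).le⟩
    -- lower bound |f t| ≥ μ/2 * |t - αc| near αc
    have hflow : ∀ t : ℝ, |t - αc| ≤ δ → μ / 2 * |t - αc| ≤ |f t| := by
      intro t ht
      have hmono : MonotoneOn (fun u => f u - μ / 2 * u) (Icc (αc - δ) (αc + δ)) := by
        have hder : ∀ u : ℝ, HasDerivAt (fun u => f u - μ / 2 * u) (deriv f u - μ / 2) u :=
          fun u => (hfdiff u).hasDerivAt.sub (by simpa using (hasDerivAt_id u).const_mul (μ/2))
        refine monotoneOn_of_deriv_nonneg (convex_Icc _ _) ?_ ?_ ?_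
        · exact (hf.continuous.sub (continuous_const.mul continuous_id)).continuousOn
        · exact fun u _ => (hder u).differentiableAt.differentiableWithinAt
        · intro u hu
          rw [interior_Icc] at hu
          rw [(hder u).deriv]
          have : |u - αc| ≤ δ := by
            rw [abs_le]; constructor <;> [linarith [hu.1]; linarith [hu.2]]
          linarith [hδ u this]
      have hαmem : αc ∈ Icc (αc - δ) (αc + δ) := by constructor <;> linarith
      have htmem : t ∈ Icc (αc - δ) (αc + δ) := by
        rw [abs_le] at ht; constructor <;> [linarith [ht.1]; linarith [ht.2]]
      rcases le_total αc t with h | h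
      · have := hmono hαmem htmem h
        have hfαc : f αc = 0 := (hzeros αc).mpr (Or.inr (Or.inl rfl))
        rw [abs_of_nonneg (by linarith : (0:ℝ) ≤ t - αc)]
        have h2 : μ / 2 * t - μ / 2 * αc ≤ f t := by
          simp only [hfαc] at this; linarith
        calc μ / 2 * (t - αc) = μ / 2 * t - μ / 2 * αc := by ring
          _ ≤ f t := h2
          _ ≤ |f t| := le_abs_self _
      · have := hmono htmem hαmem h
        have hfαc : f αc = 0 := (hzeros αc).mpr (Or.inr (Or.inl rfl))
        rw [abs_of_nonpos (by linarith : t - αc ≤ (0:ℝ))]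
        have h2 : f t ≤ μ / 2 * t - μ / 2 * αc := by
          simp only [hfαc] at this; linarith
        calc μ / 2 * -(t - αc) = -(μ / 2 * t - μ / 2 * αc) := by ring
          _ ≤ -f t := by linarith
          _ ≤ |f t| := neg_le_abs _
    -- pick a large index to obtain the contradiction
    have h1 : ∀ᶠ n in atTop, |x (φi n) - αc| ≤ δ := by
      have := Metric.tendsto_atTop.mp hφlim δ hδ0
      obtain ⟨N, hN⟩ := this
      filter_upwards [eventually_ge_atTop N] with n hn
      have := hN n hn
      rw [Real.dist_eq] at this
      exact this.le
    have h2 : ∀ᶠ n in atTop, 2 * M / μ < (φi n : ℝ) := by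
      have : Tendsto (fun n => (φi n : ℝ)) atTop atTop :=
        tendsto_natCast_atTop_atTop.comp hφmono.tendsto_atTop
      exact this.eventually_gt_atTop _
    obtain ⟨n, hn1, hn2⟩ := (h1.and h2).exists
    set x' := x (φi n) with hx'
    have hkey := hx (φi n)
    have hxne : x' ≠ αc := by
      intro h
      rw [← hx', h] at hkey
      simp only [(hzeros αc).mpr (Or.inr (Or.inl rfl)), abs_zero, mul_zero, add_zero] at hkey
      exact lt_irrefl μ hkey
    have hpos : 0 < |x' - αc| := abs_pos.mpr (sub_ne_zero.mpr hxne)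
    have hlipc : deriv f x' - μ ≤ M * |x' - αc| := by
      have := hLip' αc ⟨hαcK.1.le, hαcK.2.le⟩ x' (hxK (φi n))
      calc deriv f x' - μ ≤ |deriv f x' - deriv f αc| := le_abs_self _
        _ ≤ M * |x' - αc| := this
    have hflow' := hflow x' hn1
    have : (φi n : ℝ) * (μ / 2 * |x' - αc|) < M * |x' - αc| := by
      calc (φi n : ℝ) * (μ / 2 * |x' - αc|) ≤ (φi n : ℝ) * |f x'| :=
            mul_le_mul_of_nonneg_left hflow' (by positivity)
        _ < deriv f x' - μ := by linarith [hkey]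
        _ ≤ M * |x' - αc| := hlipc
    have : (φi n : ℝ) * (μ / 2) < M := by
      have h3 := lt_of_mul_lt_mul_right (by linarith [this] : (φi n : ℝ) * (μ / 2) * |x' - αc| < M * |x' - αc|) hpos.le
      exact h3
    rw [div_lt_iff₀ (by linarith : (0:ℝ) < μ)] at hn2
    nlinarith
  -- sign of f between the zeros
  -- continuity and interior differentiability in time
  have contY : ∀ z : ℝ, ContinuousOn (fun s => Y s z) (Ici 0) :=
    fun z => fun s hs => ((hYode z s hs).continuousWithinAt)
  have hDt : ∀ z : ℝ, ∀ s : ℝ, 0 < s → HasDerivAt (fun t => Y t z) (f (Y s z)) s := by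
    intro z s hs
    exact (hYode z s (le_of_lt hs)).hasDerivAt (Ici_mem_nhds hs)
  -- trajectories starting in the open interval stay in K
  have trap : ∀ z ∈ Ioo (-(2 * C0)) (2 * C0), ∀ s : ℝ, 0 ≤ s → Y s z ∈ K := by
    intro z hz s hs
    have hupper : Y s z ≤ max z αp := by
      set m : ℝ := max z αp with hm
      set φ : ℝ → ℝ := fun s => max (Y s z - m) 0 ^ 2 with hφ
      have hsqc : Continuous (fun x : ℝ => max x 0 ^ 2) := aux_sq_cont
      have hφc : ContinuousOn φ (Ici 0) := by
        exact hsqc.comp_continuousOn ((contY z).sub continuousOn_const)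
      have hφd : ∀ t ∈ interior (Ici (0:ℝ)),
          HasDerivAt φ (2 * max (Y t z - m) 0 * f (Y t z)) t := by
        intro t ht
        rw [interior_Ici] at ht
        exact (aux_posPartSq_hasDerivAt (Y t z - m)).comp t ((hDt z t ht).sub_const m)
      have hanti : AntitoneOn φ (Ici 0) := by
        refine antitoneOn_of_hasDerivWithinAt_nonpos (convex_Ici 0) hφc
          (fun t ht => ((hφd t ht).hasDerivWithinAt)) ?_
        intro t ht
        rcases le_or_gt (Y t z) m with h | h
        · simp [max_eq_right (by linarith : Y t z - m ≤ 0)]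
        · have hfneg : f (Y t z) < 0 := hfabove _ (lt_of_le_of_lt (le_max_right z αp) h)
          have : (0:ℝ) ≤ 2 * max (Y t z - m) 0 := by positivity
          exact mul_nonpos_of_nonneg_of_nonpos this hfneg.le
      have h0 : φ 0 = 0 := by
        simp [hφ, hY0 z, max_eq_right (by simp [hm] : z - m ≤ 0)]
      have hle : φ s ≤ 0 := h0 ▸ hanti (le_refl (0:ℝ)) hs hs
      have hmax : max (Y s z - m) 0 = 0 := by
        have h2 : max (Y s z - m) 0 ^ 2 = 0 := le_antisymm (by simpa [hφ] using hle) (by positivity)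
        exact pow_eq_zero_iff two_ne_zero |>.mp h2
      have := le_max_left (Y s z - m) 0
      rw [hmax] at this
      linarith
    have hlower : min z αm ≤ Y s z := by
      set m : ℝ := min z αm with hm
      set φ : ℝ → ℝ := fun s => max (m - Y s z) 0 ^ 2 with hφ
      have hsqc : Continuous (fun x : ℝ => max x 0 ^ 2) := aux_sq_cont
      have hφc : ContinuousOn φ (Ici 0) := by
        exact hsqc.comp_continuousOn (continuousOn_const.sub (contY z))
      have hφd : ∀ t ∈ interior (Ici (0:ℝ)),
          HasDerivAt φ (2 * max (m - Y t z) 0 * -f (Y t z)) t := by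
        intro t ht
        rw [interior_Ici] at ht
        exact (aux_posPartSq_hasDerivAt (m - Y t z)).comp t ((hDt z t ht).const_sub m)
      have hanti : AntitoneOn φ (Ici 0) := by
        refine antitoneOn_of_hasDerivWithinAt_nonpos (convex_Ici 0) hφc
          (fun t ht => ((hφd t ht).hasDerivWithinAt)) ?_
        intro t ht
        rcases le_or_gt m (Y t z) with h | h
        · simp [max_eq_right (by linarith : m - Y t z ≤ 0)]
        · have hfpos : 0 < f (Y t z) := hfbelow _ (lt_of_lt_of_le h (min_le_right z αm))
          have : (0:ℝ) ≤ 2 * max (m - Y t z) 0 := by positivity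
          exact mul_nonpos_of_nonneg_of_nonpos this (by linarith)
      have h0 : φ 0 = 0 := by
        simp [hφ, hY0 z, max_eq_right (by simp [hm] : m - z ≤ 0)]
      have hle : φ s ≤ 0 := h0 ▸ hanti (le_refl (0:ℝ)) hs hs
      have hmax : max (m - Y s z) 0 = 0 := by
        have h2 : max (m - Y s z) 0 ^ 2 = 0 := le_antisymm (by simpa [hφ] using hle) (by positivity)
        exact pow_eq_zero_iff two_ne_zero |>.mp h2
      have := le_max_left (m - Y s z) 0
      rw [hmax] at this
      linarith
    constructor
    · refine le_trans ?_ hlower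
      rcases min_cases z αm with ⟨h, _⟩ | ⟨h, _⟩ <;> rw [h]
      · linarith [hz.1]
      · linarith [hαmK.1]
    · refine le_trans hupper ?_
      rcases max_cases z αp with ⟨h, _⟩ | ⟨h, _⟩ <;> rw [h]
      · linarith [hz.2]
      · linarith [hαpK.2]
  refine ⟨Real.exp (4 * C0 * A), Real.exp_pos _, L, hL0, ?_⟩
  intro τ hτ ζ hζ
  -- the trajectory of ζ
  have hζK : ∀ s : ℝ, 0 ≤ s → Y s ζ ∈ K := trap ζ hζ
  set c : ℝ → ℝ := fun s => deriv f (Y s ζ) with hcdef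
  have hccont : ContinuousOn c (Ici 0) := hf1cont.comp_continuousOn (contY ζ)
  have hcbound : ∀ s : ℝ, 0 ≤ s → |c s| ≤ L := fun s hs => hL _ (hζK s hs)
  set V : ℝ → ℝ := fun s => ∫ u in (0 : ℝ)..s, c u with hVdef
  have hcca : ∀ s : ℝ, 0 < s → ContinuousAt c s :=
    fun s hs => hf1cont.continuousAt.comp (hDt ζ s hs).continuousAt
  have hcint : ∀ s : ℝ, 0 ≤ s → IntervalIntegrable c volume 0 s := by
    intro s hs
    apply ContinuousOn.intervalIntegrable
    apply hccont.mono
    rw [uIcc_of_le hs]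
    exact fun u hu => hu.1
  have hVd' : ∀ s : ℝ, 0 < s → HasDerivAt V (c s) s := by
    intro s hs
    refine intervalIntegral.integral_hasDerivAt_right (hcint s hs.le) ?_ (hcca s hs)
    exact ⟨Ioi 0, Ioi_mem_nhds hs,
      (continuousOn_of_forall_continuousAt (fun u hu => hcca u hu)).aestronglyMeasurable measurableSet_Ioi⟩
  have hVd0 : HasDerivWithinAt V (c 0) (Ici 0) 0 := by
    refine intervalIntegral.integral_hasDerivWithinAt_right (s := Ici 0) (t := Ioi 0)
      (hcint 0 le_rfl) ?_ ((hccont 0 self_mem_Ici).mono Ioi_subset_Ici_self)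
    exact ⟨Ioi 0, self_mem_nhdsWithin,
      (continuousOn_of_forall_continuousAt (fun u hu => hcca u hu)).aestronglyMeasurable measurableSet_Ioi⟩
  have hVd : ∀ s : ℝ, 0 ≤ s → HasDerivWithinAt V (c s) (Ici s) s := by
    intro s hs
    rcases eq_or_lt_of_le hs with h | h
    · rw [← h]; exact hVd0
    · exact (hVd' s h).hasDerivWithinAt
  have hVcont : ContinuousOn V (Ici 0) := by
    intro s hs
    rcases eq_or_lt_of_le (mem_Ici.mp hs) with h | h
    · rw [← h]
      exact hVd0.continuousWithinAt
    · exact (hVd' s h).continuousAt.continuousWithinAt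
  -- the fundamental identity f (Y s ζ) = f ζ * exp (V s)
  have hFormula : ∀ s : ℝ, 0 ≤ s → f (Y s ζ) = f ζ * Real.exp (V s) := by
    intro b hb
    set cc : ℝ → ℝ := fun t => max (min (c t) L) (-L) with hccdef
    have hvlip : ∀ t : ℝ, LipschitzWith (Real.toNNReal L) (fun x : ℝ => cc t * x) := by
      intro t
      refine LipschitzWith.of_dist_le_mul fun x y => ?_
      rw [Real.dist_eq, Real.dist_eq, ← mul_sub, abs_mul, Real.coe_toNNReal L hL0.le]
      have h1 : |cc t| ≤ L := by
        rw [abs_le]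
        exact ⟨le_max_right _ _, max_le (min_le_right _ _) (by linarith)⟩
      exact mul_le_mul_of_nonneg_right h1 (abs_nonneg _)
    have hcc : ∀ t : ℝ, 0 ≤ t → cc t = c t := by
      intro t ht
      have h1 := hcbound t ht
      rw [abs_le] at h1
      rw [hccdef]
      simp only [min_eq_left h1.2, max_eq_left h1.1]
    have hg' : ∀ t ∈ Ico 0 b,
        HasDerivWithinAt (fun s => f (Y s ζ)) (cc t * f (Y t ζ)) (Ici t) t := by
      intro t ht
      have h1 : HasDerivWithinAt (fun s => Y s ζ) (f (Y t ζ)) (Ici t) t :=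
        (hYode ζ t ht.1).mono (Ici_subset_Ici.mpr ht.1)
      have h2 := ((hfdiff (Y t ζ)).hasDerivAt).comp_hasDerivWithinAt t h1
      rw [hcc t ht.1]
      exact h2
    have hE' : ∀ t ∈ Ico 0 b,
        HasDerivWithinAt (fun s => f ζ * Real.exp (V s))
          (cc t * (f ζ * Real.exp (V t))) (Ici t) t := by
      intro t ht
      have h2 : HasDerivWithinAt (fun s => Real.exp (V s)) (Real.exp (V t) * c t) (Ici t) t :=
        (Real.hasDerivAt_exp (V t)).comp_hasDerivWithinAt t (hVd t ht.1)
      have h3 := h2.const_mul (f ζ)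
      rw [hcc t ht.1]
      rw [show c t * (f ζ * Real.exp (V t)) = f ζ * (Real.exp (V t) * c t) by ring]
      exact h3
    have hIcc : Icc (0:ℝ) b ⊆ Ici 0 := fun u hu => hu.1
    have huniq := ODE_solution_unique (v := fun t x => cc t * x) hvlip
      (hf.continuous.comp_continuousOn ((contY ζ).mono hIcc)) hg'
      (continuousOn_const.mul (Real.continuous_exp.comp_continuousOn (hVcont.mono hIcc))) hE'
      (by simp [hY0, hVdef, intervalIntegral.integral_same])
    exact huniq ⟨hb, le_rfl⟩
  -- integral bounds
  have hcontfY : ContinuousOn (fun u => f (Y u ζ)) (Icc 0 τ) :=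
    hf.continuous.comp_continuousOn ((contY ζ).mono (fun u hu => hu.1))
  have hintfY : IntervalIntegrable (fun u => |f (Y u ζ)|) volume 0 τ := by
    apply ContinuousOn.intervalIntegrable
    rw [uIcc_of_le hτ.le]
    exact hcontfY.abs
  have hVlow : -L * τ ≤ V τ := by
    have h1 := intervalIntegral.integral_mono_on (μ := volume) hτ.le
      (intervalIntegrable_const (c := -L)) (hcint τ hτ.le)
      (fun u hu => by linarith [hcbound u hu.1, neg_abs_le (c u)])
    rw [intervalIntegral.integral_const] at h1
    simpa [mul_comm] using h1
  have hVup : V τ ≤ μ * τ + 4 * C0 * A := by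
    have h2 : V τ ≤ ∫ u in (0:ℝ)..τ, (μ + A * |f (Y u ζ)|) := by
      refine intervalIntegral.integral_mono_on hτ.le (hcint τ hτ.le) ?_ ?_
      · exact intervalIntegrable_const.add (hintfY.const_mul A)
      · exact fun u hu => hA _ (hζK u hu.1)
    have h3 : (∫ u in (0:ℝ)..τ, (μ + A * |f (Y u ζ)|))
        = μ * τ + A * ∫ u in (0:ℝ)..τ, |f (Y u ζ)| := by
      rw [intervalIntegral.integral_add intervalIntegrable_const (hintfY.const_mul A),
        intervalIntegral.integral_const, intervalIntegral.integral_const_mul]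
      simp [mul_comm]
    have hFTC : (∫ u in (0:ℝ)..τ, f (Y u ζ)) = Y τ ζ - ζ := by
      have := intervalIntegral.integral_eq_sub_of_hasDeriv_right_of_le hτ.le
        ((contY ζ).mono (fun u hu => hu.1))
        (fun u hu => ((hDt ζ u hu.1).hasDerivWithinAt (s := Ioi u)))
        (hcontfY.intervalIntegrable_of_Icc hτ.le)
      rw [this, hY0]
    have hexpint : IntervalIntegrable (fun u => Real.exp (V u)) volume 0 τ := by
      apply ContinuousOn.intervalIntegrable
      rw [uIcc_of_le hτ.le]
      exact Real.continuous_exp.comp_continuousOn (hVcont.mono (fun u hu => hu.1))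
    have habs : (∫ u in (0:ℝ)..τ, |f (Y u ζ)|) = |Y τ ζ - ζ| := by
      have he1 : ∀ u ∈ Icc (0:ℝ) τ, |f (Y u ζ)| = |f ζ| * Real.exp (V u) := by
        intro u hu
        rw [hFormula u hu.1, abs_mul, abs_of_pos (Real.exp_pos _)]
      have he2 : ∀ u ∈ Icc (0:ℝ) τ, f (Y u ζ) = f ζ * Real.exp (V u) :=
        fun u hu => hFormula u hu.1
      have hI : (0:ℝ) ≤ ∫ u in (0:ℝ)..τ, Real.exp (V u) :=
        intervalIntegral.integral_nonneg hτ.le (fun u _ => (Real.exp_pos (V u)).le)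
      have e1 : (∫ u in (0:ℝ)..τ, |f (Y u ζ)|)
          = |f ζ| * ∫ u in (0:ℝ)..τ, Real.exp (V u) := by
        rw [intervalIntegral.integral_congr (g := fun u => |f ζ| * Real.exp (V u))
            (by rw [uIcc_of_le hτ.le]; exact fun u hu => he1 u hu)]
        exact intervalIntegral.integral_const_mul _ _
      have e2 : Y τ ζ - ζ = f ζ * ∫ u in (0:ℝ)..τ, Real.exp (V u) := by
        rw [← hFTC, intervalIntegral.integral_congr (g := fun u => f ζ * Real.exp (V u))
            (by rw [uIcc_of_le hτ.le]; exact fun u hu => he2 u hu)]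
        exact intervalIntegral.integral_const_mul _ _
      rw [e1, e2, abs_mul, abs_of_nonneg hI]
    have h4 : |Y τ ζ - ζ| ≤ 4 * C0 := by
      have hK1 := hζK τ hτ.le
      have hK2 : ζ ∈ K := ⟨hζ.1.le, hζ.2.le⟩
      rw [hKdef] at hK1 hK2
      rw [abs_le]
      constructor <;> [linarith [hK1.1, hK2.2]; linarith [hK1.2, hK2.1]]
    have h5 : A * |Y τ ζ - ζ| ≤ A * (4 * C0) := mul_le_mul_of_nonneg_left h4 hA0
    calc V τ ≤ μ * τ + A * ∫ u in (0:ℝ)..τ, |f (Y u ζ)| := by rw [← h3]; exact h2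
      _ = μ * τ + A * |Y τ ζ - ζ| := by rw [habs]
      _ ≤ μ * τ + 4 * C0 * A := by linarith [h5]
  -- differentiability with respect to the initial condition
  have hD : HasDerivAt (fun z => Y τ z) (Real.exp (V τ)) ζ := by
    obtain ⟨ρ, hρ0, hρ⟩ : ∃ ρ > (0:ℝ), ∀ z : ℝ, |z - ζ| ≤ ρ → z ∈ Ioo (-(2 * C0)) (2 * C0) := by
      refine ⟨min (ζ + 2 * C0) (2 * C0 - ζ) / 2, by
        have := hζ.1; have := hζ.2
        have h1 : 0 < ζ + 2 * C0 := by linarith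
        have h2 : 0 < 2 * C0 - ζ := by linarith
        positivity, ?_⟩
      intro z hz
      rw [abs_le] at hz
      have h1 := min_le_left (ζ + 2 * C0) (2 * C0 - ζ)
      have h2 := min_le_right (ζ + 2 * C0) (2 * C0 - ζ)
      have := hζ.1; have := hζ.2
      constructor <;> [nlinarith [hz.1]; nlinarith [hz.2]]
    set B : ℝ := M * Real.exp (2 * L * τ) with hBdef
    have hB0 : 0 < B := by positivity
    set C1 : ℝ := B * ((Real.exp (L * τ) - 1) / L) with hC1def
    have hC10 : 0 < C1 := by
      have h1 : (1:ℝ) < Real.exp (L * τ) := by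
        have : (0:ℝ) < L * τ := by positivity
        calc (1:ℝ) = Real.exp 0 := Real.exp_zero.symm
          _ < Real.exp (L * τ) := Real.exp_lt_exp.mpr this
      have h2 : 0 < (Real.exp (L * τ) - 1) / L := by
        apply div_pos (by linarith) hL0
      positivity
    have key : ∀ z : ℝ, |z - ζ| ≤ ρ →
        |Y τ z - Y τ ζ - (z - ζ) * Real.exp (V τ)| ≤ C1 * |z - ζ| ^ 2 := by
      intro z hzρ
      have hzI := hρ z hzρ
      have hzK : ∀ s : ℝ, 0 ≤ s → Y s z ∈ K := trap z hzI
      have hIcc : Icc (0:ℝ) τ ⊆ Ici 0 := fun u hu => hu.1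
      -- step 1 : Lipschitz-in-initial-data bound via Gronwall
      have hw : ∀ s ∈ Icc (0:ℝ) τ, |Y s z - Y s ζ| ≤ |z - ζ| * Real.exp (L * s) := by
        have hcont : ContinuousOn (fun s => Y s z - Y s ζ) (Icc 0 τ) :=
          ((contY z).mono hIcc).sub ((contY ζ).mono hIcc)
        have hder : ∀ s ∈ Ico (0:ℝ) τ, HasDerivWithinAt (fun s => Y s z - Y s ζ)
            (f (Y s z) - f (Y s ζ)) (Ici s) s := fun s hs =>
          ((hYode z s hs.1).mono (Ici_subset_Ici.mpr hs.1)).sub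
            ((hYode ζ s hs.1).mono (Ici_subset_Ici.mpr hs.1))
        have h0 : ‖Y 0 z - Y 0 ζ‖ ≤ |z - ζ| := by
          rw [hY0, hY0, Real.norm_eq_abs]
        have hbd : ∀ s ∈ Ico (0:ℝ) τ, ‖f (Y s z) - f (Y s ζ)‖
            ≤ L * ‖Y s z - Y s ζ‖ + 0 := by
          intro s hs
          rw [Real.norm_eq_abs, Real.norm_eq_abs, add_zero]
          exact hLip (Y s ζ) (hζK s hs.1) (Y s z) (hzK s hs.1)
        intro s hs
        have := norm_le_gronwallBound_of_norm_deriv_right_le hcont hder h0 hbd s hs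
        rwa [gronwallBound_ε0, sub_zero, Real.norm_eq_abs] at this
      -- step 2 : the remainder solves a linear ODE with quadratic forcing
      set g2 : ℝ → ℝ := fun s => Y s z - Y s ζ - (z - ζ) * Real.exp (V s) with hg2def
      have hg2c : ContinuousOn g2 (Icc 0 τ) :=
        (((contY z).mono hIcc).sub ((contY ζ).mono hIcc)).sub
          (continuousOn_const.mul (Real.continuous_exp.comp_continuousOn (hVcont.mono hIcc)))
      have hg2' : ∀ s ∈ Ico (0:ℝ) τ, HasDerivWithinAt g2
          (f (Y s z) - f (Y s ζ) - (z - ζ) * (Real.exp (V s) * c s)) (Ici s) s := by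
        intro s hs
        exact (((hYode z s hs.1).mono (Ici_subset_Ici.mpr hs.1)).sub
          ((hYode ζ s hs.1).mono (Ici_subset_Ici.mpr hs.1))).sub
          (((Real.hasDerivAt_exp (V s)).comp_hasDerivWithinAt s (hVd s hs.1)).const_mul (z - ζ))
      have h02 : ‖g2 0‖ ≤ 0 := by
        have : V 0 = 0 := by simp [hVdef, intervalIntegral.integral_same]
        simp [hg2def, hY0, this]
      have hbd2 : ∀ s ∈ Ico (0:ℝ) τ,
          ‖f (Y s z) - f (Y s ζ) - (z - ζ) * (Real.exp (V s) * c s)‖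
            ≤ L * ‖g2 s‖ + B * |z - ζ| ^ 2 := by
        intro s hs
        have hR : |f (Y s z) - f (Y s ζ) - c s * (Y s z - Y s ζ)|
            ≤ M * |Y s z - Y s ζ| ^ 2 := hTaylor (Y s ζ) (hζK s hs.1) (Y s z) (hzK s hs.1)
        have hw' := hw s ⟨hs.1, hs.2.le⟩
        have hwnn : (0:ℝ) ≤ |Y s z - Y s ζ| := abs_nonneg _
        have hsq : |Y s z - Y s ζ| ^ 2 ≤ |z - ζ| ^ 2 * Real.exp (2 * L * s) := by
          have h1 : |Y s z - Y s ζ| ^ 2 ≤ (|z - ζ| * Real.exp (L * s)) ^ 2 :=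
            pow_le_pow_left₀ (abs_nonneg _) hw' 2
          calc |Y s z - Y s ζ| ^ 2 ≤ (|z - ζ| * Real.exp (L * s)) ^ 2 := h1
            _ = |z - ζ| ^ 2 * Real.exp (2 * L * s) := by
              rw [mul_pow, ← Real.exp_nat_mul]
              ring_nf
        have hsq2 : |Y s z - Y s ζ| ^ 2 ≤ |z - ζ| ^ 2 * Real.exp (2 * L * τ) := by
          refine le_trans hsq ?_
          have : Real.exp (2 * L * s) ≤ Real.exp (2 * L * τ) := by
            apply Real.exp_le_exp.mpr
            nlinarith [hs.2, hL0]
          nlinarith [sq_nonneg (z - ζ), abs_nonneg (z - ζ), sq_abs (z - ζ)]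
        have hdec : f (Y s z) - f (Y s ζ) - (z - ζ) * (Real.exp (V s) * c s)
            = (f (Y s z) - f (Y s ζ) - c s * (Y s z - Y s ζ)) + c s * g2 s := by
          rw [hg2def]; ring
        rw [Real.norm_eq_abs, Real.norm_eq_abs, hdec]
        calc |(f (Y s z) - f (Y s ζ) - c s * (Y s z - Y s ζ)) + c s * g2 s|
            ≤ |f (Y s z) - f (Y s ζ) - c s * (Y s z - Y s ζ)| + |c s * g2 s| := abs_add_le _ _
          _ ≤ M * |Y s z - Y s ζ| ^ 2 + |c s| * |g2 s| := by
              rw [abs_mul]; exact add_le_add hR le_rfl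
          _ ≤ M * (|z - ζ| ^ 2 * Real.exp (2 * L * τ)) + L * |g2 s| := by
              refine add_le_add (mul_le_mul_of_nonneg_left hsq2 hM0.le) ?_
              exact mul_le_mul_of_nonneg_right (hcbound s hs.1) (abs_nonneg _)
          _ = L * |g2 s| + B * |z - ζ| ^ 2 := by rw [hBdef]; ring
      have hu := norm_le_gronwallBound_of_norm_deriv_right_le hg2c hg2' h02 hbd2 τ
        ⟨hτ.le, le_rfl⟩
      rw [gronwallBound_of_K_ne_0 hL0.ne'] at hu
      simp only [zero_mul, zero_add, sub_zero, Real.norm_eq_abs] at hu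
      calc |Y τ z - Y τ ζ - (z - ζ) * Real.exp (V τ)| = |g2 τ| := by rw [hg2def]
        _ ≤ B * |z - ζ| ^ 2 / L * (Real.exp (L * τ) - 1) := hu
        _ = C1 * |z - ζ| ^ 2 := by rw [hC1def]; ring
    rw [hasDerivAt_iff_isLittleO]
    rw [Asymptotics.isLittleO_iff]
    intro ε hε
    have hmin : 0 < min ρ (ε / C1) := lt_min hρ0 (div_pos hε hC10)
    filter_upwards [Metric.eventually_nhds_iff.2 ⟨min ρ (ε / C1), hmin, fun {y} hy => hy⟩]
      with z hz
    rw [Real.dist_eq] at hz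
    have h1 : |z - ζ| ≤ ρ := le_trans hz.le (min_le_left _ _)
    have h2 : |z - ζ| < ε / C1 := lt_of_lt_of_le hz (min_le_right _ _)
    have h3 := key z h1
    rw [Real.norm_eq_abs, Real.norm_eq_abs, smul_eq_mul]
    calc |Y τ z - Y τ ζ - (z - ζ) * Real.exp (V τ)| ≤ C1 * |z - ζ| ^ 2 := h3
      _ = (C1 * |z - ζ|) * |z - ζ| := by ring
      _ ≤ ε * |z - ζ| := by
          refine mul_le_mul_of_nonneg_right ?_ (abs_nonneg _)
          rw [lt_div_iff₀ hC10] at h2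
          nlinarith [hC10]
  rw [hD.deriv]
  constructor
  · rw [Real.exp_le_exp]; linarith
  · rw [← Real.exp_add, Real.exp_le_exp]; linarith
end

section
/- Bound for the logarithmic second derivative of the bistable ODE flow. Let Y : [0,∞) × R → R solve Y_τ = f(Y), Y(0,ζ) = ζ, let μ = f'(α), and let C_0 > 0 be a constant with 2C_0 > max(|α_-|, |α_+|). Then there exists a positive constant C_Y such that for all τ > 0 and all ζ ∈ (-2C_0, 2C_0): |Y_{ζζ}(τ,ζ) / Y_ζ(τ,ζ)| ≤ C_Y (e^{μ τ} - 1). -/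
open MeasureTheory Real Set Filter Topology

section Traj
variable {f : ℝ → ℝ} {Y : ℝ → ℝ → ℝ}

lemma traj_cont (hYode : ∀ ζ : ℝ, ∀ τ ∈ Ici (0 : ℝ),
      HasDerivWithinAt (fun s => Y s ζ) (f (Y τ ζ)) (Ici 0) τ) (ζ : ℝ) :
    ContinuousOn (fun s => Y s ζ) (Ici 0) :=
  fun τ hτ => (hYode ζ τ hτ).continuousWithinAt

lemma traj_integral (hfc : Continuous f)
    (hYode : ∀ ζ : ℝ, ∀ τ ∈ Ici (0 : ℝ),
      HasDerivWithinAt (fun s => Y s ζ) (f (Y τ ζ)) (Ici 0) τ)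
    (ζ : ℝ) {τ : ℝ} (hτ : 0 ≤ τ) :
    ∫ s in (0:ℝ)..τ, f (Y s ζ) = Y τ ζ - Y 0 ζ := by
  have hcont : ContinuousOn (fun s => Y s ζ) (Icc 0 τ) :=
    (traj_cont hYode ζ).mono Icc_subset_Ici_self
  refine intervalIntegral.integral_eq_sub_of_hasDeriv_right_of_le hτ hcont
    (fun t ht => (hYode ζ t (le_of_lt ht.1)).mono
      (fun x hx => le_of_lt (lt_of_le_of_lt ht.1.le hx))) ?_
  · exact (hfc.comp_continuousOn hcont).intervalIntegrable_of_Icc hτ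
end Traj

section Traj2
variable {f : ℝ → ℝ} {Y : ℝ → ℝ → ℝ}
variable (hfc : Continuous f)
  (hY0 : ∀ ζ : ℝ, Y 0 ζ = ζ)
  (hYode : ∀ ζ : ℝ, ∀ τ ∈ Ici (0 : ℝ),
      HasDerivWithinAt (fun s => Y s ζ) (f (Y τ ζ)) (Ici 0) τ)
include hfc hY0 hYode

lemma traj_id (ζ : ℝ) {τ : ℝ} (hτ : 0 ≤ τ) :
    Y τ ζ = ζ + ∫ s in (0:ℝ)..τ, f (Y s ζ) := by
  rw [traj_integral hfc hYode ζ hτ, hY0]; ring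

lemma traj_hasDerivAt (ζ : ℝ) {τ : ℝ} (hτ : 0 < τ) :
    HasDerivAt (fun s => Y s ζ) (f (Y τ ζ)) τ := by
  have hcY : ContinuousOn (fun s => Y s ζ) (Ici 0) := traj_cont hYode ζ
  have hci : ContinuousOn (fun s => f (Y s ζ)) (Ici 0) := hfc.comp_continuousOn hcY
  have hmem : Ici (0:ℝ) ∈ 𝓝 τ := Ici_mem_nhds hτ
  have hca : ContinuousAt (fun s => f (Y s ζ)) τ := hci.continuousAt hmem
  have hint : IntervalIntegrable (fun s => f (Y s ζ)) volume 0 τ :=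
    (hci.mono (by rw [uIcc_of_le hτ.le]; exact Icc_subset_Ici_self)).intervalIntegrable
  have hmeas : StronglyMeasurableAtFilter (fun s => f (Y s ζ)) (𝓝 τ) volume := by
    refine ContinuousOn.stronglyMeasurableAtFilter isOpen_Ioi (hci.mono Ioi_subset_Ici_self) τ hτ
  have hd : HasDerivAt (fun u => ζ + ∫ s in (0:ℝ)..u, f (Y s ζ)) (f (Y τ ζ)) τ :=
    ((intervalIntegral.integral_hasStrictDerivAt_right hint hmeas hca).hasDerivAt).const_add ζ
  refine hd.congr_of_eventuallyEq ?_
  filter_upwards [hmem] with u hu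
  exact traj_id hfc hY0 hYode ζ hu

lemma traj_ne_zero (hlip : ∀ R : ℝ, ∃ K : NNReal, LipschitzOnWith K f (Icc (-R) R))
    {ζ y0 : ℝ} (hy0 : f y0 = 0) (hne : ζ ≠ y0) {τ : ℝ} (hτ : 0 ≤ τ) :
    Y τ ζ ≠ y0 := by
  intro heq
  rcases eq_or_lt_of_le hτ with rfl | hτ'
  · rw [hY0] at heq; exact hne heq
  -- bound the orbit on [0, τ]
  have hcY : ContinuousOn (fun s => Y s ζ) (Icc 0 τ) :=
    (traj_cont hYode ζ).mono Icc_subset_Ici_self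
  obtain ⟨M, hM⟩ := (isCompact_Icc (a := (0:ℝ)) (b := τ)).exists_bound_of_continuousOn hcY
  set R : ℝ := |y0| + |M| + 1 with hR
  have hsub : ∀ s ∈ Icc (0:ℝ) τ, Y s ζ ∈ Icc (-R) R := by
    intro s hs
    have h := hM s hs
    rw [Real.norm_eq_abs] at h
    exact abs_le.mp (h.trans (by nlinarith [abs_nonneg y0, le_abs_self M]))
  obtain ⟨K, hK⟩ := hlip R
  have hy0R : y0 ∈ Icc (-R) R := by
    constructor <;> nlinarith [abs_nonneg M, le_abs_self y0, neg_abs_le y0]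
  have huniq := ODE_solution_unique_of_mem_Icc_left (v := fun _ x => f x)
    (s := fun _ => Icc (-R) R) (K := K) (f := fun s => Y s ζ) (g := fun _ => y0)
    (a := 0) (b := τ) (fun _ _ => hK) hcY
    (fun t ht => (traj_hasDerivAt hfc hY0 hYode ζ ht.1).hasDerivWithinAt)
    (fun t ht => hsub t ⟨ht.1.le, ht.2⟩)
    continuousOn_const
    (fun t _ => by simpa [hy0] using (hasDerivWithinAt_const t (Iic t) y0))
    (fun _ _ => hy0R) heq
  have h0 := huniq (left_mem_Icc.mpr hτ)
  simp only [] at h0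
  exact hne ((hY0 ζ).symm.trans h0)
end Traj2

lemma const_of_deriv0 {g : ℝ → ℝ} (hc : ContinuousOn g (Ici 0))
    (hd : ∀ t ∈ Ioi (0:ℝ), HasDerivAt g 0 t) {τ : ℝ} (hτ : 0 ≤ τ) : g τ = g 0 := by
  have hdiff : DifferentiableOn ℝ g (interior (Ici (0:ℝ))) := by
    rw [interior_Ici]
    exact fun t ht => (hd t ht).differentiableAt.differentiableWithinAt
  have h1 : AntitoneOn g (Ici 0) :=
    antitoneOn_of_deriv_nonpos (convex_Ici 0) hc hdiff (fun t ht => by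
      rw [interior_Ici] at ht; rw [(hd t ht).deriv])
  have h2 : MonotoneOn g (Ici 0) :=
    monotoneOn_of_deriv_nonneg (convex_Ici 0) hc hdiff (fun t ht => by
      rw [interior_Ici] at ht; rw [(hd t ht).deriv])
  exact le_antisymm (h1 self_mem_Ici hτ hτ) (h2 self_mem_Ici hτ hτ)

lemma int_exp_mul {μ : ℝ} (hμ : μ ≠ 0) (τ : ℝ) :
    ∫ s in (0:ℝ)..τ, Real.exp (μ*s) = (Real.exp (μ*τ) - 1)/μ := by
  have hD : ∀ s : ℝ, HasDerivAt (fun u => Real.exp (μ*u)/μ) (Real.exp (μ*s)) s := by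
    intro s
    have h1 : HasDerivAt (fun u : ℝ => μ*u) μ s := by
      simpa using (hasDerivAt_id s).const_mul μ
    have := (h1.exp).div_const μ
    simpa [mul_div_cancel_right₀ _ hμ] using this
  rw [intervalIntegral.integral_eq_sub_of_hasDerivAt (fun s _ => hD s)
    ((Real.continuous_exp.comp (continuous_const.mul continuous_id)).intervalIntegrable 0 τ)]
  simp [sub_div]

lemma lip_of_contDiff {f : ℝ → ℝ} (hf : ContDiff ℝ 2 f) (R : ℝ) :
    ∃ K : NNReal, LipschitzOnWith K f (Icc (-R) R) := by
  have hdc : Continuous (deriv f) := hf.continuous_deriv (by norm_num)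
  obtain ⟨M, hM⟩ := (isCompact_Icc (a := -R) (b := R)).exists_bound_of_continuousOn
    hdc.continuousOn
  refine ⟨‖M‖₊, Convex.lipschitzOnWith_of_nnnorm_deriv_le
    (fun x _ => (hf.differentiable (by norm_num)).differentiableAt)
    (fun x hx => ?_) (convex_Icc _ _)⟩
  have : ‖deriv f x‖ ≤ ‖M‖ := (hM x hx).trans (le_abs_self M)
  exact_mod_cast this

section Master
variable {f : ℝ → ℝ} {Y : ℝ → ℝ → ℝ} {μ : ℝ}

lemma master_inc
    (hf : ContDiff ℝ 2 f) (hμ : 0 < μ)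
    (hY0 : ∀ ζ : ℝ, Y 0 ζ = ζ)
    (hYode : ∀ ζ : ℝ, ∀ τ ∈ Ici (0 : ℝ),
      HasDerivWithinAt (fun s => Y s ζ) (f (Y τ ζ)) (Ici 0) τ)
    (hYC2 : ∀ τ : ℝ, 0 ≤ τ → ContDiff ℝ 2 (fun ζ => Y τ ζ))
    {a b B L2 : ℝ} (hab : a < b) (hB0 : 0 ≤ B) (hL20 : 0 ≤ L2)
    (hfpos : ∀ y, a < y → y < b → 0 < f y)
    (hB : ∀ y, a < y → y < b → max (deriv f y - μ) 0 ≤ B * f y)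
    (hL : ∀ x ∈ Icc a b, ∀ y ∈ Icc a b, |deriv f x - deriv f y| ≤ L2 * |x - y|)
    (horbit : ∀ ζ ∈ Ioo a b, ∀ τ : ℝ, 0 ≤ τ → Y τ ζ ∈ Ioo a b) :
    ∀ τ : ℝ, 0 < τ → ∀ ζ ∈ Ioo a b,
      |deriv (fun z => deriv (fun w => Y τ w) z) ζ / deriv (fun z => Y τ z) ζ|
        ≤ (L2 * Real.exp (B*(b-a)) / μ) * (Real.exp (μ * τ) - 1) := by
  have hfc : Continuous f := hf.continuous
  have hfd : Differentiable ℝ f := hf.differentiable (by norm_num)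
  have hdc : Continuous (deriv f) := hf.continuous_deriv (by norm_num)
  have hfne : ∀ y ∈ Ioo a b, f y ≠ 0 := fun y hy => (hfpos y hy.1 hy.2).ne'
  -- monotonicity
  have mono : ∀ ζ ∈ Ioo a b, ∀ t : ℝ, 0 ≤ t → ζ ≤ Y t ζ := by
    intro ζ hζ t ht
    have hid := traj_id hfc hY0 hYode ζ ht
    have hnn : 0 ≤ ∫ s in (0:ℝ)..t, f (Y s ζ) := by
      apply intervalIntegral.integral_nonneg ht
      intro u hu
      have hm := horbit ζ hζ u hu.1
      exact (hfpos _ hm.1 hm.2).le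
    linarith [hid]
  -- key exponential ratio bound
  have key : ∀ ζ ∈ Ioo a b, ∀ t : ℝ, 0 ≤ t →
      f (Y t ζ) ≤ f ζ * (Real.exp (B*(b-a)) * Real.exp (μ*t)) := by
    intro ζ hζ t ht
    have horb' : ∀ s : ℝ, 0 ≤ s → Y s ζ ∈ Ioo a b := horbit ζ hζ
    have hfζ : 0 < f ζ := hfpos ζ hζ.1 hζ.2
    have hhca : ∀ y ∈ Ioo a b, ContinuousAt (fun u => max (deriv f u - μ) 0 / f u) y :=
      fun y hy => (((hdc.continuousAt).sub continuousAt_const).max continuousAt_const).div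
        hfc.continuousAt (hfne y hy)
    have hhc : ContinuousOn (fun u => max (deriv f u - μ) 0 / f u) (Ioo a b) :=
      fun y hy => (hhca y hy).continuousWithinAt
    have hH : ∀ y ∈ Ioo a b,
        HasDerivAt (fun x => ∫ u in ζ..x, max (deriv f u - μ) 0 / f u)
          (max (deriv f y - μ) 0 / f y) y := by
      intro y hy
      have huIcc : uIcc ζ y ⊆ Ioo a b := (ordConnected_Ioo).uIcc_subset hζ hy
      have hint : IntervalIntegrable (fun u => max (deriv f u - μ) 0 / f u) volume ζ y :=
        (hhc.mono huIcc).intervalIntegrable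
      exact (intervalIntegral.integral_hasStrictDerivAt_right hint
        (ContinuousOn.stronglyMeasurableAtFilter isOpen_Ioo hhc y hy)
        (hhca y hy)).hasDerivAt
    set H : ℝ → ℝ := fun x => ∫ u in ζ..x, max (deriv f u - μ) 0 / f u with hHdef
    set ψ : ℝ → ℝ := fun s => Real.log (f (Y s ζ)) - μ*s - H (Y s ζ) with hψdef
    have hψd : ∀ s ∈ Ioi (0:ℝ), HasDerivAt ψ
        (deriv f (Y s ζ) - μ - max (deriv f (Y s ζ) - μ) 0) s := by
      intro s hs
      have hsm := horb' s (le_of_lt hs)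
      have hfYs : 0 < f (Y s ζ) := hfpos _ hsm.1 hsm.2
      have hYd := traj_hasDerivAt hfc hY0 hYode ζ hs
      have h1 : HasDerivAt (fun u => f (Y u ζ)) (deriv f (Y s ζ) * f (Y s ζ)) s :=
        ((hfd _).hasDerivAt).comp s hYd
      have h2 : HasDerivAt (fun u => Real.log (f (Y u ζ)))
          ((f (Y s ζ))⁻¹ * (deriv f (Y s ζ) * f (Y s ζ))) s :=
        by have := (Real.hasDerivAt_log hfYs.ne').comp s h1; exact this
      rw [show (f (Y s ζ))⁻¹ * (deriv f (Y s ζ) * f (Y s ζ)) = deriv f (Y s ζ) by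
        field_simp] at h2
      have h3 : HasDerivAt (fun u => H (Y u ζ))
          (max (deriv f (Y s ζ) - μ) 0 / f (Y s ζ) * f (Y s ζ)) s :=
        by have := (hH _ hsm).comp s hYd; exact this
      rw [div_mul_cancel₀ _ hfYs.ne'] at h3
      have h4 : HasDerivAt (fun u : ℝ => μ * u) μ s := by
        simpa using (hasDerivAt_id s).const_mul μ
      exact (h2.sub h4).sub h3
    have hψc : ContinuousOn ψ (Ici 0) := by
      intro s hs
      have hsm := horb' s hs
      have c1 : ContinuousWithinAt (fun u => Y u ζ) (Ici 0) s := traj_cont hYode ζ s hs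
      have c2 : ContinuousWithinAt (fun u => Real.log (f (Y u ζ))) (Ici 0) s :=
        ContinuousAt.comp_continuousWithinAt (f := fun u => Y u ζ) (x := s)
          ((Real.continuousAt_log (hfpos _ hsm.1 hsm.2).ne').comp hfc.continuousAt) c1
      have c3 : ContinuousWithinAt (fun u => H (Y u ζ)) (Ici 0) s :=
        ContinuousAt.comp_continuousWithinAt (f := fun u => Y u ζ) (x := s)
          ((hH _ hsm).continuousAt) c1
      exact (c2.sub ((continuous_const.mul continuous_id).continuousWithinAt)).sub c3
    have hanti : AntitoneOn ψ (Ici 0) := by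
      refine antitoneOn_of_deriv_nonpos (convex_Ici 0) hψc ?_ ?_
      · rw [interior_Ici]
        exact fun s hs => (hψd s hs).differentiableAt.differentiableWithinAt
      · intro s hs
        rw [interior_Ici] at hs
        rw [(hψd s hs).deriv]
        have := le_max_left (deriv f (Y s ζ) - μ) (0:ℝ)
        linarith
    have hψt : ψ t ≤ ψ 0 := hanti self_mem_Ici ht ht
    have hψ0 : ψ 0 = Real.log (f ζ) := by
      simp [hψdef, hHdef, hY0 ζ, intervalIntegral.integral_same]
    have htm := horb' t ht
    have hfYt : 0 < f (Y t ζ) := hfpos _ htm.1 htm.2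
    have hHb : H (Y t ζ) ≤ B * (b - a) := by
      have hle : ζ ≤ Y t ζ := mono ζ hζ t ht
      have hsub : Icc ζ (Y t ζ) ⊆ Ioo a b := by
        intro u hu; exact ⟨lt_of_lt_of_le hζ.1 hu.1, lt_of_le_of_lt hu.2 htm.2⟩
      have h1 : H (Y t ζ) ≤ ∫ u in ζ..(Y t ζ), B := by
        apply intervalIntegral.integral_mono_on hle
        · exact ((hhc.mono (by rw [uIcc_of_le hle]; exact hsub)).intervalIntegrable)
        · exact intervalIntegrable_const
        · intro u hu
          have hum := hsub hu
          rw [div_le_iff₀ (hfpos _ hum.1 hum.2)]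
          exact hB u hum.1 hum.2
      rw [intervalIntegral.integral_const, smul_eq_mul] at h1
      calc H (Y t ζ) ≤ (Y t ζ - ζ) * B := h1
        _ ≤ (b - a) * B := by
            apply mul_le_mul_of_nonneg_right _ hB0
            have := htm.2; have := hζ.1; linarith
        _ = B * (b - a) := by ring
    have hlog : Real.log (f (Y t ζ)) ≤ Real.log (f ζ) + (B*(b-a) + μ*t) := by
      have : Real.log (f (Y t ζ)) - μ*t - H (Y t ζ) ≤ Real.log (f ζ) := hψ0 ▸ hψt
      linarith
    calc f (Y t ζ) = Real.exp (Real.log (f (Y t ζ))) := (Real.exp_log hfYt).symm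
      _ ≤ Real.exp (Real.log (f ζ) + (B*(b-a) + μ*t)) := Real.exp_le_exp.mpr hlog
      _ = f ζ * (Real.exp (B*(b-a)) * Real.exp (μ*t)) := by
          rw [Real.exp_add, Real.exp_add, Real.exp_log hfζ]
  -- first derivative formula
  have D1 : ∀ τ : ℝ, 0 < τ → ∀ ζ ∈ Ioo a b,
      deriv (fun z => Y τ z) ζ = f (Y τ ζ) / f ζ := by
    intro τ hτ ζ hζ
    set F : ℝ → ℝ := fun y => ∫ u in ζ..y, (f u)⁻¹ with hFdef
    have hFca : ∀ y ∈ Ioo a b, ContinuousAt (fun u => (f u)⁻¹) y :=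
      fun y hy => (hfc.continuousAt).inv₀ (hfne y hy)
    have hFc : ContinuousOn (fun u => (f u)⁻¹) (Ioo a b) :=
      fun y hy => (hFca y hy).continuousWithinAt
    have hF : ∀ y ∈ Ioo a b, HasDerivAt F ((f y)⁻¹) y := by
      intro y hy
      have huIcc : uIcc ζ y ⊆ Ioo a b := (ordConnected_Ioo).uIcc_subset hζ hy
      have hint : IntervalIntegrable (fun u => (f u)⁻¹) volume ζ y :=
        (hFc.mono huIcc).intervalIntegrable
      exact (intervalIntegral.integral_hasStrictDerivAt_right hint
        (ContinuousOn.stronglyMeasurableAtFilter isOpen_Ioo hFc y hy)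
        (hFca y hy)).hasDerivAt
    have hid : ∀ z ∈ Ioo a b, F (Y τ z) = F z + τ := by
      intro z hz
      have horb' : ∀ s : ℝ, 0 ≤ s → Y s z ∈ Ioo a b := horbit z hz
      have hg : ∀ t ∈ Ioi (0:ℝ), HasDerivAt (fun t => F (Y t z) - F z - t) 0 t := by
        intro t ht
        have hYd := traj_hasDerivAt hfc hY0 hYode z ht
        have h1 : HasDerivAt (fun t => F (Y t z)) ((f (Y t z))⁻¹ * f (Y t z)) t :=
          by have := (hF _ (horb' t (le_of_lt ht))).comp t hYd; exact this
        rw [inv_mul_cancel₀ (hfne _ (horb' t (le_of_lt ht)))] at h1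
        have := (h1.sub_const (F z)).sub (hasDerivAt_id t)
        exact this.congr_deriv (sub_self 1)
      have hgc : ContinuousOn (fun t => F (Y t z) - F z - t) (Ici 0) := by
        intro s hs
        have c1 : ContinuousWithinAt (fun u => Y u z) (Ici 0) s := traj_cont hYode z s hs
        have cF : ContinuousWithinAt (fun t => F (Y t z)) (Ici 0) s :=
          ContinuousAt.comp_continuousWithinAt (f := fun u => Y u z) (x := s)
            ((hF _ (horb' s hs)).continuousAt) c1
        exact (cF.sub continuousWithinAt_const).sub continuousWithinAt_id
      have h0 := const_of_deriv0 hgc hg hτ.le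
      simp only [hY0 z] at h0
      linarith [h0]
    have hdiffY : DifferentiableAt ℝ (fun z => Y τ z) ζ :=
      ((hYC2 τ hτ.le).differentiable (by norm_num)) ζ
    have hYd := hdiffY.hasDerivAt
    have horbζ := horbit ζ hζ τ hτ.le
    have hl : HasDerivAt (fun z => F (Y τ z))
        ((f (Y τ ζ))⁻¹ * deriv (fun z => Y τ z) ζ) ζ := (hF _ horbζ).comp ζ hYd
    have hr : HasDerivAt (fun z => F z + τ) ((f ζ)⁻¹) ζ := (hF ζ hζ).add_const τ
    have hev : (fun z => F (Y τ z)) =ᶠ[nhds ζ] (fun z => F z + τ) := by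
      filter_upwards [isOpen_Ioo.mem_nhds hζ] with z hz
      exact hid z hz
    have hl' : HasDerivAt (fun z => F (Y τ z)) ((f ζ)⁻¹) ζ :=
      hr.congr_of_eventuallyEq hev
    have huniq : (f (Y τ ζ))⁻¹ * deriv (fun z => Y τ z) ζ = (f ζ)⁻¹ := hl.unique hl'
    have hne1 := hfne _ horbζ
    have hne2 := hfne ζ hζ
    field_simp at huniq ⊢
    linarith [huniq]
  -- displacement bound
  have disp : ∀ ζ ∈ Ioo a b, ∀ t : ℝ, 0 ≤ t →
      Y t ζ - ζ ≤ f ζ * Real.exp (B*(b-a)) * ((Real.exp (μ*t) - 1)/μ) := by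
    intro ζ hζ t ht
    have hid := traj_id hfc hY0 hYode ζ ht
    have hcY : ContinuousOn (fun s => Y s ζ) (Icc 0 t) :=
      (traj_cont hYode ζ).mono Icc_subset_Ici_self
    have hle : ∫ s in (0:ℝ)..t, f (Y s ζ)
        ≤ ∫ s in (0:ℝ)..t, f ζ * Real.exp (B*(b-a)) * Real.exp (μ*s) := by
      apply intervalIntegral.integral_mono_on ht
      · exact ((hfc.comp_continuousOn hcY).mono
          (by rw [uIcc_of_le ht])).intervalIntegrable
      · exact (Continuous.intervalIntegrable (by continuity) 0 t)
      · intro s hs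
        have := key ζ hζ s hs.1
        calc f (Y s ζ) ≤ f ζ * (Real.exp (B*(b-a)) * Real.exp (μ*s)) := this
          _ = f ζ * Real.exp (B*(b-a)) * Real.exp (μ*s) := by ring
    have hintexp : ∫ s in (0:ℝ)..t, f ζ * Real.exp (B*(b-a)) * Real.exp (μ*s)
        = f ζ * Real.exp (B*(b-a)) * ((Real.exp (μ*t) - 1)/μ) := by
      rw [intervalIntegral.integral_const_mul, int_exp_mul hμ.ne' t]
    linarith [hid, hle.trans_eq hintexp]
  -- conclusion
  intro τ hτ ζ hζ
  have horb := horbit ζ hζ τ hτ.le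
  have hfζ : 0 < f ζ := hfpos ζ hζ.1 hζ.2
  have hfY : 0 < f (Y τ ζ) := hfpos _ horb.1 horb.2
  have hD1 := D1 τ hτ ζ hζ
  -- second derivative formula
  have hdiffY : ∀ z : ℝ, HasDerivAt (fun w => Y τ w) (deriv (fun w => Y τ w) z) z :=
    fun z => (((hYC2 τ hτ.le).differentiable (by norm_num)) z).hasDerivAt
  have hev2 : (fun z => deriv (fun w => Y τ w) z) =ᶠ[nhds ζ] (fun z => f (Y τ z) / f z) := by
    filter_upwards [isOpen_Ioo.mem_nhds hζ] with z hz
    exact D1 τ hτ z hz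
  have hnum : HasDerivAt (fun z => f (Y τ z))
      (deriv f (Y τ ζ) * deriv (fun w => Y τ w) ζ) ζ :=
    ((hfd (Y τ ζ)).hasDerivAt).comp ζ (hdiffY ζ)
  have hden : HasDerivAt f (deriv f ζ) ζ := (hfd ζ).hasDerivAt
  have hdiv : HasDerivAt (fun z => f (Y τ z) / f z)
      ((deriv f (Y τ ζ) * deriv (fun w => Y τ w) ζ * f ζ - f (Y τ ζ) * deriv f ζ) / (f ζ)^2) ζ :=
    hnum.div hden hfζ.ne'
  have hD2 : deriv (fun z => deriv (fun w => Y τ w) z) ζ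
      = (deriv f (Y τ ζ) * deriv (fun w => Y τ w) ζ * f ζ - f (Y τ ζ) * deriv f ζ) / (f ζ)^2 := by
    rw [hev2.deriv_eq]; exact hdiv.deriv
  have hratio : deriv (fun z => deriv (fun w => Y τ w) z) ζ / deriv (fun z => Y τ z) ζ
      = (deriv f (Y τ ζ) - deriv f ζ) / f ζ := by
    rw [hD2, hD1]
    field_simp
  rw [hratio]
  have habs : |(deriv f (Y τ ζ) - deriv f ζ) / f ζ| = |deriv f (Y τ ζ) - deriv f ζ| / f ζ := by
    rw [abs_div, abs_of_pos hfζ]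
  rw [habs, div_le_iff₀ hfζ]
  have hYIcc : Y τ ζ ∈ Icc a b := ⟨horb.1.le, horb.2.le⟩
  have hζIcc : ζ ∈ Icc a b := ⟨hζ.1.le, hζ.2.le⟩
  have h1 : |deriv f (Y τ ζ) - deriv f ζ| ≤ L2 * |Y τ ζ - ζ| := hL _ hYIcc _ hζIcc
  have h2 : |Y τ ζ - ζ| = Y τ ζ - ζ := abs_of_nonneg (by linarith [mono ζ hζ τ hτ.le])
  have h3 := disp ζ hζ τ hτ.le
  have hexp1 : (0:ℝ) < Real.exp (B*(b-a)) := Real.exp_pos _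
  have hexpτ : (0:ℝ) ≤ Real.exp (μ*τ) - 1 := by
    have : (1:ℝ) ≤ Real.exp (μ*τ) := Real.one_le_exp (by positivity)
    linarith
  calc |deriv f (Y τ ζ) - deriv f ζ| ≤ L2 * (Y τ ζ - ζ) := by rw [← h2]; exact h1
    _ ≤ L2 * (f ζ * Real.exp (B*(b-a)) * ((Real.exp (μ*τ) - 1)/μ)) := by
        apply mul_le_mul_of_nonneg_left h3 hL20
    _ = L2 * Real.exp (B*(b-a)) / μ * (Real.exp (μ*τ) - 1) * f ζ := by
        field_simp
end Master

lemma deriv_lip {f : ℝ → ℝ} (hf : ContDiff ℝ 2 f) (c d : ℝ) :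
    ∃ L2 : ℝ, 0 ≤ L2 ∧ ∀ x ∈ Icc c d, ∀ y ∈ Icc c d,
      |deriv f x - deriv f y| ≤ L2 * |x - y| := by
  have hf2 : ContDiff ℝ (1+1 : ℕ) f := by exact_mod_cast hf
  have hd1 : ContDiff ℝ 1 (deriv f) := ((contDiff_succ_iff_deriv).mp hf2).2.2
  have hdd : Continuous (deriv (deriv f)) := hd1.continuous_deriv le_rfl
  obtain ⟨M, hM⟩ := (isCompact_Icc (a := c) (b := d)).exists_bound_of_continuousOn
    hdd.continuousOn
  refine ⟨max M 0, le_max_right _ _, fun x hx y hy => ?_⟩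
  have := Convex.norm_image_sub_le_of_norm_deriv_le (f := deriv f) (C := max M 0)
    (fun z _ => (hd1.differentiable (by norm_num)) z)
    (fun z hz => (hM z hz).trans (le_max_left M 0)) (convex_Icc c d) hy hx
  simpa [Real.norm_eq_abs] using this

lemma near_lt {g : ℝ → ℝ} (hg : Continuous g) {b μ : ℝ} (hb : g b < μ) :
    ∃ ε > (0:ℝ), ∀ y, b - ε < y → y ≤ b → g y < μ := by
  have hU : IsOpen {y : ℝ | g y < μ} := isOpen_lt hg continuous_const
  obtain ⟨ε, hε, hsub⟩ := Metric.mem_nhds_iff.mp (hU.mem_nhds hb)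
  refine ⟨ε, hε, fun y h1 h2 => ?_⟩
  apply hsub
  rw [Metric.mem_ball, Real.dist_eq, abs_of_nonpos (by linarith)]
  linarith

lemma Bexists_noleftzero {f : ℝ → ℝ} {μ a b : ℝ} (hf : ContDiff ℝ 2 f) (hab : a < b)
    (hfpos : ∀ y, a < y → y < b → 0 < f y) (hfa : 0 < f a)
    (hb' : deriv f b < μ) :
    ∃ B : ℝ, 0 ≤ B ∧ ∀ y, a < y → y < b → max (deriv f y - μ) 0 ≤ B * f y := by
  have hdc : Continuous (deriv f) := hf.continuous_deriv (by norm_num)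
  obtain ⟨ε, hε, hnear⟩ := near_lt hdc hb'
  obtain ⟨M, hM⟩ := (isCompact_Icc (a := a) (b := b)).exists_bound_of_continuousOn
    hdc.continuousOn
  have hM0 : 0 ≤ M := le_trans (norm_nonneg _) (hM a ⟨le_refl a, hab.le⟩)
  by_cases hcase : a < b - ε/2
  · -- compact middle part
    have hne : (Icc a (b - ε/2)).Nonempty := ⟨a, le_refl a, hcase.le⟩
    obtain ⟨x0, hx0, hmin⟩ := (isCompact_Icc (a := a) (b := b - ε/2)).exists_isMinOn hne
      (hf.continuous.continuousOn)
    have hm : 0 < f x0 := by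
      rcases eq_or_lt_of_le hx0.1 with rfl | hx
      · exact hfa
      · exact hfpos x0 hx (by linarith [hx0.2])
    refine ⟨(M + |μ|)/(f x0), by positivity, fun y hy1 hy2 => ?_⟩
    rcases le_or_gt y (b - ε/2) with hyc | hyc
    · have hfy : f x0 ≤ f y := hmin ⟨hy1.le, hyc⟩
      have h1 : deriv f y - μ ≤ M + |μ| := by
        have := hM y ⟨hy1.le, hy2.le⟩
        rw [Real.norm_eq_abs] at this
        have := le_abs_self (deriv f y)
        have := neg_abs_le μ
        linarith [le_abs_self (deriv f y), abs_le.mp (le_refl |deriv f y|)]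
      have h2 : max (deriv f y - μ) 0 ≤ M + |μ| := max_le h1 (by positivity)
      calc max (deriv f y - μ) 0 ≤ M + |μ| := h2
        _ = (M + |μ|)/(f x0) * (f x0) := by field_simp
        _ ≤ (M + |μ|)/(f x0) * f y := by
            apply mul_le_mul_of_nonneg_left hfy (by positivity)
    · have : deriv f y < μ := hnear y (by linarith) hy2.le
      have h0 : max (deriv f y - μ) 0 = 0 := max_eq_right (by linarith)
      rw [h0]
      have := hfpos y hy1 hy2
      positivity
  · -- whole interval is near b
    refine ⟨0, le_refl 0, fun y hy1 hy2 => ?_⟩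
    have : deriv f y < μ := hnear y (by linarith) hy2.le
    rw [max_eq_right (by linarith), zero_mul]

lemma Bexists_leftrepel {f : ℝ → ℝ} {μ a b : ℝ} (hf : ContDiff ℝ 2 f) (hab : a < b)
    (hμ : 0 < μ)
    (hfpos : ∀ y, a < y → y < b → 0 < f y) (hfa : f a = 0) (hfa' : deriv f a = μ)
    (hb' : deriv f b < μ) :
    ∃ B : ℝ, 0 ≤ B ∧ ∀ y, a < y → y < b → max (deriv f y - μ) 0 ≤ B * f y := by
  have hdc : Continuous (deriv f) := hf.continuous_deriv (by norm_num)
  have hfd : Differentiable ℝ f := hf.differentiable (by norm_num)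
  obtain ⟨ε, hε, hnear⟩ := near_lt hdc hb'
  obtain ⟨L2, hL20, hL⟩ := deriv_lip hf a b
  obtain ⟨M, hM⟩ := (isCompact_Icc (a := a) (b := b)).exists_bound_of_continuousOn
    hdc.continuousOn
  have hM0 : 0 ≤ M := le_trans (norm_nonneg _) (hM a ⟨le_refl a, hab.le⟩)
  set δ : ℝ := min (μ/(2*(L2+1))) (b-a) with hδdef
  have hδ : 0 < δ := lt_min (by positivity) (by linarith)
  have hδb : a + δ ≤ b := by
    have := min_le_right (μ/(2*(L2+1))) (b-a); simp only [← hδdef] at this; linarith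
  have hL2δ : L2 * δ ≤ μ/2 := by
    have h1 : δ ≤ μ/(2*(L2+1)) := min_le_left _ _
    have h2 : L2 * δ ≤ L2 * (μ/(2*(L2+1))) := mul_le_mul_of_nonneg_left h1 hL20
    have h3 : L2 * (μ/(2*(L2+1))) ≤ μ/2 := by
      rw [mul_comm, div_mul_eq_mul_div, div_le_div_iff₀ (by positivity) two_pos]
      nlinarith
    linarith
  -- derivative lower bound near a
  have claim1 : ∀ u ∈ Icc a (a+δ), μ/2 ≤ deriv f u := by
    intro u hu
    have h1 : |deriv f u - deriv f a| ≤ L2 * |u - a| :=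
      hL u ⟨hu.1, le_trans hu.2 hδb⟩ a ⟨le_refl a, hab.le⟩
    have h2 : |u - a| ≤ δ := by
      rw [abs_of_nonneg (by linarith [hu.1])]; linarith [hu.2]
    have h3 : |deriv f u - deriv f a| ≤ μ/2 := by
      calc |deriv f u - deriv f a| ≤ L2 * |u - a| := h1
        _ ≤ L2 * δ := mul_le_mul_of_nonneg_left h2 hL20
        _ ≤ μ/2 := hL2δ
    have := abs_le.mp h3
    rw [hfa'] at this
    linarith [this.1]
  -- lower bound for f near a
  have claim2 : ∀ y ∈ Ioc a (a+δ), (μ/2)*(y-a) ≤ f y := by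
    intro y hy
    have hmono : MonotoneOn (fun u => f u - (μ/2)*u) (Icc a (a+δ)) := by
      apply monotoneOn_of_deriv_nonneg (convex_Icc _ _)
      · exact (hfd.continuous.sub (continuous_const.mul continuous_id)).continuousOn
      · intro u _
        exact ((hfd u).sub ((differentiable_id.const_mul _) u)).differentiableWithinAt
      · intro u hu
        rw [interior_Icc] at hu
        have hd : HasDerivAt (fun u => f u - (μ/2)*u) (deriv f u - μ/2) u := by
          have h4 : HasDerivAt (fun u : ℝ => (μ/2)*u) (μ/2) u := by
            simpa using (hasDerivAt_id u).const_mul (μ/2)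
          exact (hfd u).hasDerivAt.sub h4
        rw [hd.deriv]
        have := claim1 u ⟨hu.1.le, hu.2.le⟩
        linarith
    have := hmono ⟨le_refl a, by linarith⟩ ⟨hy.1.le, hy.2⟩ hy.1.le
    simp only [hfa] at this
    linarith [this]
  by_cases hcase : a + δ ≤ b - ε/2
  · have hne : (Icc (a+δ) (b - ε/2)).Nonempty := ⟨a+δ, le_refl _, hcase⟩
    obtain ⟨x0, hx0, hmin⟩ := (isCompact_Icc (a := a+δ) (b := b - ε/2)).exists_isMinOn hne
      (hf.continuous.continuousOn)
    have hm : 0 < f x0 := hfpos x0 (by linarith [hx0.1]) (by linarith [hx0.2])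
    refine ⟨max (2*L2/μ) ((M + |μ|)/(f x0)), le_max_of_le_left (by positivity),
      fun y hy1 hy2 => ?_⟩
    have hfy : 0 < f y := hfpos y hy1 hy2
    rcases le_or_gt y (a+δ) with hys | hys
    · -- near a
      have h1 : deriv f y - μ ≤ L2 * (y - a) := by
        have := hL y ⟨hy1.le, hy2.le⟩ a ⟨le_refl a, hab.le⟩
        rw [hfa'] at this
        have h2 := (abs_le.mp this).2
        rw [abs_of_nonneg (by linarith)] at h2
        linarith
      have h2 : max (deriv f y - μ) 0 ≤ L2 * (y - a) :=
        max_le h1 (mul_nonneg hL20 (by linarith))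
      have h3 : L2 * (y - a) ≤ (2*L2/μ) * f y := by
        have := claim2 y ⟨hy1, hys⟩
        calc L2 * (y - a) = (2*L2/μ) * ((μ/2) * (y-a)) := by field_simp
          _ ≤ (2*L2/μ) * f y := mul_le_mul_of_nonneg_left this (by positivity)
      calc max (deriv f y - μ) 0 ≤ (2*L2/μ) * f y := h2.trans h3
        _ ≤ max (2*L2/μ) ((M + |μ|)/(f x0)) * f y :=
            mul_le_mul_of_nonneg_right (le_max_left _ _) hfy.le
    · rcases le_or_gt y (b - ε/2) with hyc | hyc
      · -- middle
        have hfy0 : f x0 ≤ f y := hmin ⟨hys.le, hyc⟩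
        have h1 : deriv f y - μ ≤ M + |μ| := by
          have h := hM y ⟨hy1.le, hy2.le⟩
          rw [Real.norm_eq_abs] at h
          linarith [le_abs_self (deriv f y), neg_abs_le μ, (abs_le.mp h).2]
        have h2 : max (deriv f y - μ) 0 ≤ M + |μ| := max_le h1 (by positivity)
        calc max (deriv f y - μ) 0 ≤ M + |μ| := h2
          _ = (M + |μ|)/(f x0) * (f x0) := by field_simp
          _ ≤ (M + |μ|)/(f x0) * f y := mul_le_mul_of_nonneg_left hfy0 (by positivity)
          _ ≤ max (2*L2/μ) ((M + |μ|)/(f x0)) * f y :=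
              mul_le_mul_of_nonneg_right (le_max_right _ _) hfy.le
      · -- near b
        have : deriv f y < μ := hnear y (by linarith) hy2.le
        rw [max_eq_right (by linarith)]
        positivity
  · refine ⟨2*L2/μ, by positivity, fun y hy1 hy2 => ?_⟩
    have hfy : 0 < f y := hfpos y hy1 hy2
    rcases le_or_gt y (a+δ) with hys | hys
    · have h1 : deriv f y - μ ≤ L2 * (y - a) := by
        have := hL y ⟨hy1.le, hy2.le⟩ a ⟨le_refl a, hab.le⟩
        rw [hfa'] at this
        have h2 := (abs_le.mp this).2
        rw [abs_of_nonneg (by linarith)] at h2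
        linarith
      have h2 : max (deriv f y - μ) 0 ≤ L2 * (y - a) :=
        max_le h1 (mul_nonneg hL20 (by linarith))
      have h3 : L2 * (y - a) ≤ (2*L2/μ) * f y := by
        have := claim2 y ⟨hy1, hys⟩
        calc L2 * (y - a) = (2*L2/μ) * ((μ/2) * (y-a)) := by field_simp
          _ ≤ (2*L2/μ) * f y := mul_le_mul_of_nonneg_left this (by positivity)
      exact h2.trans h3
    · have : deriv f y < μ := hnear y (by linarith) hy2.le
      rw [max_eq_right (by linarith)]
      positivity

lemma hasDerivAt_reflect {f : ℝ → ℝ} {d x : ℝ} (h : HasDerivAt f d (-x)) :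
    HasDerivAt (fun u => -f (-u)) d x := by
  have h1 : HasDerivAt (fun u : ℝ => -u) (-1) x := by exact (hasDerivAt_id x).neg
  have h2 : HasDerivAt (fun u => f (-u)) (d * (-1)) x := h.comp x h1
  have := h2.neg
  exact this.congr_deriv (by ring)

lemma deriv_reflect {f : ℝ → ℝ} {x : ℝ} (hfd : DifferentiableAt ℝ f (-x)) :
    deriv (fun u => -f (-u)) x = deriv f (-x) :=
  (hasDerivAt_reflect hfd.hasDerivAt).deriv

lemma sign_pos_of_right_zero {f : ℝ → ℝ} (hf : Differentiable ℝ f) {c p : ℝ} (hcp : c < p)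
    (hfp : f p = 0) (hfp' : deriv f p < 0)
    (hnz : ∀ y, c < y → y < p → f y ≠ 0) : ∀ y, c < y → y < p → 0 < f y := by
  intro y hcy hyp
  rcases (hnz y hcy hyp).lt_or_gt with hneg | hpos
  swap
  · exact hpos
  exfalso
  have hd := (hf p).hasDerivAt
  have hslope : Tendsto (slope f p) (𝓝[<] p) (𝓝 (deriv f p)) :=
    (hasDerivAt_iff_tendsto_slope.mp hd).mono_left
      (nhdsWithin_mono _ (fun z hz => ne_of_lt hz))
  have hev1 : ∀ᶠ x in 𝓝[<] p, slope f p x < 0 := hslope.eventually_lt_const hfp'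
  have hmem : Ioo y p ∈ 𝓝[<] p := Ioo_mem_nhdsLT_of_mem ⟨hyp, le_refl p⟩
  obtain ⟨x, hx1, hx2⟩ := (hev1.and (eventually_of_mem hmem (fun z hz => hz))).exists
  have hfx : 0 < f x := by
    rw [slope_def_field, hfp, sub_zero] at hx1
    rcases div_neg_iff.mp hx1 with ⟨h1, h2⟩ | ⟨h1, h2⟩
    · exact h1
    · linarith [hx2.2]
  obtain ⟨z, hz, hz0⟩ := intermediate_value_Ioo (le_of_lt hx2.1)
    (hf.continuous.continuousOn) (⟨hneg, hfx⟩ : (0:ℝ) ∈ Ioo (f y) (f x))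
  exact hnz z (lt_trans hcy hz.1) (lt_trans hz.2 hx2.2) hz0

/-- Bound for the logarithmic second derivative of the bistable
ODE flow: for `ζ ∈ (-2C₀, 2C₀)` and `τ > 0`,
`|Y_{ζζ}(τ,ζ) / Y_ζ(τ,ζ)| ≤ C_Y (e^{μτ} - 1)` where `μ = f'(α)`. -/
theorem bistable_flow_log_second_derivative_bound
    (f : ℝ → ℝ) (αm αc αp : ℝ)
    (hf : ContDiff ℝ 2 f)
    (hαs : αm < αc ∧ αc < αp)
    (hzeros : ∀ s : ℝ, f s = 0 ↔ s = αm ∨ s = αc ∨ s = αp)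
    (hfm : deriv f αm < 0) (hfp : deriv f αp < 0) (hfc : 0 < deriv f αc)
    (hfbelow : ∀ s : ℝ, s < αm → 0 < f s) (hfabove : ∀ s : ℝ, αp < s → f s < 0)
    (Y : ℝ → ℝ → ℝ)
    (hY0 : ∀ ζ : ℝ, Y 0 ζ = ζ)
    (hYode : ∀ ζ : ℝ, ∀ τ ∈ Ici (0 : ℝ),
      HasDerivWithinAt (fun s => Y s ζ) (f (Y τ ζ)) (Ici 0) τ)
    (hYC2 : ∀ τ : ℝ, 0 ≤ τ → ContDiff ℝ 2 (fun ζ => Y τ ζ))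
    (C0 : ℝ) (hC0 : 0 < C0) (hC0' : max |αm| |αp| < 2 * C0) :
    ∃ CY > (0 : ℝ),
      ∀ τ : ℝ, 0 < τ → ∀ ζ ∈ Ioo (-(2 * C0)) (2 * C0),
        |deriv (fun z => deriv (fun w => Y τ w) z) ζ / deriv (fun z => Y τ z) ζ|
          ≤ CY * (Real.exp (deriv f αc * τ) - 1) := by
  obtain ⟨hmc, hcp⟩ := hαs
  have hcontf : Continuous f := hf.continuous
  have hfd : Differentiable ℝ f := hf.differentiable (by norm_num)
  have hzm : f αm = 0 := (hzeros αm).mpr (Or.inl rfl)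
  have hzc : f αc = 0 := (hzeros αc).mpr (Or.inr (Or.inl rfl))
  have hzp : f αp = 0 := (hzeros αp).mpr (Or.inr (Or.inr rfl))
  have hαm2 := abs_lt.mp (lt_of_le_of_lt (le_max_left |αm| |αp|) hC0')
  have hαp2 := abs_lt.mp (lt_of_le_of_lt (le_max_right |αm| |αp|) hC0')
  have hlip := lip_of_contDiff hf
  have hnever : ∀ (y0 : ℝ), f y0 = 0 → ∀ ζ : ℝ, ζ ≠ y0 → ∀ τ : ℝ, 0 ≤ τ → Y τ ζ ≠ y0 :=
    fun y0 hy0 ζ hne τ hτ => traj_ne_zero hcontf hY0 hYode hlip hy0 hne hτ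
  -- staying below / above roots
  have hstay_lt : ∀ (b : ℝ), f b = 0 → ∀ ζ : ℝ, ζ < b → ∀ τ : ℝ, 0 ≤ τ → Y τ ζ < b := by
    intro b hb ζ hζb τ hτ
    by_contra hge
    push_neg at hge
    have hcont : ContinuousOn (fun s => Y s ζ) (Icc 0 τ) :=
      (traj_cont hYode ζ).mono Icc_subset_Ici_self
    have himg := intermediate_value_Icc hτ hcont
    have hbmem : b ∈ Icc (Y 0 ζ) (Y τ ζ) := ⟨by rw [hY0]; exact hζb.le, hge⟩
    obtain ⟨s, hs, hsb⟩ := himg hbmem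
    exact hnever b hb ζ (ne_of_lt hζb) s hs.1 hsb
  have hstay_gt : ∀ (a : ℝ), f a = 0 → ∀ ζ : ℝ, a < ζ → ∀ τ : ℝ, 0 ≤ τ → a < Y τ ζ := by
    intro a ha ζ haζ τ hτ
    by_contra hge
    push_neg at hge
    have hcont : ContinuousOn (fun s => Y s ζ) (Icc 0 τ) :=
      (traj_cont hYode ζ).mono Icc_subset_Ici_self
    have himg := intermediate_value_Icc' hτ hcont
    have hamem : a ∈ Icc (Y τ ζ) (Y 0 ζ) := ⟨hge, by rw [hY0]; exact haζ.le⟩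
    obtain ⟨s, hs, hsa⟩ := himg hamem
    exact hnever a ha ζ (ne_of_gt haζ) s hs.1 hsa
  -- signs
  have hnz3 : ∀ y, αc < y → y < αp → f y ≠ 0 := by
    intro y h1 h2 h0
    rcases (hzeros y).mp h0 with rfl | rfl | rfl
    · linarith
    · linarith
    · linarith
  have hpos3 : ∀ y, αc < y → y < αp → 0 < f y :=
    sign_pos_of_right_zero hfd hcp hzp hfp hnz3
  -- reflection
  set g : ℝ → ℝ := fun x => -f (-x) with hgdef
  have hgC2 : ContDiff ℝ 2 g := (hf.comp (contDiff_id (𝕜 := ℝ) (E := ℝ)).neg).neg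
  have hgd : Differentiable ℝ g := hgC2.differentiable (by norm_num)
  have hgderiv : ∀ x : ℝ, deriv g x = deriv f (-x) := fun x => deriv_reflect (hfd _)
  have hneg2 : ∀ y, αm < y → y < αc → f y < 0 := by
    intro y h1 h2
    have hres := sign_pos_of_right_zero hgd (neg_lt_neg hmc)
      (show g (-αm) = 0 by simp [hgdef, hzm])
      (by rw [hgderiv, neg_neg]; exact hfm)
      (fun w hw1 hw2 hw0 => by
        have : f (-w) = 0 := by
          have : -f (-w) = 0 := hw0
          linarith
        rcases (hzeros (-w)).mp this with h | h | h
        · linarith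
        · linarith
        · linarith)
      (-y) (by linarith) (by linarith)
    have : 0 < -f (-(-y)) := hres
    rw [neg_neg] at this
    linarith
  -- orbits for the four bands
  have orb1 : ∀ ζ ∈ Ioo (-(2*C0)) αm, ∀ τ : ℝ, 0 ≤ τ → Y τ ζ ∈ Ioo (-(2*C0)) αm := by
    intro ζ hζ τ hτ
    have hub : ∀ s : ℝ, 0 ≤ s → Y s ζ < αm := fun s hs => hstay_lt αm hzm ζ hζ.2 s hs
    refine ⟨?_, hub τ hτ⟩
    have hid := traj_id hcontf hY0 hYode ζ hτ
    have hnn : 0 ≤ ∫ s in (0:ℝ)..τ, f (Y s ζ) :=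
      intervalIntegral.integral_nonneg hτ (fun u hu => (hfbelow _ (hub u hu.1)).le)
    have := hζ.1
    linarith
  have orb2 : ∀ ζ ∈ Ioo αm αc, ∀ τ : ℝ, 0 ≤ τ → Y τ ζ ∈ Ioo αm αc :=
    fun ζ hζ τ hτ => ⟨hstay_gt αm hzm ζ hζ.1 τ hτ, hstay_lt αc hzc ζ hζ.2 τ hτ⟩
  have orb3 : ∀ ζ ∈ Ioo αc αp, ∀ τ : ℝ, 0 ≤ τ → Y τ ζ ∈ Ioo αc αp :=
    fun ζ hζ τ hτ => ⟨hstay_gt αc hzc ζ hζ.1 τ hτ, hstay_lt αp hzp ζ hζ.2 τ hτ⟩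
  have orb4 : ∀ ζ ∈ Ioo αp (2*C0), ∀ τ : ℝ, 0 ≤ τ → Y τ ζ ∈ Ioo αp (2*C0) := by
    intro ζ hζ τ hτ
    have hlb : ∀ s : ℝ, 0 ≤ s → αp < Y s ζ := fun s hs => hstay_gt αp hzp ζ hζ.1 s hs
    refine ⟨hlb τ hτ, ?_⟩
    have hid := traj_id hcontf hY0 hYode ζ hτ
    have hnn : 0 ≤ ∫ s in (0:ℝ)..τ, -f (Y s ζ) :=
      intervalIntegral.integral_nonneg hτ (fun u hu => by
        have := hfabove _ (hlb u hu.1); linarith)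
    rw [intervalIntegral.integral_neg] at hnn
    have := hζ.2
    linarith
  -- reflected flow
  set Z : ℝ → ℝ → ℝ := fun τ ζ => -Y τ (-ζ) with hZdef
  have hZ0 : ∀ ζ : ℝ, Z 0 ζ = ζ := by intro ζ; simp [hZdef, hY0]
  have hZode : ∀ ζ : ℝ, ∀ τ ∈ Ici (0:ℝ),
      HasDerivWithinAt (fun s => Z s ζ) (g (Z τ ζ)) (Ici 0) τ := by
    intro ζ τ hτ
    have h := (hYode (-ζ) τ hτ).neg
    simp only [hZdef, hgdef, neg_neg]
    exact h
  have hZC2 : ∀ τ : ℝ, 0 ≤ τ → ContDiff ℝ 2 (fun ζ => Z τ ζ) := by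
    intro τ hτ
    exact ((hYC2 τ hτ).comp (contDiff_id (𝕜 := ℝ) (E := ℝ)).neg).neg
  -- derivative translation under reflection
  have htrans1 : ∀ τ : ℝ, 0 ≤ τ → ∀ x : ℝ,
      deriv (fun z => Z τ z) x = deriv (fun z => Y τ z) (-x) := by
    intro τ hτ x
    have hdiff : Differentiable ℝ (fun w => Y τ w) := (hYC2 τ hτ).differentiable (by norm_num)
    exact (hasDerivAt_reflect (f := fun w => Y τ w) (hdiff (-x)).hasDerivAt).deriv
  have htrans2 : ∀ τ : ℝ, 0 ≤ τ → ∀ ζ : ℝ,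
      deriv (fun z => deriv (fun w => Z τ w) z) (-ζ)
        = - deriv (fun z => deriv (fun w => Y τ w) z) ζ := by
    intro τ hτ ζ
    have h2 : ContDiff ℝ ((1:ℕ)+1) (fun w => Y τ w) := by exact_mod_cast hYC2 τ hτ
    have hD : Differentiable ℝ (deriv (fun w => Y τ w)) :=
      ((contDiff_succ_iff_deriv.mp h2).2.2).differentiable (by norm_num)
    have heq : (fun z => deriv (fun w => Z τ w) z)
        = (fun z => deriv (fun w => Y τ w) (-z)) := funext (htrans1 τ hτ)
    rw [heq]
    have hneg : HasDerivAt (fun z : ℝ => -z) (-1) (-ζ) := by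
      exact (hasDerivAt_id (-ζ)).neg
    have h3 : HasDerivAt (fun z => deriv (fun w => Y τ w) (-z))
        (deriv (deriv (fun w => Y τ w)) (-(-ζ)) * (-1)) (-ζ) :=
      (hD (-(-ζ))).hasDerivAt.comp (-ζ) hneg
    rw [neg_neg] at h3
    rw [h3.deriv]
    ring
  -- constants for the four bands
  have hμ : 0 < deriv f αc := hfc
  obtain ⟨B1, hB10, hB1⟩ := Bexists_noleftzero (μ := deriv f αc) hf hαm2.1
    (fun y _ h2 => hfbelow y h2) (hfbelow _ hαm2.1) (by linarith)
  obtain ⟨L1, hL10, hL1⟩ := deriv_lip hf (-(2*C0)) αm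
  obtain ⟨B3, hB30, hB3⟩ := Bexists_leftrepel (μ := deriv f αc) hf hcp hμ hpos3 hzc rfl
    (by linarith)
  obtain ⟨L3, hL30, hL3⟩ := deriv_lip hf αc αp
  have hg2pos : ∀ y, -αc < y → y < -αm → 0 < g y := by
    intro y h1 h2
    have := hneg2 (-y) (by linarith) (by linarith)
    simp only [hgdef]
    linarith
  obtain ⟨B2, hB20, hB2⟩ := Bexists_leftrepel (μ := deriv f αc) hgC2 (neg_lt_neg hmc) hμ
    hg2pos (by simp [hgdef, hzc]) (by rw [hgderiv, neg_neg]) (by rw [hgderiv, neg_neg]; linarith)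
  obtain ⟨L2', hL20', hL2'⟩ := deriv_lip hgC2 (-αc) (-αm)
  have hg4pos : ∀ y, -(2*C0) < y → y < -αp → 0 < g y := by
    intro y h1 h2
    have := hfabove (-y) (by linarith)
    simp only [hgdef]
    linarith
  obtain ⟨B4, hB40, hB4⟩ := Bexists_noleftzero (μ := deriv f αc) hgC2
    (show -(2*C0) < -αp by linarith) hg4pos
    (by simp only [hgdef, neg_neg]; linarith [hfabove (2*C0) (by linarith)])
    (by rw [hgderiv, neg_neg]; linarith)
  obtain ⟨L4', hL40', hL4'⟩ := deriv_lip hgC2 (-(2*C0)) (-αp)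
  set K1 : ℝ := L1 * Real.exp (B1*(αm - -(2*C0))) / (deriv f αc) with hK1def
  set K2 : ℝ := L2' * Real.exp (B2*(-αm - -αc)) / (deriv f αc) with hK2def
  set K3 : ℝ := L3 * Real.exp (B3*(αp - αc)) / (deriv f αc) with hK3def
  set K4 : ℝ := L4' * Real.exp (B4*(-αp - -(2*C0))) / (deriv f αc) with hK4def
  have hK10 : 0 ≤ K1 := by rw [hK1def]; positivity
  have hK20 : 0 ≤ K2 := by rw [hK2def]; positivity
  have hK30 : 0 ≤ K3 := by rw [hK3def]; positivity
  have hK40 : 0 ≤ K4 := by rw [hK4def]; positivity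
  set CY : ℝ := K1 + K2 + K3 + K4 + 1 with hCYdef
  have hCY : 0 < CY := by rw [hCYdef]; linarith
  refine ⟨CY, hCY, ?_⟩
  -- master lemma applied to the four bands
  have case1 := master_inc hf hμ hY0 hYode hYC2 hαm2.1 hB10 hL10
    (fun y _ h2 => hfbelow y h2) hB1 hL1 orb1
  have case3 := master_inc hf hμ hY0 hYode hYC2 hcp hB30 hL30 hpos3 hB3 hL3 orb3
  have orb2' : ∀ ζ ∈ Ioo (-αc) (-αm), ∀ τ : ℝ, 0 ≤ τ → Z τ ζ ∈ Ioo (-αc) (-αm) := by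
    intro ζ hζ τ hτ
    have := orb2 (-ζ) ⟨by linarith [hζ.2], by linarith [hζ.1]⟩ τ hτ
    constructor
    · simp only [hZdef]; linarith [this.2]
    · simp only [hZdef]; linarith [this.1]
  have orb4' : ∀ ζ ∈ Ioo (-(2*C0)) (-αp), ∀ τ : ℝ, 0 ≤ τ → Z τ ζ ∈ Ioo (-(2*C0)) (-αp) := by
    intro ζ hζ τ hτ
    have := orb4 (-ζ) ⟨by linarith [hζ.2], by linarith [hζ.1]⟩ τ hτ
    constructor
    · simp only [hZdef]; linarith [this.2]
    · simp only [hZdef]; linarith [this.1]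
  have case2 := master_inc hgC2 hμ hZ0 hZode hZC2 (neg_lt_neg hmc) hB20 hL20'
    hg2pos hB2 hL2' orb2'
  have case4 := master_inc hgC2 hμ hZ0 hZode hZC2 (show -(2*C0) < -αp by linarith)
    hB40 hL40' hg4pos hB4 hL4' orb4'
  intro τ hτ
  have hexpτ : (0:ℝ) ≤ Real.exp (deriv f αc * τ) - 1 := by
    have : (1:ℝ) ≤ Real.exp (deriv f αc * τ) := Real.one_le_exp (by positivity)
    linarith
  -- bound away from the roots
  have main_ne : ∀ ζ ∈ Ioo (-(2*C0)) (2*C0), ζ ≠ αm → ζ ≠ αc → ζ ≠ αp →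
      |deriv (fun z => deriv (fun w => Y τ w) z) ζ / deriv (fun z => Y τ z) ζ|
        ≤ CY * (Real.exp (deriv f αc * τ) - 1) := by
    intro ζ hζ hnm hnc hnp
    have hbound : ∀ K : ℝ, 0 ≤ K → K ≤ CY →
        ∀ x : ℝ, x ≤ K * (Real.exp (deriv f αc * τ) - 1) →
        x ≤ CY * (Real.exp (deriv f αc * τ) - 1) := by
      intro K hK0 hKCY x hx
      calc x ≤ K * (Real.exp (deriv f αc * τ) - 1) := hx
        _ ≤ CY * (Real.exp (deriv f αc * τ) - 1) :=
            mul_le_mul_of_nonneg_right hKCY hexpτ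
    rcases lt_trichotomy ζ αm with h1 | h1 | h1
    · exact hbound K1 hK10 (by rw [hCYdef]; linarith) _ (case1 τ hτ ζ ⟨hζ.1, h1⟩)
    · exact absurd h1 hnm
    rcases lt_trichotomy ζ αc with h2 | h2 | h2
    · -- band 2, via reflection
      have hres := case2 τ hτ (-ζ) ⟨by linarith, by linarith⟩
      rw [htrans2 τ hτ.le ζ] at hres
      rw [show deriv (fun z => Z τ z) (-ζ) = deriv (fun z => Y τ z) (-(-ζ)) from
        htrans1 τ hτ.le (-ζ)] at hres
      rw [neg_neg, neg_div, abs_neg] at hres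
      exact hbound K2 hK20 (by rw [hCYdef]; linarith) _ hres
    · exact absurd h2 hnc
    rcases lt_trichotomy ζ αp with h3 | h3 | h3
    · exact hbound K3 hK30 (by rw [hCYdef]; linarith) _ (case3 τ hτ ζ ⟨h2, h3⟩)
    · exact absurd h3 hnp
    · -- band 4, via reflection
      have hres := case4 τ hτ (-ζ) ⟨by linarith [hζ.2], by linarith⟩
      rw [htrans2 τ hτ.le ζ] at hres
      rw [show deriv (fun z => Z τ z) (-ζ) = deriv (fun z => Y τ z) (-(-ζ)) from
        htrans1 τ hτ.le (-ζ)] at hres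
      rw [neg_neg, neg_div, abs_neg] at hres
      exact hbound K4 hK40 (by rw [hCYdef]; linarith) _ hres
  -- extend to the roots by continuity
  intro ζ hζ
  by_cases hroot : ζ = αm ∨ ζ = αc ∨ ζ = αp
  · by_cases hD10 : deriv (fun z => Y τ z) ζ = 0
    · rw [hD10, div_zero, abs_zero]
      exact mul_nonneg hCY.le hexpτ
    · have h2C : ContDiff ℝ ((1:ℕ)+1) (fun w => Y τ w) := by exact_mod_cast hYC2 τ hτ.le
      have hC1 : Continuous (deriv (fun w => Y τ w)) :=
        (hYC2 τ hτ.le).continuous_deriv (by norm_num)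
      have hCD2 : Continuous (deriv (deriv (fun w => Y τ w))) :=
        ((contDiff_succ_iff_deriv.mp h2C).2.2).continuous_deriv le_rfl
      have hφ : ContinuousAt (fun z =>
          |deriv (fun z' => deriv (fun w => Y τ w) z') z / deriv (fun z' => Y τ z') z|) ζ :=
        (ContinuousAt.div hCD2.continuousAt hC1.continuousAt hD10).abs
      obtain ⟨e, he1, hgood⟩ : ∃ e, ζ < e ∧ ∀ x, ζ < x → x < e →
          (x ∈ Ioo (-(2*C0)) (2*C0) ∧ x ≠ αm ∧ x ≠ αc ∧ x ≠ αp) := by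
        rcases hroot with rfl | rfl | rfl
        · exact ⟨αc, hmc, fun x hx1 hx2 =>
            ⟨⟨by linarith [hαm2.1], by linarith [hcp, hαp2.2]⟩,
              by linarith, by linarith, by linarith⟩⟩
        · exact ⟨αp, hcp, fun x hx1 hx2 =>
            ⟨⟨by linarith [hαm2.1, hmc], by linarith [hαp2.2]⟩,
              by linarith [hmc], by linarith, by linarith⟩⟩
        · exact ⟨2*C0, hαp2.2, fun x hx1 hx2 =>
            ⟨⟨by linarith [hαp2.1], hx2⟩,
              by linarith [hmc, hcp], by linarith [hcp], by linarith⟩⟩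
      set t : ℕ → ℝ := fun n => ζ + (e - ζ)/((n:ℝ)+2) with htdef
      have htm : ∀ n : ℕ, ζ < t n ∧ t n < e := by
        intro n
        have hn0 : (0:ℝ) ≤ (n:ℝ) := Nat.cast_nonneg n
        constructor
        · have h1 : 0 < (e - ζ)/((n:ℝ)+2) := by
            apply div_pos (by linarith) (by linarith)
          simp only [htdef]
          linarith
        · have h1 : (e - ζ)/((n:ℝ)+2) < e - ζ :=
            div_lt_self (by linarith) (by linarith)
          simp only [htdef]
          linarith
      have htends : Tendsto t atTop (𝓝 ζ) := by
        have h0 : Tendsto (fun n : ℕ => (e - ζ)/((n:ℝ)+2)) atTop (𝓝 0) := by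
          have h1 := (tendsto_const_div_atTop_nhds_zero_nat (e - ζ)).comp
            (tendsto_add_atTop_nat 2)
          have h2 : ((fun n : ℕ => (e - ζ)/(n:ℝ)) ∘ fun a => a + 2)
              = (fun n : ℕ => (e - ζ)/((n:ℝ)+2)) := by
            funext n; simp [Function.comp]
          rw [← h2]
          exact h1
        have h3 := h0.const_add ζ
        simpa using h3
      have hev : ∀ n : ℕ, (fun z =>
          |deriv (fun z' => deriv (fun w => Y τ w) z') z / deriv (fun z' => Y τ z') z|) (t n)
            ≤ CY * (Real.exp (deriv f αc * τ) - 1) := by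
        intro n
        obtain ⟨hmem, hne1, hne2, hne3⟩ := hgood (t n) (htm n).1 (htm n).2
        exact main_ne (t n) hmem hne1 hne2 hne3
      exact le_of_tendsto ((hφ.tendsto).comp htends) (Filter.Eventually.of_forall hev)
  · push_neg at hroot
    exact main_ne ζ hζ hroot.1 hroot.2.1 hroot.2.2
end

section
/- Generation-time behavior of the bistable ODE flow. Let Y : [0,∞) × R → R solve Y_τ = f(Y), Y(0,ζ) = ζ, let μ = f'(α), η_0 = min(α - α_-, α_+ - α), and let C_0 > 0 be a constant with 2C_0 > max(|α_-|, |α_+|). Let η ∈ (0, η_0) be arbitrary. Then there exist positive constants C_Y and ε_0 such that for every ε ∈ (0, ε_0) and every ζ ∈ (-2C_0, 2C_0): (a) α_- - η ≤ Y(μ^{-1}|ln ε|, ζ) ≤ α_+ + η; (b) if ζ ≥ α + C_Y ε then Y(μ^{-1}|ln ε|, ζ) ≥ α_+ - η; (c) if ζ ≤ α - C_Y ε then Y(μ^{-1}|ln ε|, ζ) ≤ α_- + η. -/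
open MeasureTheory Real Set Filter Topology

set_option maxHeartbeats 1600000 in
private lemma master_flow (f : ℝ → ℝ) (αc αp : ℝ) (hf : ContDiff ℝ 2 f)
    (hαc : αc < αp) (hfαc : f αc = 0) (hfc : 0 < deriv f αc)
    (hne : ∀ s : ℝ, αc < s → s < αp → f s ≠ 0)
    (hfabove : ∀ s : ℝ, αp < s → f s < 0)
    (Y : ℝ → ℝ → ℝ) (hY0 : ∀ ζ : ℝ, Y 0 ζ = ζ)
    (hYode : ∀ ζ : ℝ, ∀ τ ∈ Ici (0:ℝ),
      HasDerivWithinAt (fun s => Y s ζ) (f (Y τ ζ)) (Ici 0) τ)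
    (C0 : ℝ) (hC0 : 0 < C0)
    (η : ℝ) (hη0 : 0 < η) (hη1 : η < αp - αc) :
    ∃ CY > (0:ℝ), ∃ ε₀ > (0:ℝ), ∀ ε : ℝ, 0 < ε → ε < ε₀ →
      ∀ ζ ∈ Ioo (-(2*C0)) (2*C0),
      Y ((deriv f αc)⁻¹ * |Real.log ε|) ζ ≤ αp + η ∧
      (αc + CY * ε ≤ ζ → αp - η ≤ Y ((deriv f αc)⁻¹ * |Real.log ε|) ζ) := by
  set μ := deriv f αc with hμdef
  have hdf : Differentiable ℝ f := hf.differentiable two_ne_zero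
  have hcf : Continuous f := hdf.continuous
  have hdf1 : ContDiff ℝ 1 (deriv f) := by
    have h2 : ContDiff ℝ (1 + 1 : ℕ) f := by exact_mod_cast hf
    exact (contDiff_succ_iff_deriv.mp h2).2.2
  have hddf : Differentiable ℝ (deriv f) := hdf1.differentiable one_ne_zero
  -- positivity of f on (αc, αp)
  have hpos : ∀ s : ℝ, αc < s → s < αp → 0 < f s := by
    have hslope : Tendsto (slope f αc) (𝓝[≠] αc) (𝓝 μ) :=
      hasDerivAt_iff_tendsto_slope.mp (hdf αc).hasDerivAt
    have hmono : (𝓝[>] αc : Filter ℝ) ≤ 𝓝[≠] αc :=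
      nhdsWithin_mono _ (fun x hx => ne_of_gt hx)
    have h1 : ∀ᶠ x in 𝓝[>] αc, 0 < slope f αc x :=
      (hslope.mono_left hmono).eventually (eventually_gt_nhds hfc)
    have h2 : ∀ᶠ x in 𝓝[>] αc, x ∈ Ioo αc αp :=
      eventually_of_mem (Ioo_mem_nhdsGT_of_mem ⟨le_refl αc, hαc⟩) (fun x hx => hx)
    obtain ⟨x0, hx0s, hx0m⟩ := (h1.and h2).exists
    have hx0pos : 0 < f x0 := by
      have hne0 : x0 - αc ≠ 0 := sub_ne_zero.2 (ne_of_gt hx0m.1)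
      have : slope f αc x0 * (x0 - αc) = f x0 - f αc := by
        rw [slope_def_field]; field_simp
      have h4 := mul_pos hx0s (sub_pos.2 hx0m.1)
      rw [hfαc] at this
      linarith [this, h4]
    intro s hs1 hs2
    by_contra hcon
    push_neg at hcon
    have hlt : f s < 0 := lt_of_le_of_ne hcon (hne s hs1 hs2)
    have h0mem : (0:ℝ) ∈ uIcc (f s) (f x0) := by
      rw [Set.mem_uIcc]; left; exact ⟨hlt.le, hx0pos.le⟩
    obtain ⟨c, hc, hfc0⟩ := intermediate_value_uIcc (hcf.continuousOn) h0mem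
    have hc1 : αc < c := lt_of_lt_of_le (lt_min hs1 hx0m.1) hc.1
    have hc2 : c < αp := lt_of_le_of_lt hc.2 (max_lt hs2 hx0m.2)
    exact hne c hc1 hc2 hfc0
  -- quadratic lower bound near αc
  obtain ⟨M, hMub⟩ := isCompact_Icc.exists_bound_of_continuousOn
    (((contDiff_one_iff_deriv.mp hdf1).2).continuousOn :
      ContinuousOn (deriv (deriv f)) (Icc αc (αc+1)))
  set Lc := max M 0 with hLcdef
  have hLc0 : 0 ≤ Lc := le_max_right _ _
  have hLip : ∀ x ∈ Icc αc (αc+1), |deriv f x - μ| ≤ Lc * (x - αc) := by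
    intro x hx
    have h := Convex.norm_image_sub_le_of_norm_deriv_le
      (f := deriv f) (C := Lc) (fun y _ => hddf y)
      (fun y hy => le_trans (hMub y hy) (le_max_left _ _))
      (convex_Icc αc (αc+1)) (left_mem_Icc.mpr (by linarith)) hx
    rw [Real.norm_eq_abs, Real.norm_eq_abs] at h
    calc |deriv f x - μ| ≤ Lc * |x - αc| := h
      _ = Lc * (x - αc) := by rw [abs_of_nonneg (by linarith [hx.1])]
  have hquad : ∀ z : ℝ, 0 < z → z ≤ 1 → (μ - Lc * z) * z ≤ f (αc + z) := by
    intro z hz hz1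
    obtain ⟨ξ, hξ, hslope⟩ := exists_deriv_eq_slope f (show αc < αc + z by linarith)
      (hcf.continuousOn) (hdf.differentiableOn)
    have hξm : ξ ∈ Icc αc (αc+1) := ⟨hξ.1.le, by linarith [hξ.2]⟩
    have h1 := abs_le.mp (hLip ξ hξm)
    have h2 : μ - Lc * z ≤ deriv f ξ := by
      have h5 : ξ - αc ≤ z := by linarith [hξ.2]
      have h6 := mul_le_mul_of_nonneg_left h5 hLc0
      linarith [h1.1]
    have h3 : f (αc + z) = deriv f ξ * z := by
      rw [hslope, hfαc]
      rw [add_sub_cancel_left, sub_zero, div_mul_cancel₀ _ hz.ne']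
    have h4 := mul_le_mul_of_nonneg_right h2 hz.le
    rw [h3]
    linarith
  -- constants
  set δm := min 1 (αp - αc - η) with hδmdef
  have hδm : 0 < δm := lt_min one_pos (by linarith)
  set K := max (Lc + 1) (μ / δm) with hKdef
  have hK0 : 0 < K := lt_of_lt_of_le (by linarith) (le_max_left _ _)
  have hKL : Lc < K := lt_of_lt_of_le (by linarith) (le_max_left _ _)
  set δ₀ := μ / K with hδ₀def
  have hδ₀pos : 0 < δ₀ := div_pos hfc hK0
  have hδ₀le : δ₀ ≤ δm := by
    rw [hδ₀def, div_le_iff₀ hK0]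
    have h5 : μ / δm ≤ K := by rw [hKdef]; exact le_max_right _ _
    have h6 : μ ≤ K * δm := (div_le_iff₀ hδm).mp h5
    linarith
  have hδ₀1 : δ₀ ≤ 1 := hδ₀le.trans (min_le_left _ _)
  have hδ₀η : δ₀ ≤ αp - αc - η := hδ₀le.trans (min_le_right _ _)
  -- δ₂ : lower bound for f on [αc + δ₀/2, αp - η]
  have hIcc2ne : αc + δ₀/2 ≤ αp - η := by linarith
  obtain ⟨x2, hx2m, hx2min⟩ := isCompact_Icc.exists_isMinOn
    (nonempty_Icc.mpr hIcc2ne) (hcf.continuousOn)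
  set δ₂ := f x2 / 2 with hδ₂def
  have hδ₂pos : 0 < δ₂ := by
    have := hpos x2 (lt_of_lt_of_le (by linarith) hx2m.1)
      (lt_of_le_of_lt hx2m.2 (by linarith))
    rw [hδ₂def]; linarith
  have hflow2 : ∀ s ∈ Icc (αc + δ₀/2) (αp - η), 2 * δ₂ ≤ f s := by
    intro s hs
    have := hx2min hs
    rw [hδ₂def]; dsimp at this ⊢; linarith
  -- A and δa : upper barrier data
  set A := max (2*C0) (αp + η) with hAdef
  have hAge : αp + η ≤ A := le_max_right _ _
  obtain ⟨xa, hxam, hxamax⟩ := isCompact_Icc.exists_isMaxOn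
    (nonempty_Icc.mpr hAge) (hcf.continuousOn)
  set δa := -(f xa) / 2 with hδadef
  have hδapos : 0 < δa := by
    have := hfabove xa (lt_of_lt_of_le (by linarith) hxam.1)
    rw [hδadef]; linarith
  have hflowa : ∀ s ∈ Icc (αp + η) A, f s ≤ -(2 * δa) := by
    intro s hs
    have := hxamax hs
    rw [hδadef]; dsimp at this ⊢; linarith
  set ta := (A - (αp + η)) / δa with htadef
  have hta0 : 0 ≤ ta := div_nonneg (by linarith) hδapos.le
  have hδata : δa * ta = A - (αp + η) := by
    rw [htadef]; field_simp
  set T₁ := (αp - η - (αc + δ₀/2)) / δ₂ with hT₁def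
  have hT₁0 : 0 ≤ T₁ := div_nonneg (by linarith) hδ₂pos.le
  have hδ₂T₁ : δ₂ * T₁ = αp - η - (αc + δ₀/2) := by
    rw [hT₁def]; field_simp
  set CY := δ₀ * Real.exp (μ * T₁) with hCYdef
  have hCY : 0 < CY := mul_pos hδ₀pos (exp_pos _)
  refine ⟨CY, hCY, min (min (1/2) (Real.exp (-(μ * ta)))) (Real.exp (-(μ * T₁))),
    lt_min (lt_min one_half_pos (exp_pos _)) (exp_pos _), ?_⟩
  intro ε hε hεlt ζ hζ
  set T := μ⁻¹ * |Real.log ε| with hTdef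
  have hεhalf : ε < 1/2 := lt_of_lt_of_le hεlt (le_trans (min_le_left _ _) (min_le_left _ _))
  have hlogε : Real.log ε < 0 := Real.log_neg hε (by linarith)
  have habs : |Real.log ε| = -Real.log ε := abs_of_neg hlogε
  have hμT : μ * T = -Real.log ε := by
    rw [hTdef, habs]; field_simp
  have hT0 : 0 ≤ T := mul_nonneg (inv_nonneg.2 hfc.le) (abs_nonneg _)
  have hexpT : Real.exp (-(μ * T)) = ε := by rw [hμT, neg_neg, Real.exp_log hε]
  have htaT : ta ≤ T := by
    have h1 : ε < Real.exp (-(μ * ta)) :=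
      lt_of_lt_of_le hεlt (le_trans (min_le_left _ _) (min_le_right _ _))
    have h2 : Real.log ε < -(μ * ta) := by
      calc Real.log ε < Real.log (Real.exp (-(μ * ta))) := Real.log_lt_log hε h1
        _ = -(μ * ta) := Real.log_exp _
    have h3 : μ * ta < μ * T := by rw [hμT]; linarith
    exact le_of_lt ((mul_lt_mul_iff_right₀ hfc).mp h3)
  have hT₁T : T₁ ≤ T := by
    have h1 : ε < Real.exp (-(μ * T₁)) := lt_of_lt_of_le hεlt (min_le_right _ _)
    have h2 : Real.log ε < -(μ * T₁) := by
      calc Real.log ε < Real.log (Real.exp (-(μ * T₁))) := Real.log_lt_log hε h1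
        _ = -(μ * T₁) := Real.log_exp _
    have h3 : μ * T₁ < μ * T := by rw [hμT]; linarith
    exact le_of_lt ((mul_lt_mul_iff_right₀ hfc).mp h3)
  -- trajectory facts
  set y : ℝ → ℝ := fun s => Y s ζ with hydef
  have hy0 : y 0 = ζ := hY0 ζ
  have hyc : ∀ {a b : ℝ}, 0 ≤ a → ContinuousOn y (Icc a b) := by
    intro a b ha t ht
    exact ((hYode ζ t (le_trans ha ht.1)).continuousWithinAt).mono
      (fun x hx => le_trans ha hx.1)
  have hyd : ∀ {a b : ℝ}, 0 ≤ a → ∀ x ∈ Ico a b,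
      HasDerivWithinAt y (f (y x)) (Ici x) x := by
    intro a b ha x hx
    exact (hYode ζ x (le_trans ha hx.1)).mono (Ici_subset_Ici.mpr (le_trans ha hx.1))
  -- Part 1 : upper bound
  have claim1 : ∀ t ∈ Icc 0 ta, y t ≤ A - δa * t := by
    intro t ht
    refine image_le_of_deriv_right_lt_deriv_boundary' (f' := fun s => f (y s))
      (B := fun t => A - δa * t) (B' := fun _ => -δa)
      (hyc le_rfl) (hyd le_rfl) ?_ ?_ ?_ ?_ ht
    · rw [hy0]
      have : ζ < 2*C0 := hζ.2
      have : (2:ℝ)*C0 ≤ A := le_max_left _ _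
      simp only [mul_zero, sub_zero]
      linarith
    · exact (continuous_const.sub (continuous_const.mul continuous_id)).continuousOn
    · intro x _
      have h : HasDerivAt (fun t : ℝ => A - δa * t) (-δa) x := by
        simpa using ((hasDerivAt_id x).const_mul δa).const_sub A
      exact h.hasDerivWithinAt
    · intro x hx hcontact
      show f (y x) < -δa
      have hcontact' : y x = A - δa * x := hcontact
      have hmem : y x ∈ Icc (αp + η) A := by
        rw [hcontact']
        constructor
        · have h1 : δa * x ≤ δa * ta := mul_le_mul_of_nonneg_left hx.2.le hδapos.le
          linarith
        · have h2 : 0 ≤ δa * x := mul_nonneg hδapos.le hx.1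
          linarith
      have := hflowa _ hmem
      linarith
  have claim2 : ∀ t ∈ Icc ta T, y t ≤ αp + η := by
    intro t ht
    refine image_le_of_deriv_right_lt_deriv_boundary' (f' := fun s => f (y s))
      (B := fun _ => αp + η) (B' := fun _ => 0)
      (hyc hta0) (hyd hta0) ?_ continuousOn_const
      (fun x _ => (hasDerivWithinAt_const x _ (αp + η))) ?_ ht
    · show y ta ≤ αp + η
      have h := claim1 ta ⟨hta0, le_refl ta⟩
      linarith
    · intro x _ hcontact
      show f (y x) < 0
      have hcontact' : y x = αp + η := hcontact
      rw [hcontact']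
      exact hfabove _ (by linarith)
  have partA : y T ≤ αp + η := claim2 T ⟨htaT, le_refl T⟩
  refine ⟨partA, fun hζC => ?_⟩
  -- Part 2 : lower push
  set z0 := CY * ε with hz0def
  have hz00 : 0 < z0 := mul_pos hCY hε
  have hz0δ : z0 < δ₀ := by
    have hεe : ε < Real.exp (-(μ * T₁)) := lt_of_lt_of_le hεlt (min_le_right _ _)
    have h1 : Real.exp (μ*T₁) * ε < Real.exp (μ*T₁) * Real.exp (-(μ*T₁)) :=
      mul_lt_mul_of_pos_left hεe (exp_pos _)
    rw [← Real.exp_add] at h1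
    simp only [add_neg_cancel, Real.exp_zero] at h1
    calc z0 = δ₀ * (Real.exp (μ * T₁) * ε) := by rw [hz0def, hCYdef]; ring
      _ < δ₀ * 1 := by exact mul_lt_mul_of_pos_left h1 hδ₀pos
      _ = δ₀ := mul_one _
  set k := K / μ with hkdef
  have hk0 : 0 < k := div_pos hK0 hfc
  have hkδ : k⁻¹ = δ₀ := by rw [hkdef, hδ₀def, inv_div]
  have hKk : K = μ * k := by rw [hkdef]; field_simp
  set q := z0⁻¹ - k with hqdef
  have hq0 : 0 < q := by
    have h1 : δ₀⁻¹ < z0⁻¹ := inv_strictAnti₀ hz00 hz0δ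
    have h2 : δ₀⁻¹ = k := by rw [← hkδ, inv_inv]
    rw [hqdef]; linarith
  set D : ℝ → ℝ := fun t => q * Real.exp (-(μ * t)) + k with hDdef
  have hD0 : ∀ t, k < D t := by
    intro t
    have := mul_pos hq0 (exp_pos (-(μ * t)))
    simp only [hDdef]; linarith
  have hDpos : ∀ t, 0 < D t := fun t => hk0.trans (hD0 t)
  set w : ℝ → ℝ := fun t => (D t)⁻¹ with hwdef
  have hw0 : ∀ t, 0 < w t := fun t => inv_pos.2 (hDpos t)
  have hwlt : ∀ t, w t < δ₀ := by
    intro t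
    have := inv_strictAnti₀ hk0 (hD0 t)
    rw [hkδ] at this
    exact this
  have hw0val : w 0 = z0 := by
    have hD00 : D 0 =z0⁻¹ := by
      show q * Real.exp (-(μ * 0)) + k = z0⁻¹
      rw [hqdef]
      simp
    show (D 0)⁻¹ = z0
    rw [hD00, inv_inv]
  have hDderiv : ∀ t, HasDerivAt D (-(μ * (q * Real.exp (-(μ * t))))) t := by
    intro t
    have h1 : HasDerivAt (fun t : ℝ => -(μ * t)) (-μ) t := by
      simpa using (hasDerivAt_id t).const_mul (-μ)
    have h2 : HasDerivAt D (q * (Real.exp (-(μ * t)) * (-μ))) t := (h1.exp.const_mul q).add_const k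
    convert h2 using 1
    ring
  have hwderiv : ∀ t, HasDerivAt (fun t => αc + w t) ((μ - K * w t) * w t) t := by
    intro t
    have h : HasDerivAt (fun t => αc + w t) (-(-(μ * (q * Real.exp (-(μ * t))))) / (D t)^2) t :=
      ((hDderiv t).inv (ne_of_gt (hDpos t))).const_add αc
    convert h using 1
    have hDne : D t ≠ 0 := ne_of_gt (hDpos t)
    simp only [hwdef]
    rw [hKk]
    field_simp
    ring
  set ts := T - T₁ with htsdef
  have hts0 : 0 ≤ ts := by rw [htsdef]; linarith
  have claimB1 : ∀ t ∈ Icc 0 ts, αc + w t ≤ y t := by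
    intro t ht
    refine image_le_of_deriv_right_lt_deriv_boundary'
      (f := fun t => αc + w t) (f' := fun t => (μ - K * w t) * w t)
      (B := y) (B' := fun s => f (y s))
      (fun x _ => (hwderiv x).continuousAt.continuousWithinAt)
      (fun x _ => (hwderiv x).hasDerivWithinAt) ?_ (hyc le_rfl) (hyd le_rfl) ?_ ht
    · show αc + w 0 ≤ y 0
      rw [hw0val, hy0]
      exact hζC
    · intro x _ hcontact
      show (μ - K * w x) * w x < f (y x)
      have hcontact' : αc + w x = y x := hcontact
      have hzpos := hw0 x
      have hz1 : w x ≤ 1 := le_of_lt (lt_of_lt_of_le (hwlt x) hδ₀1)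
      have h1 := hquad (w x) hzpos hz1
      have h2 : (μ - K * w x) * w x < (μ - Lc * w x) * w x := by
        have h7 := mul_lt_mul_of_pos_right hKL hzpos
        exact mul_lt_mul_of_pos_right (by linarith) hzpos
      rw [← hcontact']
      linarith
  have hwts : δ₀ / 2 ≤ w ts := by
    have he : Real.exp (-(μ * ts)) = ε * Real.exp (μ * T₁) := by
      rw [htsdef, show -(μ * (T - T₁)) = -(μ*T) + μ*T₁ by ring, Real.exp_add, hexpT]
    have hq' : q ≤ z0⁻¹ := by rw [hqdef]; linarith
    have h1 : D ts ≤ z0⁻¹ * (ε * Real.exp (μ * T₁)) + k := by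
      simp only [hDdef, he]
      have := mul_le_mul_of_nonneg_right hq'
        (le_of_lt (mul_pos hε (exp_pos (μ * T₁))))
      linarith
    have h2 : z0⁻¹ * (ε * Real.exp (μ * T₁)) = δ₀⁻¹ := by
      rw [hz0def, hCYdef]
      have h3 : Real.exp (μ * T₁) ≠ 0 := ne_of_gt (exp_pos _)
      field_simp
    have hδ₀k : δ₀⁻¹ = k := by rw [← hkδ, inv_inv]
    rw [h2, hδ₀k] at h1
    have h4 : (2*k)⁻¹ ≤ (D ts)⁻¹ := by
      apply inv_anti₀ (hDpos ts)
      linarith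
    have h5 : (2*k)⁻¹ = δ₀/2 := by
      rw [mul_inv, hkδ]; ring
    rw [← h5]
    exact h4
  have claimB2 : ∀ t ∈ Icc ts T, αc + δ₀/2 + δ₂ * (t - ts) ≤ y t := by
    intro t ht
    refine image_le_of_deriv_right_lt_deriv_boundary'
      (f := fun t => αc + δ₀/2 + δ₂ * (t - ts)) (f' := fun _ => δ₂)
      (B := y) (B' := fun s => f (y s))
      ?_ ?_ ?_ (hyc hts0) (hyd hts0) ?_ ht
    · exact (continuous_const.add (continuous_const.mul
        (continuous_id.sub continuous_const))).continuousOn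
    · intro x _
      have h : HasDerivAt (fun t : ℝ => αc + δ₀/2 + δ₂ * (t - ts)) δ₂ x := by
        simpa using (((hasDerivAt_id x).sub_const ts).const_mul δ₂).const_add (αc + δ₀/2)
      exact h.hasDerivWithinAt
    · show αc + δ₀/2 + δ₂ * (ts - ts) ≤ y ts
      have h := claimB1 ts ⟨hts0, le_refl ts⟩
      simp only [sub_self, mul_zero, add_zero]
      linarith [hwts]
    · intro x hx hcontact
      show δ₂ < f (y x)
      have hcontact' : αc + δ₀/2 + δ₂ * (x - ts) = y x := hcontact
      have hmem : y x ∈ Icc (αc + δ₀/2) (αp - η) := by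
        rw [← hcontact']
        constructor
        · have h8 : 0 ≤ δ₂ * (x - ts) := mul_nonneg hδ₂pos.le (by linarith [hx.1])
          exact le_add_of_nonneg_right h8
        · have h1 : x - ts ≤ T₁ := by
            linarith [hx.2]
          have h9 : δ₂ * (x - ts) ≤ δ₂ * T₁ := mul_le_mul_of_nonneg_left h1 hδ₂pos.le
          calc αc + δ₀/2 + δ₂ * (x - ts) ≤ αc + δ₀/2 + δ₂ * T₁ := add_le_add_right h9 _
            _ = αp - η := by rw [hδ₂T₁]; ring
      have := hflow2 _ hmem
      linarith
  have hfinal := claimB2 T ⟨by rw [htsdef]; linarith, le_refl T⟩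
  have hTts : T - ts = T₁ := by rw [htsdef]; ring
  rw [hTts] at hfinal
  linarith [hδ₂T₁]

/-- Generation-time behavior of the bistable ODE flow at time
`μ⁻¹|log ε|`: the flow enters an `η`-neighborhood of `[α₋, α₊]`, and starting
points at distance `C_Y ε` above (resp. below) `α` are driven `η`-close to `α₊`
(resp. `α₋`). -/
theorem bistable_flow_generation_time
    (f : ℝ → ℝ) (αm αc αp : ℝ)
    (hf : ContDiff ℝ 2 f)
    (hαs : αm < αc ∧ αc < αp)
    (hzeros : ∀ s : ℝ, f s = 0 ↔ s = αm ∨ s = αc ∨ s = αp)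
    (hfm : deriv f αm < 0) (hfp : deriv f αp < 0) (hfc : 0 < deriv f αc)
    (hfbelow : ∀ s : ℝ, s < αm → 0 < f s) (hfabove : ∀ s : ℝ, αp < s → f s < 0)
    (Y : ℝ → ℝ → ℝ)
    (hY0 : ∀ ζ : ℝ, Y 0 ζ = ζ)
    (hYode : ∀ ζ : ℝ, ∀ τ ∈ Ici (0 : ℝ),
      HasDerivWithinAt (fun s => Y s ζ) (f (Y τ ζ)) (Ici 0) τ)
    (C0 : ℝ) (hC0 : 0 < C0) (hC0' : max |αm| |αp| < 2 * C0)
    (η : ℝ) (hη0 : 0 < η) (hη1 : η < min (αc - αm) (αp - αc)) :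
    ∃ CY > (0 : ℝ), ∃ ε₀ > (0 : ℝ),
      ∀ ε : ℝ, 0 < ε → ε < ε₀ → ∀ ζ ∈ Ioo (-(2 * C0)) (2 * C0),
        (αm - η ≤ Y ((deriv f αc)⁻¹ * |Real.log ε|) ζ ∧
          Y ((deriv f αc)⁻¹ * |Real.log ε|) ζ ≤ αp + η) ∧
        (αc + CY * ε ≤ ζ → αp - η ≤ Y ((deriv f αc)⁻¹ * |Real.log ε|) ζ) ∧
        (ζ ≤ αc - CY * ε → Y ((deriv f αc)⁻¹ * |Real.log ε|) ζ ≤ αm + η) := by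
  have hdf : Differentiable ℝ f := hf.differentiable two_ne_zero
  have hfαc : f αc = 0 := (hzeros αc).mpr (Or.inr (Or.inl rfl))
  -- reflected system
  set g : ℝ → ℝ := fun x => -f (-x) with hgdef
  have hg : ContDiff ℝ 2 g := (hf.comp contDiff_neg).neg
  have hgderiv : ∀ x : ℝ, HasDerivAt g (deriv f (-x)) x := by
    intro x
    have h1 : HasDerivAt (fun x : ℝ => f (-x)) (deriv f (-x) * (-1)) x :=
      (hdf (-x)).hasDerivAt.comp x (hasDerivAt_neg x)
    have h2 : HasDerivAt g (-(deriv f (-x) * (-1))) x := h1.neg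
    convert h2 using 1
    ring
  have hgderiv' : ∀ x : ℝ, deriv g x = deriv f (-x) := fun x => (hgderiv x).deriv
  have hgαc : g (-αc) = 0 := by simp [hgdef, neg_neg, hfαc]
  have hgc : 0 < deriv g (-αc) := by rw [hgderiv', neg_neg]; exact hfc
  have hgne : ∀ s : ℝ, -αc < s → s < -αm → g s ≠ 0 := by
    intro s h1 h2
    simp only [hgdef, neg_ne_zero]
    intro hcon
    rcases (hzeros (-s)).mp hcon with h | h | h
    · linarith
    · linarith
    · linarith [hαs.1, hαs.2]
  have hgabove : ∀ s : ℝ, -αm < s → g s < 0 := by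
    intro s hs
    have : -s < αm := by linarith
    simp only [hgdef, neg_neg, neg_lt_zero]
    exact hfbelow _ this
  set Z : ℝ → ℝ → ℝ := fun τ ζ => -Y τ (-ζ) with hZdef
  have hZ0 : ∀ ζ : ℝ, Z 0 ζ = ζ := by intro ζ; simp [hZdef, hY0]
  have hZode : ∀ ζ : ℝ, ∀ τ ∈ Ici (0:ℝ),
      HasDerivWithinAt (fun s => Z s ζ) (g (Z τ ζ)) (Ici 0) τ := by
    intro ζ τ hτ
    have h := (hYode (-ζ) τ hτ).neg
    simp only [hZdef, hgdef, neg_neg]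
    exact h
  obtain ⟨C₁, hC₁, E₁, hE₁, H₁⟩ := master_flow f αc αp hf hαs.2 hfαc hfc
    (fun s h1 h2 hcon => by
      rcases (hzeros s).mp hcon with h | h | h <;> [linarith [hαs.1]; linarith; linarith])
    hfabove Y hY0 hYode C0 hC0 η hη0 (lt_of_lt_of_le hη1 (min_le_right _ _))
  obtain ⟨C₂, hC₂, E₂, hE₂, H₂⟩ := master_flow g (-αc) (-αm) hg (by linarith [hαs.1])
    hgαc hgc hgne hgabove Z hZ0 hZode C0 hC0 η hη0
    (by rw [show -αm - -αc = αc - αm by ring]; exact lt_of_lt_of_le hη1 (min_le_left _ _))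
  rw [hgderiv', neg_neg] at H₂
  refine ⟨max C₁ C₂, lt_max_of_lt_left hC₁, min E₁ E₂, lt_min hE₁ hE₂, ?_⟩
  intro ε hε hεlt ζ hζ
  set T := (deriv f αc)⁻¹ * |Real.log ε| with hTdef
  have hζ' : -ζ ∈ Ioo (-(2*C0)) (2*C0) := by
    constructor <;> [linarith [hζ.2]; linarith [hζ.1]]
  have h₁ := H₁ ε hε (lt_of_lt_of_le hεlt (min_le_left _ _)) ζ hζ
  have h₂ := H₂ ε hε (lt_of_lt_of_le hεlt (min_le_right _ _)) (-ζ) hζ'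
  have hZval : Z T (-ζ) = -Y T ζ := by simp [hZdef]
  rw [hZval] at h₂
  refine ⟨⟨by linarith [h₂.1], h₁.1⟩, ?_, ?_⟩
  · intro hc
    exact h₁.2 (le_trans (by linarith [mul_le_mul_of_nonneg_right (le_max_left C₁ C₂) hε.le]) hc)
  · intro hc
    have h := h₂.2 (show -αc + C₂ * ε ≤ -ζ by
      linarith [mul_le_mul_of_nonneg_right (le_max_right C₁ C₂) hε.le])
    linarith
end

section
/- Existence and uniqueness of the standing wave for the nonlinear-diffusion Allen–Cahn equation. Assume in addition the balance condition ∫_{α_-}^{α_+} φ'(s) f(s) ds = 0. Then there exists a unique strictly increasing C^2 function U_0 : R → R solving (φ(U_0))''(z) + f(U_0(z)) = 0 for all z ∈ R, with U_0(z) → α_- as z → -∞, U_0(0) = α, and U_0(z) → α_+ as z → +∞. -/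
open MeasureTheory Real Set Filter

set_option maxHeartbeats 1000000

private lemma ev_pos_right {f : ℝ → ℝ} {a f' : ℝ} (hf : HasDerivAt f f' a)
    (ha : f a = 0) (h : 0 < f') : ∀ᶠ x in nhdsWithin a (Set.Ioi a), 0 < f x := by
  have hs := hasDerivAt_iff_tendsto_slope.1 hf
  have h1 : ∀ᶠ x in nhdsWithin a {a}ᶜ, 0 < slope f a x := hs.eventually (eventually_gt_nhds h)
  have h2 : ∀ᶠ x in nhdsWithin a (Set.Ioi a), 0 < slope f a x :=
    h1.filter_mono (nhdsWithin_mono a fun x hx => ne_of_gt hx)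
  filter_upwards [h2, self_mem_nhdsWithin] with x hx hx'
  have hxa : x - a ≠ 0 := sub_ne_zero.2 (ne_of_gt hx')
  have hfx : f x = slope f a x * (x - a) + f a := by
    rw [slope_def_field]; field_simp; ring
  rw [ha, add_zero] at hfx
  rw [hfx]; exact mul_pos hx (sub_pos.2 hx')

private lemma ev_neg_left {f : ℝ → ℝ} {a f' : ℝ} (hf : HasDerivAt f f' a)
    (ha : f a = 0) (h : 0 < f') : ∀ᶠ x in nhdsWithin a (Set.Iio a), f x < 0 := by
  have hs := hasDerivAt_iff_tendsto_slope.1 hf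
  have h1 : ∀ᶠ x in nhdsWithin a {a}ᶜ, 0 < slope f a x := hs.eventually (eventually_gt_nhds h)
  have h2 : ∀ᶠ x in nhdsWithin a (Set.Iio a), 0 < slope f a x :=
    h1.filter_mono (nhdsWithin_mono a fun x hx => ne_of_lt hx)
  filter_upwards [h2, self_mem_nhdsWithin] with x hx hx'
  have hxa : x - a ≠ 0 := sub_ne_zero.2 (ne_of_lt hx')
  have hfx : f x = slope f a x * (x - a) + f a := by
    rw [slope_def_field]; field_simp; ring
  rw [ha, add_zero] at hfx
  rw [hfx]; exact mul_neg_of_pos_of_neg hx (sub_neg.2 hx')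

private lemma mono_deriv_nonneg {V : ℝ → ℝ} (hV : Monotone V) (hVd : Differentiable ℝ V)
    (z : ℝ) : 0 ≤ deriv V z := by
  have hs := hasDerivAt_iff_tendsto_slope.1 (hVd z).hasDerivAt
  have hs' : Tendsto (slope V z) (nhdsWithin z (Set.Ioi z)) (nhds (deriv V z)) :=
    hs.mono_left (nhdsWithin_mono z fun x hx => ne_of_gt hx)
  refine ge_of_tendsto hs' ?_
  filter_upwards [self_mem_nhdsWithin] with x hx
  rw [slope_def_field]
  exact div_nonneg (sub_nonneg.2 (hV (le_of_lt hx))) (sub_nonneg.2 (le_of_lt hx))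

/-- Existence and uniqueness of the standing wave `U₀` solving
`(φ(U₀))'' + f(U₀) = 0` with `U₀(-∞) = α₋`, `U₀(0) = α`, `U₀(+∞) = α₊`,
under the balance condition `∫_{α₋}^{α₊} φ'(s) f(s) ds = 0`. -/
theorem standing_wave_exists_unique
    (f : ℝ → ℝ) (αm αc αp : ℝ)
    (hf : ContDiff ℝ 2 f)
    (hαs : αm < αc ∧ αc < αp)
    (hzeros : ∀ s : ℝ, f s = 0 ↔ s = αm ∨ s = αc ∨ s = αp)
    (hfm : deriv f αm < 0) (hfp : deriv f αp < 0) (hfc : 0 < deriv f αc)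
    (hfbelow : ∀ s : ℝ, s < αm → 0 < f s) (hfabove : ∀ s : ℝ, αp < s → f s < 0)
    (φ : ℝ → ℝ) (Cφ : ℝ) (hCφ : 0 < Cφ)
    (hφ : ContDiff ℝ 4 φ) (hφ' : ∀ s : ℝ, Cφ ≤ deriv φ s)
    (hbal : ∫ s in αm..αp, deriv φ s * f s = 0) :
    ∃! U0 : ℝ → ℝ,
      StrictMono U0 ∧ ContDiff ℝ 2 U0 ∧
      (∀ z : ℝ, deriv (deriv (fun y => φ (U0 y))) z + f (U0 z) = 0) ∧
      Tendsto U0 atBot (nhds αm) ∧ U0 0 = αc ∧ Tendsto U0 atTop (nhds αp) := by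
  obtain ⟨ham, hcp⟩ := hαs
  have hmp : αm < αp := ham.trans hcp
  have hfC : Continuous f := hf.continuous
  have hfD : Differentiable ℝ f := hf.differentiable (by norm_num)
  have hφ'CD : ContDiff ℝ 3 (deriv φ) :=
    ((contDiff_succ_iff_deriv (f := φ) (n := 3)).1 (by exact_mod_cast hφ)).2.2
  have hφ'C : Continuous (deriv φ) := hφ'CD.continuous
  have hφ''C : Continuous (deriv (deriv φ)) :=
    ((contDiff_succ_iff_deriv (f := deriv φ) (n := 2)).1 (by exact_mod_cast hφ'CD)).2.2.continuous
  have hφ'D : Differentiable ℝ (deriv φ) := hφ'CD.differentiable (by norm_num)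
  have hφD : Differentiable ℝ φ := hφ.differentiable (by norm_num)
  have hφ'pos : ∀ s, 0 < deriv φ s := fun s => lt_of_lt_of_le hCφ (hφ' s)
  have hφ'ne : ∀ s, deriv φ s ≠ 0 := fun s => (hφ'pos s).ne'
  have hfm0 : f αm = 0 := (hzeros αm).2 (Or.inl rfl)
  have hfc0 : f αc = 0 := (hzeros αc).2 (Or.inr (Or.inl rfl))
  have hfp0 : f αp = 0 := (hzeros αp).2 (Or.inr (Or.inr rfl))
  set k : ℝ → ℝ := fun s => deriv φ s * f s with hkdef
  have hkC : Continuous k := hφ'C.mul hfC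
  have hkD : Differentiable ℝ k := hφ'D.mul hfD
  have hkm : k αm = 0 := by simp [hkdef, hfm0]
  have hkp : k αp = 0 := by simp [hkdef, hfp0]
  set G : ℝ → ℝ := fun u => ∫ s in u..αp, k s with hGdef
  have hGd : ∀ u, HasDerivAt G (-k u) u := fun u =>
    intervalIntegral.integral_hasDerivAt_left (hkC.intervalIntegrable _ _)
      (hkC.stronglyMeasurableAtFilter _ _) hkC.continuousAt
  have hGC : Continuous G := by
    rw [continuous_iff_continuousAt]; exact fun u => (hGd u).continuousAt
  have hGp0 : G αp = 0 := intervalIntegral.integral_same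
  have hGm0 : G αm = 0 := hbal
  have hGneg : ∀ u, G u = -∫ s in αm..u, k s := by
    intro u
    have h : (∫ s in αm..u, k s) + G u = G αm :=
      intervalIntegral.integral_add_adjacent_intervals
        (hkC.intervalIntegrable αm u) (hkC.intervalIntegrable u αp)
    rw [hGm0] at h
    linarith
  -- sign of f on the two subintervals
  have hfneg : ∀ s ∈ Ioo αm αc, f s < 0 := by
    intro s hs
    rcases lt_trichotomy (f s) 0 with h | h | h
    · exact h
    · exfalso
      rcases (hzeros s).1 h with rfl | rfl | rfl
      · exact lt_irrefl _ hs.1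
      · exact lt_irrefl _ hs.2
      · exact lt_irrefl _ (hs.2.trans hcp)
    · exfalso
      have hev := ev_neg_left (hfD αc).hasDerivAt hfc0 hfc
      have hev2 : ∀ᶠ x in nhdsWithin αc (Set.Iio αc), (f x < 0 ∧ s < x) ∧ x < αc :=
        (hev.and (eventually_nhdsWithin_of_eventually_nhds (eventually_gt_nhds hs.2))).and
          self_mem_nhdsWithin
      obtain ⟨t, ⟨hft, hst⟩, htc⟩ := hev2.exists
      obtain ⟨c, hc, hc0⟩ := intermediate_value_Ioo' (le_of_lt hst)
        hfC.continuousOn (show (0:ℝ) ∈ Ioo (f t) (f s) from ⟨hft, h⟩)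
      rcases (hzeros c).1 hc0 with rfl | rfl | rfl
      · exact lt_irrefl _ (hs.1.trans hc.1)
      · exact lt_irrefl _ (hc.2.trans htc)
      · exact lt_irrefl _ ((hc.2.trans htc).trans hcp)
  have hfpos : ∀ s ∈ Ioo αc αp, 0 < f s := by
    intro s hs
    rcases lt_trichotomy (f s) 0 with h | h | h
    · exfalso
      have hev := ev_pos_right (hfD αc).hasDerivAt hfc0 hfc
      have hev2 : ∀ᶠ x in nhdsWithin αc (Set.Ioi αc), (0 < f x ∧ x < s) ∧ αc < x :=
        (hev.and (eventually_nhdsWithin_of_eventually_nhds (eventually_lt_nhds hs.1))).and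
          self_mem_nhdsWithin
      obtain ⟨t, ⟨hft, hts⟩, hct⟩ := hev2.exists
      obtain ⟨c, hc, hc0⟩ := intermediate_value_Ioo' (le_of_lt hts)
        hfC.continuousOn (show (0:ℝ) ∈ Ioo (f s) (f t) from ⟨h, hft⟩)
      rcases (hzeros c).1 hc0 with rfl | rfl | rfl
      · exact lt_irrefl _ ((ham.trans hct).trans hc.1)
      · exact lt_irrefl _ (hct.trans hc.1)
      · exact lt_irrefl _ (hc.2.trans hs.2)
    · exfalso
      rcases (hzeros s).1 h with rfl | rfl | rfl
      · exact lt_irrefl _ (ham.trans hs.1)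
      · exact lt_irrefl _ hs.1
      · exact lt_irrefl _ hs.2
    · exact h
  -- positivity of G on the open interval
  have hGpos : ∀ u ∈ Ioo αm αp, 0 < G u := by
    intro u hu
    rcases le_or_gt αc u with hcu | huc
    · refine intervalIntegral.intervalIntegral_pos_of_pos_on
        (hkC.intervalIntegrable u αp) ?_ hu.2
      intro x hx
      exact mul_pos (hφ'pos x) (hfpos x ⟨lt_of_le_of_lt hcu hx.1, hx.2⟩)
    · rw [hGneg u]
      have h : 0 < ∫ s in αm..u, -k s := by
        refine intervalIntegral.intervalIntegral_pos_of_pos_on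
          (hkC.neg.intervalIntegrable αm u) ?_ hu.1
        intro x hx
        have hfx := hfneg x ⟨hx.1, hx.2.trans huc⟩
        simp only [hkdef]
        exact neg_pos.2 (mul_neg_of_pos_of_neg (hφ'pos x) hfx)
      rw [intervalIntegral.integral_neg] at h
      linarith
  -- quadratic decay bounds near the endpoints
  have hkCD : ContDiff ℝ 1 k := (hφ'CD.of_le (by norm_num)).mul (hf.of_le (by norm_num))
  have hk'C : Continuous (deriv k) := (contDiff_one_iff_deriv.1 hkCD).2
  obtain ⟨L0, hL0⟩ := (isCompact_Icc (a := αm) (b := αp)).exists_bound_of_continuousOn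
    hk'C.continuousOn
  set L : ℝ := max L0 1 with hLdef
  have hLpos : 0 < L := lt_of_lt_of_le one_pos (le_max_right _ _)
  have hkLip : ∀ x ∈ Icc αm αp, ∀ y ∈ Icc αm αp, ‖k y - k x‖ ≤ L * ‖y - x‖ := by
    intro x hx y hy
    exact Convex.norm_image_sub_le_of_norm_deriv_le (fun t _ => (hkD t))
      (fun t ht => le_trans (hL0 t ht) (le_max_left _ _)) (convex_Icc _ _) hx hy
  have hkb1 : ∀ t ∈ Icc αm αp, k t ≤ L * (αp - t) := by
    intro t ht
    have h1 := hkLip αp (right_mem_Icc.2 hmp.le) t ht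
    rw [hkp, sub_zero, Real.norm_eq_abs, Real.norm_eq_abs] at h1
    rw [abs_sub_comm, abs_of_nonneg (sub_nonneg.2 ht.2)] at h1
    exact le_trans (le_abs_self _) h1
  have hkb2 : ∀ t ∈ Icc αm αp, -k t ≤ L * (t - αm) := by
    intro t ht
    have h1 := hkLip αm (left_mem_Icc.2 hmp.le) t ht
    rw [hkm, sub_zero, Real.norm_eq_abs, Real.norm_eq_abs] at h1
    rw [abs_of_nonneg (sub_nonneg.2 ht.1)] at h1
    exact le_trans (neg_le_abs _) h1
  have hGq1 : ∀ s ∈ Icc αc αp, G s ≤ L * (αp - s)^2 := by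
    intro s hs
    have h1 : G s ≤ ∫ t in s..αp, L * (αp - t) := by
      refine intervalIntegral.integral_mono_on hs.2 (hkC.intervalIntegrable _ _)
        (Continuous.intervalIntegrable (continuous_const.mul (continuous_const.sub continuous_id)) _ _) ?_
      intro t ht
      exact hkb1 t ⟨le_trans (le_trans ham.le hs.1) ht.1, ht.2⟩
    have h2 : (∫ t in s..αp, L * (αp - t)) = L * ((αp - s)^2/2) := by
      rw [intervalIntegral.integral_const_mul,
        intervalIntegral.integral_sub (intervalIntegrable_const) intervalIntegral.intervalIntegrable_id,
        intervalIntegral.integral_const, integral_id, smul_eq_mul]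
      ring
    nlinarith [sq_nonneg (αp - s), h1, h2]
  have hGq2 : ∀ s ∈ Icc αm αc, G s ≤ L * (s - αm)^2 := by
    intro s hs
    rw [hGneg s, ← intervalIntegral.integral_neg]
    have h1 : (∫ t in αm..s, -k t) ≤ ∫ t in αm..s, L * (t - αm) := by
      refine intervalIntegral.integral_mono_on hs.1 (hkC.neg.intervalIntegrable _ _)
        (Continuous.intervalIntegrable (continuous_const.mul (continuous_id.sub continuous_const)) _ _) ?_
      intro t ht
      exact hkb2 t ⟨ht.1, le_trans ht.2 (le_trans hs.2 hcp.le)⟩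
    have h2 : (∫ t in αm..s, L * (t - αm)) = L * ((s - αm)^2/2) := by
      rw [intervalIntegral.integral_const_mul,
        intervalIntegral.integral_sub intervalIntegral.intervalIntegrable_id (intervalIntegrable_const),
        intervalIntegral.integral_const, integral_id, smul_eq_mul]
      ring
    nlinarith [sq_nonneg (s - αm), h1, h2]
  -- the time map T and its inverse
  set ψ : ℝ → ℝ := fun s => deriv φ s / Real.sqrt (2 * G s) with hψdef
  have hsqrtpos : ∀ u ∈ Ioo αm αp, 0 < Real.sqrt (2 * G u) := fun u hu =>
    Real.sqrt_pos.2 (by linarith [hGpos u hu])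
  have hψC : ContinuousOn ψ (Ioo αm αp) :=
    hφ'C.continuousOn.div
      (Real.continuous_sqrt.comp (continuous_const.mul hGC)).continuousOn
      fun u hu => (hsqrtpos u hu).ne'
  have hψpos : ∀ u ∈ Ioo αm αp, 0 < ψ u := fun u hu => div_pos (hφ'pos u) (hsqrtpos u hu)
  have hψint : ∀ u ∈ Ioo αm αp, ∀ v ∈ Ioo αm αp, IntervalIntegrable ψ volume u v :=
    fun u hu v hv => (hψC.mono ((ordConnected_Ioo).uIcc_subset hu hv)).intervalIntegrable
  have hcmem : αc ∈ Ioo αm αp := ⟨ham, hcp⟩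
  set T : ℝ → ℝ := fun u => ∫ s in αc..u, ψ s with hTdef
  have hTd : ∀ u ∈ Ioo αm αp, HasDerivAt T (ψ u) u := fun u hu =>
    intervalIntegral.integral_hasDerivAt_right (hψint αc hcmem u hu)
      (hψC.stronglyMeasurableAtFilter isOpen_Ioo u hu)
      (hψC.continuousAt (isOpen_Ioo.mem_nhds hu))
  have hTadd : ∀ u ∈ Ioo αm αp, ∀ v ∈ Ioo αm αp, T u + (∫ s in u..v, ψ s) = T v :=
    fun u hu v hv =>
      intervalIntegral.integral_add_adjacent_intervals (hψint αc hcmem u hu) (hψint u hu v hv)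
  have hTmono : StrictMonoOn T (Ioo αm αp) := by
    intro u hu v hv huv
    have h := hTadd u hu v hv
    have h2 : 0 < ∫ s in u..v, ψ s :=
      intervalIntegral.intervalIntegral_pos_of_pos_on (hψint u hu v hv)
        (fun x hx => hψpos x ⟨hu.1.trans hx.1, hx.2.trans hv.2⟩) huv
    linarith
  -- lower bounds for ψ near the endpoints
  set c : ℝ := Cφ / Real.sqrt (2 * L) with hcdef
  have hsqrt2L : 0 < Real.sqrt (2 * L) := Real.sqrt_pos.2 (by linarith)
  have hcpos : 0 < c := div_pos hCφ hsqrt2L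
  have hψ_lb1 : ∀ s ∈ Ico αc αp, c / (αp - s) ≤ ψ s := by
    intro s hs
    have hmem : s ∈ Ioo αm αp := ⟨ham.trans_le hs.1, hs.2⟩
    have hps : (0:ℝ) ≤ αp - s := by linarith [hs.2]
    have hub : Real.sqrt (2 * G s) ≤ Real.sqrt (2*L) * (αp - s) := by
      calc Real.sqrt (2 * G s) ≤ Real.sqrt (2 * L * (αp - s)^2) :=
            Real.sqrt_le_sqrt (by nlinarith [hGq1 s ⟨hs.1, hs.2.le⟩])
        _ = Real.sqrt (2*L) * (αp - s) := by
            rw [Real.sqrt_mul (by linarith), Real.sqrt_sq hps]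
    have heq : c / (αp - s) = Cφ / (Real.sqrt (2*L) * (αp - s)) := by
      rw [hcdef, div_div]
    rw [heq, hψdef]
    exact div_le_div₀ (hφ'pos s).le (hφ' s) (hsqrtpos s hmem) hub
  have hψ_lb2 : ∀ s ∈ Ioc αm αc, c / (s - αm) ≤ ψ s := by
    intro s hs
    have hmem : s ∈ Ioo αm αp := ⟨hs.1, lt_of_le_of_lt hs.2 hcp⟩
    have hps : (0:ℝ) ≤ s - αm := by linarith [hs.1]
    have hub : Real.sqrt (2 * G s) ≤ Real.sqrt (2*L) * (s - αm) := by
      calc Real.sqrt (2 * G s) ≤ Real.sqrt (2 * L * (s - αm)^2) :=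
            Real.sqrt_le_sqrt (by nlinarith [hGq2 s ⟨hs.1.le, hs.2⟩])
        _ = Real.sqrt (2*L) * (s - αm) := by
            rw [Real.sqrt_mul (by linarith), Real.sqrt_sq hps]
    have heq : c / (s - αm) = Cφ / (Real.sqrt (2*L) * (s - αm)) := by
      rw [hcdef, div_div]
    rw [heq, hψdef]
    exact div_le_div₀ (hφ'pos s).le (hφ' s) (hsqrtpos s hmem) hub
  -- divergence of T at the right endpoint
  have hTtop : ∀ M : ℝ, ∃ u ∈ Ioo αm αp, M < T u := by
    intro M
    set δ : ℝ := min ((αp - αc)/2) (Real.exp (Real.log (αp - αc) - (M+1)/c)) with hδdef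
    have hδ1 : δ ≤ (αp - αc)/2 := min_le_left _ _
    have hδpos : 0 < δ := lt_min (by linarith) (Real.exp_pos _)
    set u : ℝ := αp - δ with hudef
    have hu1 : αc < u := by simp only [hudef]; linarith
    have humem : u ∈ Ioo αm αp := ⟨ham.trans hu1, by simp only [hudef]; linarith⟩
    refine ⟨u, humem, ?_⟩
    have hlow_cont : ContinuousOn (fun s => c / (αp - s)) (Icc αc u) :=
      continuousOn_const.div ((continuous_const.sub continuous_id).continuousOn)
        (fun x hx => sub_ne_zero.2 (ne_of_gt (lt_of_le_of_lt hx.2 humem.2)))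
    have hbound : (∫ s in αc..u, c / (αp - s)) ≤ T u := by
      refine intervalIntegral.integral_mono_on hu1.le
        (ContinuousOn.intervalIntegrable (by rwa [uIcc_of_le hu1.le]))
        (hψint αc hcmem u humem) ?_
      intro x hx
      exact hψ_lb1 x ⟨hx.1, lt_of_le_of_lt hx.2 humem.2⟩
    have hcalc : (∫ s in αc..u, c / (αp - s)) = c * (Real.log (αp - αc) - Real.log δ) := by
      simp_rw [div_eq_mul_inv]
      rw [intervalIntegral.integral_const_mul]
      rw [show (∫ s in αc..u, (αp - s)⁻¹) = ∫ x in (αp - u)..(αp - αc), x⁻¹ from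
        intervalIntegral.integral_comp_sub_left (fun x => x⁻¹) αp]
      have hpu : αp - u = δ := by simp [hudef]
      rw [_root_.integral_inv (notMem_uIcc_of_lt (by linarith) (by linarith))]
      rw [Real.log_div (by linarith) (by rw [hpu]; linarith), hpu]
    have hlogδ : Real.log δ ≤ Real.log (αp - αc) - (M+1)/c := by
      have h := Real.log_le_log hδpos (min_le_right ((αp - αc)/2) _)
      rwa [Real.log_exp] at h
    have hfinal : M + 1 ≤ c * (Real.log (αp - αc) - Real.log δ) := by
      have h2 : (M+1)/c ≤ Real.log (αp - αc) - Real.log δ := by linarith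
      calc M + 1 = c * ((M+1)/c) := by field_simp
        _ ≤ c * (Real.log (αp - αc) - Real.log δ) :=
            mul_le_mul_of_nonneg_left h2 hcpos.le
    linarith [hbound, hcalc ▸ hfinal]
  -- divergence of T at the left endpoint
  have hTbot : ∀ M : ℝ, ∃ u ∈ Ioo αm αp, T u < M := by
    intro M
    set δ : ℝ := min ((αc - αm)/2) (Real.exp (Real.log (αc - αm) - (1-M)/c)) with hδdef
    have hδ1 : δ ≤ (αc - αm)/2 := min_le_left _ _
    have hδpos : 0 < δ := lt_min (by linarith) (Real.exp_pos _)
    set u : ℝ := αm + δ with hudef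
    have hu1 : u < αc := by simp only [hudef]; linarith
    have humem : u ∈ Ioo αm αp := ⟨by simp only [hudef]; linarith, hu1.trans hcp⟩
    refine ⟨u, humem, ?_⟩
    have hbound : (∫ s in u..αc, c / (s - αm)) ≤ ∫ s in u..αc, ψ s := by
      refine intervalIntegral.integral_mono_on hu1.le
        (ContinuousOn.intervalIntegrable ?_)
        (hψint u humem αc hcmem) ?_
      · rw [uIcc_of_le hu1.le]
        exact continuousOn_const.div ((continuous_id.sub continuous_const).continuousOn)
          (fun x hx => sub_ne_zero.2 (ne_of_gt (lt_of_lt_of_le humem.1 hx.1)))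
      · intro x hx
        exact hψ_lb2 x ⟨lt_of_lt_of_le humem.1 hx.1, hx.2.trans (le_refl αc)⟩
    have hTu : T u = -∫ s in u..αc, ψ s := by
      rw [hTdef]
      simp only []
      rw [← intervalIntegral.integral_symm]
    have hcalc : (∫ s in u..αc, c / (s - αm)) = c * (Real.log (αc - αm) - Real.log δ) := by
      simp_rw [div_eq_mul_inv]
      rw [intervalIntegral.integral_const_mul]
      rw [show (∫ s in u..αc, (s - αm)⁻¹) = ∫ x in (u - αm)..(αc - αm), x⁻¹ from
        intervalIntegral.integral_comp_sub_right (fun x => x⁻¹) αm]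
      have hpu : u - αm = δ := by simp [hudef]
      rw [_root_.integral_inv (notMem_uIcc_of_lt (by rw [hpu]; linarith) (by linarith))]
      rw [Real.log_div (by linarith) (by rw [hpu]; linarith), hpu]
    have hlogδ : Real.log δ ≤ Real.log (αc - αm) - (1-M)/c := by
      have h := Real.log_le_log hδpos (min_le_right ((αc - αm)/2) _)
      rwa [Real.log_exp] at h
    have hfinal : 1 - M ≤ c * (Real.log (αc - αm) - Real.log δ) := by
      have h2 : (1-M)/c ≤ Real.log (αc - αm) - Real.log δ := by linarith
      calc 1 - M = c * ((1-M)/c) := by field_simp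
        _ ≤ c * (Real.log (αc - αm) - Real.log δ) :=
            mul_le_mul_of_nonneg_left h2 hcpos.le
    have := hcalc ▸ hfinal
    rw [hTu]
    linarith [hbound]
  -- defining the inverse U0 of T
  have hTcont : ∀ a b, a ∈ Ioo αm αp → b ∈ Ioo αm αp → ContinuousOn T (Icc a b) :=
    fun a b hA hB => continuousOn_of_forall_continuousAt fun x hx =>
      (hTd x ⟨lt_of_lt_of_le hA.1 hx.1, lt_of_le_of_lt hx.2 hB.2⟩).continuousAt
  have hex : ∀ z : ℝ, ∃ u, u ∈ Ioo αm αp ∧ T u = z := by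
    intro z
    obtain ⟨a, hA, haz⟩ := hTbot z
    obtain ⟨b, hB, hbz⟩ := hTtop z
    have hab : a < b := by
      by_contra hcon
      push_neg at hcon
      have := hTmono.monotoneOn hB hA hcon
      linarith
    obtain ⟨u, hu, hTu⟩ := intermediate_value_Icc hab.le (hTcont a b hA hB) ⟨haz.le, hbz.le⟩
    exact ⟨u, ⟨lt_of_lt_of_le hA.1 hu.1, lt_of_le_of_lt hu.2 hB.2⟩, hTu⟩
  choose U0 hU0mem hTU0 using hex
  have huniq : ∀ u ∈ Ioo αm αp, U0 (T u) = u := fun u hu =>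
    hTmono.injOn (hU0mem (T u)) hu (hTU0 (T u))
  have hU0mono : StrictMono U0 := by
    intro z w hzw
    rcases lt_trichotomy (U0 z) (U0 w) with h | h | h
    · exact h
    · exfalso
      have h1 := hTU0 z
      rw [h, hTU0 w] at h1
      exact lt_irrefl _ (h1 ▸ hzw)
    · exfalso
      have h2 := hTmono (hU0mem w) (hU0mem z) h
      rw [hTU0 z, hTU0 w] at h2
      linarith
  have hrange : range U0 = Ioo αm αp := by
    apply Subset.antisymm
    · rintro _ ⟨z, rfl⟩; exact hU0mem z
    · intro u hu; exact ⟨T u, huniq u hu⟩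
  have hU0cont : Continuous U0 := by
    rw [continuous_iff_continuousAt]
    intro x
    apply continuousAt_of_monotoneOn_of_image_mem_nhds (fun a _ b _ h => hU0mono.monotone h)
      univ_mem
    rw [image_univ, hrange]
    exact isOpen_Ioo.mem_nhds (hU0mem x)
  set H : ℝ → ℝ := fun u => Real.sqrt (2 * G u) / deriv φ u with hHdef
  have hU0d : ∀ z, HasDerivAt U0 (H (U0 z)) z := by
    intro z
    have h := HasDerivAt.of_local_left_inverse hU0cont.continuousAt
      (hTd (U0 z) (hU0mem z)) (ne_of_gt (hψpos _ (hU0mem z)))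
      (Eventually.of_forall hTU0)
    have heq : (ψ (U0 z))⁻¹ = H (U0 z) := by
      rw [hψdef, hHdef]
      simp only []
      rw [inv_div]
    rwa [heq] at h
  have hU0diff : Differentiable ℝ U0 := fun z => (hU0d z).differentiableAt
  -- the first derivative of φ ∘ U0
  have hφU0d : ∀ z, HasDerivAt (fun y => φ (U0 y)) (Real.sqrt (2 * G (U0 z))) z := by
    intro z
    have h := (hφD (U0 z)).hasDerivAt.comp z (hU0d z)
    have heq : deriv φ (U0 z) * H (U0 z) = Real.sqrt (2 * G (U0 z)) := by
      simp only [hHdef]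
      rw [mul_div_cancel₀ _ (hφ'ne _)]
    rwa [heq] at h
  have hderiv1 : deriv (fun y => φ (U0 y)) = fun z => Real.sqrt (2 * G (U0 z)) :=
    funext fun z => (hφU0d z).deriv
  have hsqrtGd : ∀ u ∈ Ioo αm αp, HasDerivAt (fun v => Real.sqrt (2 * G v))
      (-k u / Real.sqrt (2 * G u)) u := by
    intro u hu
    have h1 : HasDerivAt (fun v => 2 * G v) (2 * -k u) u := (hGd u).const_mul 2
    have h2 := (Real.hasDerivAt_sqrt (by linarith [hGpos u hu] : 2 * G u ≠ 0)).comp u h1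
    have heq : 1 / (2 * Real.sqrt (2 * G u)) * (2 * -k u) = -k u / Real.sqrt (2 * G u) := by
      have := (hsqrtpos u hu).ne'
      field_simp
    rwa [heq] at h2
  have hODE : ∀ z, deriv (deriv (fun y => φ (U0 y))) z + f (U0 z) = 0 := by
    intro z
    rw [hderiv1]
    have h := (hsqrtGd (U0 z) (hU0mem z)).comp z (hU0d z)
    have key : ∀ a p s : ℝ, s ≠ 0 → p ≠ 0 → -(p * a) / s * (s / p) = -a := by
      intro a p s hs hp
      field_simp
    have hval : -k (U0 z) / Real.sqrt (2 * G (U0 z)) * H (U0 z) = -f (U0 z) := by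
      have hs := (hsqrtpos _ (hU0mem z)).ne'
      have hp := hφ'ne (U0 z)
      simp only [hHdef, hkdef]
      exact key (f (U0 z)) (deriv φ (U0 z)) _ hs hp
    rw [hval] at h
    have hd2 : deriv (fun z => Real.sqrt (2 * G (U0 z))) z = -f (U0 z) := h.deriv
    rw [hd2]
    ring
  -- second derivative data for U0
  have hderivU0 : deriv U0 = fun z => H (U0 z) := funext fun z => (hU0d z).deriv
  set H' : ℝ → ℝ := fun u => (-k u / Real.sqrt (2 * G u) * deriv φ u -
      Real.sqrt (2 * G u) * deriv (deriv φ) u) / (deriv φ u)^2 with hH'def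
  have hHd : ∀ u ∈ Ioo αm αp, HasDerivAt H (H' u) u := fun u hu =>
    (hsqrtGd u hu).div (hφ'D u).hasDerivAt (hφ'ne u)
  have hdU0d : ∀ z, HasDerivAt (deriv U0) (H' (U0 z) * H (U0 z)) z := by
    intro z
    rw [hderivU0]
    exact (hHd (U0 z) (hU0mem z)).comp z (hU0d z)
  have hsqrtGC : Continuous (fun u => Real.sqrt (2 * G u)) :=
    Real.continuous_sqrt.comp (continuous_const.mul hGC)
  have hHcont : ContinuousOn H (Ioo αm αp) :=
    hsqrtGC.continuousOn.div hφ'C.continuousOn fun u _ => hφ'ne u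
  have hH'cont : ContinuousOn H' (Ioo αm αp) := by
    apply ContinuousOn.div
    · apply ContinuousOn.sub
      · exact ((hkC.neg.continuousOn.div hsqrtGC.continuousOn
          fun u hu => (hsqrtpos u hu).ne').mul hφ'C.continuousOn)
      · exact hsqrtGC.continuousOn.mul hφ''C.continuousOn
    · exact (hφ'C.pow 2).continuousOn
    · intro u _
      exact pow_ne_zero 2 (hφ'ne u)
  have hC2 : ContDiff ℝ 2 U0 := by
    rw [show (2 : WithTop ℕ∞) = 1 + 1 from rfl, contDiff_succ_iff_deriv]
    refine ⟨hU0diff, by simp, ?_⟩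
    rw [contDiff_one_iff_deriv]
    refine ⟨fun z => (hdU0d z).differentiableAt, ?_⟩
    have hdd : deriv (deriv U0) = fun z => H' (U0 z) * H (U0 z) :=
      funext fun z => (hdU0d z).deriv
    rw [hdd]
    exact (hH'cont.comp_continuous hU0cont fun z => hU0mem z).mul
      (hHcont.comp_continuous hU0cont fun z => hU0mem z)
  -- limits of U0
  have htop : Tendsto U0 atTop (nhds αp) := by
    have hbdd : BddAbove (range U0) := by rw [hrange]; exact bddAbove_Ioo
    have h := tendsto_atTop_ciSup hU0mono.monotone hbdd
    have heq : (⨆ z, U0 z) = αp := by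
      rw [iSup]
      rw [show range U0 = Ioo αm αp from hrange]
      exact csSup_Ioo hmp
    rwa [heq] at h
  have hbot : Tendsto U0 atBot (nhds αm) := by
    have hbdd : BddBelow (range U0) := by rw [hrange]; exact bddBelow_Ioo
    have h := tendsto_atBot_ciInf hU0mono.monotone hbdd
    have heq : (⨅ z, U0 z) = αm := by
      rw [iInf]
      rw [show range U0 = Ioo αm αp from hrange]
      exact csInf_Ioo hmp
    rwa [heq] at h
  have hzeroval : U0 0 = αc := by
    have hTc : T αc = 0 := intervalIntegral.integral_same
    rw [← hTc]
    exact huniq αc hcmem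
  -- assemble existence; prove uniqueness
  refine ⟨U0, ⟨hU0mono, hC2, hODE, hbot, hzeroval, htop⟩, ?_⟩
  rintro V ⟨Vmono, VC2, Vode, Vbot, V0, Vtop⟩
  have VD : Differentiable ℝ V := VC2.differentiable (by norm_num)
  have hVub : ∀ z, V z < αp := by
    intro z
    have h1 : V (z+1) ≤ αp := by
      refine ge_of_tendsto Vtop ?_
      filter_upwards [eventually_ge_atTop (z+1)] with y hy
      exact Vmono.monotone hy
    linarith [Vmono (show z < z + 1 by linarith)]
  have hVlb : ∀ z, αm < V z := by
    intro z
    have h1 : αm ≤ V (z-1) := by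
      refine le_of_tendsto Vbot ?_
      filter_upwards [eventually_le_atBot (z-1)] with y hy
      exact Vmono.monotone hy
    linarith [Vmono (show z - 1 < z by linarith)]
  have hVmem : ∀ z, V z ∈ Ioo αm αp := fun z => ⟨hVlb z, hVub z⟩
  have hWd : ∀ z, HasDerivAt (fun y => φ (V y)) (deriv φ (V z) * deriv V z) z :=
    fun z => (hφD (V z)).hasDerivAt.comp z (VD z).hasDerivAt
  have hderivW : deriv (fun y => φ (V y)) = fun z => deriv φ (V z) * deriv V z :=
    funext fun z => (hWd z).deriv
  have hVd0 : ∀ z, 0 ≤ deriv V z := mono_deriv_nonneg Vmono.monotone VD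
  have hW'nn : ∀ z, 0 ≤ deriv (fun y => φ (V y)) z := by
    intro z
    rw [hderivW]
    exact mul_nonneg (hφ'pos _).le (hVd0 z)
  have hWC2 : ContDiff ℝ 2 (fun y => φ (V y)) := (hφ.of_le (by norm_num)).comp VC2
  have hW'diff : Differentiable ℝ (deriv (fun y => φ (V y))) := by
    have h := (contDiff_succ_iff_deriv (f := fun y => φ (V y)) (n := 1)).1
      (by exact_mod_cast hWC2)
    exact h.2.2.differentiable (by norm_num)
  have hW'' : ∀ z, deriv (deriv (fun y => φ (V y))) z = - f (V z) := fun z => by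
    linarith [Vode z]
  set E : ℝ → ℝ := fun z => deriv (fun y => φ (V y)) z * deriv (fun y => φ (V y)) z -
    2 * G (V z) with hEdef
  have hEd : ∀ z, HasDerivAt E 0 z := by
    intro z
    have h1 : HasDerivAt (deriv (fun y => φ (V y))) (-f (V z)) z := by
      have h := (hW'diff z).hasDerivAt
      rwa [hW'' z] at h
    have h2 : HasDerivAt (fun y => G (V y)) (-k (V z) * deriv V z) z :=
      (hGd (V z)).comp z (VD z).hasDerivAt
    have h3 := (h1.mul h1).sub (h2.const_mul 2)
    have heq : -f (V z) * deriv (fun y => φ (V y)) z + deriv (fun y => φ (V y)) z * -f (V z) -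
        2 * (-k (V z) * deriv V z) = 0 := by
      rw [hderivW, hkdef]
      simp only []
      ring
    rwa [heq] at h3
  have hEconst : ∀ z, E z = E 0 := fun z =>
    is_const_of_deriv_eq_zero (fun w => (hEd w).differentiableAt) (fun w => (hEd w).deriv) z 0
  have hGV : Tendsto (fun z => G (V z)) atTop (nhds 0) := by
    have h := (hGC.continuousAt (x := αp)).tendsto.comp Vtop
    rwa [hGp0] at h
  have hW'sq : ∀ z, deriv (fun y => φ (V y)) z * deriv (fun y => φ (V y)) z =
      E 0 + 2 * G (V z) := fun z => by
    have h := hEconst z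
    simp only [hEdef] at h ⊢
    linarith
  have hlim : Tendsto (fun z => deriv (fun y => φ (V y)) z * deriv (fun y => φ (V y)) z)
      atTop (nhds (E 0)) := by
    have h : Tendsto (fun z => E 0 + 2 * G (V z)) atTop (nhds (E 0 + 2 * 0)) :=
      tendsto_const_nhds.add (tendsto_const_nhds.mul hGV)
    rw [show E 0 + 2 * 0 = E 0 by ring] at h
    exact h.congr fun z => (hW'sq z).symm
  have hE0nn : 0 ≤ E 0 := ge_of_tendsto hlim (Eventually.of_forall fun z => mul_self_nonneg _)
  have hE0np : E 0 ≤ 0 := by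
    by_contra hcon
    push_neg at hcon
    have hWt : Tendsto (fun z => deriv (fun y => φ (V y)) z) atTop
        (nhds (Real.sqrt (E 0))) := by
      have h := (Real.continuous_sqrt.continuousAt.tendsto).comp hlim
      refine h.congr fun z => ?_
      exact Real.sqrt_mul_self (hW'nn z)
    have hb : 0 < Real.sqrt (E 0) := Real.sqrt_pos.2 hcon
    set b : ℝ := Real.sqrt (E 0) / 2 with hbdef
    have hbpos : 0 < b := by positivity
    have hev : ∀ᶠ z in atTop, b < deriv (fun y => φ (V y)) z :=
      hWt.eventually (eventually_gt_nhds (by rw [hbdef]; linarith))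
    obtain ⟨z0, hz0⟩ := eventually_atTop.1 hev
    have hWcont : Continuous (fun y => φ (V y)) := hφD.continuous.comp VD.continuous
    have hcont2 : Continuous (fun z => φ (V z) - b * z) :=
      hWcont.sub (continuous_const.mul continuous_id')
    have hdiff2 : ∀ x, HasDerivAt (fun z => φ (V z) - b * z)
        (deriv φ (V x) * deriv V x - b) x := by
      intro x
      have h := (hWd x).sub ((hasDerivAt_id x).const_mul b)
      rw [mul_one] at h
      exact h
    have hmono2 : MonotoneOn (fun z => φ (V z) - b * z) (Ici z0) := by
      refine monotoneOn_of_deriv_nonneg (convex_Ici z0) hcont2.continuousOn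
        (fun x _ => (hdiff2 x).differentiableAt.differentiableWithinAt) ?_
      intro x hx
      rw [interior_Ici] at hx
      rw [(hdiff2 x).deriv]
      have h5 := hz0 x (le_of_lt hx)
      simp only [hderivW] at h5
      linarith
    have hφmono : StrictMono φ := strictMono_of_deriv_pos hφ'pos
    have hWub : ∀ z, φ (V z) < φ αp := fun z => hφmono (hVub z)
    set z1 : ℝ := max z0 ((φ αp - (φ (V z0) - b * z0))/b) with hz1def
    have hz1ge : z0 ≤ z1 := le_max_left _ _
    have h1 : φ (V z0) - b * z0 ≤ φ (V z1) - b * z1 :=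
      hmono2 self_mem_Ici (mem_Ici.2 hz1ge) hz1ge
    have h2 : (φ αp - (φ (V z0) - b * z0))/b ≤ z1 := le_max_right _ _
    have h3 : φ αp - (φ (V z0) - b * z0) ≤ b * z1 := by
      rw [div_le_iff₀ hbpos] at h2
      linarith
    have h4 := hWub z1
    linarith
  have hE00 : E 0 = 0 := le_antisymm hE0np hE0nn
  have hW'eq : ∀ z, deriv (fun y => φ (V y)) z = Real.sqrt (2 * G (V z)) := by
    intro z
    have h1 : deriv (fun y => φ (V y)) z * deriv (fun y => φ (V y)) z = 2 * G (V z) := by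
      rw [hW'sq z, hE00]; ring
    calc deriv (fun y => φ (V y)) z
        = Real.sqrt (deriv (fun y => φ (V y)) z * deriv (fun y => φ (V y)) z) :=
          (Real.sqrt_mul_self (hW'nn z)).symm
      _ = Real.sqrt (2 * G (V z)) := by rw [h1]
  have hTVd : ∀ z, HasDerivAt (fun y => T (V y)) (1:ℝ) z := by
    intro z
    have h := (hTd (V z) (hVmem z)).comp z (VD z).hasDerivAt
    have hs := (hsqrtpos _ (hVmem z)).ne'
    have h2 : deriv φ (V z) * deriv V z = Real.sqrt (2 * G (V z)) := by
      rw [← hW'eq z, hderivW]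
    have heq : ψ (V z) * deriv V z = 1 := by
      simp only [hψdef]
      rw [div_mul_eq_mul_div, h2, div_self hs]
    rwa [heq] at h
  have hTVconst : ∀ z, T (V z) - z = T (V 0) - 0 :=  fun z =>
    is_const_of_deriv_eq_zero
      (fun w => ((hTVd w).sub (hasDerivAt_id w)).differentiableAt)
      (fun w => by
        have h := ((hTVd w).sub (hasDerivAt_id w)).deriv
        simpa using h) z 0
  have hTV : ∀ z, T (V z) = z := by
    intro z
    have h := hTVconst z
    rw [V0] at h
    have hTc : T αc = 0 := intervalIntegral.integral_same
    rw [hTc] at h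
    linarith
  funext z
  have h := huniq (V z) (hVmem z)
  rw [hTV z] at h
  exact h.symm
end

section
/- Explicit formula for the homogenized surface-tension–mobility constant. Let U_0 be as in the standing-wave hypotheses, and W(u) := -∫_{α_-}^{u} f(s) φ'(s) ds. Then the constant λ_0 := ( ∫_R (φ'(U_0) U_0')^2 dz ) / ( ∫_R φ'(U_0) (U_0')^2 dz ) satisfies λ_0 = ( ∫_{α_-}^{α_+} φ'(u) √(W(u)) du ) / ( ∫_{α_-}^{α_+} √(W(u)) du ). In particular, if φ(u) = u then λ_0 = 1. -/
open MeasureTheory Real Set Filter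

/-- Explicit formula for the homogenized
surface-tension–mobility constant
`λ₀ = (∫_ℝ (φ'(U₀)U₀')² dz) / (∫_ℝ φ'(U₀)(U₀')² dz)
    = (∫_{α₋}^{α₊} φ'(u)√(W(u)) du) / (∫_{α₋}^{α₊} √(W(u)) du)`,
and `λ₀ = 1` when `φ = id`. -/
theorem lambda0_formula
    (f : ℝ → ℝ) (αm αc αp : ℝ)
    (hf : ContDiff ℝ 2 f)
    (hαs : αm < αc ∧ αc < αp)
    (hzeros : ∀ s : ℝ, f s = 0 ↔ s = αm ∨ s = αc ∨ s = αp)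
    (hfm : deriv f αm < 0) (hfp : deriv f αp < 0) (hfc : 0 < deriv f αc)
    (hfbelow : ∀ s : ℝ, s < αm → 0 < f s) (hfabove : ∀ s : ℝ, αp < s → f s < 0)
    (φ : ℝ → ℝ) (Cφ : ℝ) (hCφ : 0 < Cφ)
    (hφ : ContDiff ℝ 4 φ) (hφ' : ∀ s : ℝ, Cφ ≤ deriv φ s)
    (hbal : ∫ s in αm..αp, deriv φ s * f s = 0)
    (U0 : ℝ → ℝ)
    (hU0bdd : ∃ M : ℝ, ∀ z : ℝ, |U0 z| ≤ M)
    (hU0mono : StrictMono U0)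
    (hU0C2 : ContDiff ℝ 2 U0)
    (hU0ode : ∀ z : ℝ, deriv (deriv (fun y => φ (U0 y))) z + f (U0 z) = 0)
    (hU0m : Tendsto U0 atBot (nhds αm))
    (hU0p : Tendsto U0 atTop (nhds αp))
    (hU0d : Tendsto (fun z => deriv (fun y => φ (U0 y)) z) atBot (nhds 0))
    (W : ℝ → ℝ) (hW : ∀ u : ℝ, W u = -(∫ s in αm..u, f s * deriv φ s)) :
    (∫ z : ℝ, (deriv φ (U0 z) * deriv U0 z) ^ 2) /
        (∫ z : ℝ, deriv φ (U0 z) * (deriv U0 z) ^ 2)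
      = (∫ u in αm..αp, deriv φ u * Real.sqrt (W u)) /
          (∫ u in αm..αp, Real.sqrt (W u)) ∧
    ((∀ u : ℝ, φ u = u) →
      (∫ z : ℝ, (deriv φ (U0 z) * deriv U0 z) ^ 2) /
          (∫ z : ℝ, deriv φ (U0 z) * (deriv U0 z) ^ 2) = 1) := by
  obtain ⟨hmc, hcp⟩ := hαs
  have hmp : αm < αp := hmc.trans hcp
  -- basic regularity facts
  have hfd : Differentiable ℝ f := hf.differentiable (by norm_num)
  have hfcont : Continuous f := hfd.continuous
  have hφd : Differentiable ℝ φ := hφ.differentiable (by norm_num)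
  have hφ'cont : Continuous (deriv φ) := hφ.continuous_deriv (by norm_num)
  have hφ'pos : ∀ s, 0 < deriv φ s := fun s => lt_of_lt_of_le hCφ (hφ' s)
  have hU0diff : Differentiable ℝ U0 := hU0C2.differentiable (by norm_num)
  have hU0cont : Continuous U0 := hU0diff.continuous
  set d : ℝ → ℝ := deriv U0 with hd
  set P : ℝ → ℝ := deriv (fun y => φ (U0 y)) with hPdef
  -- chain rule
  have hchain : ∀ z, P z = deriv φ (U0 z) * d z := by
    intro z
    exact deriv_comp z (hφd (U0 z)) (hU0diff z)
  -- P is differentiable with derivative -f(U0 z)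
  have hφU0 : ContDiff ℝ 2 (fun y => φ (U0 y)) :=
    (hφ.of_le (by norm_num)).comp hU0C2
  have hPdiff : Differentiable ℝ P := by
    have h2 : ContDiff ℝ ((1 : WithTop ℕ∞) + 1) (fun y => φ (U0 y)) := by
      have : ((1 : WithTop ℕ∞) + 1) = 2 := by norm_num
      rw [this]; exact hφU0
    exact ((contDiff_succ_iff_deriv.mp h2).2.2).differentiable (by norm_num)
  have hPd : ∀ z, HasDerivAt P (-(f (U0 z))) z := by
    intro z
    have h1 := (hPdiff z).hasDerivAt
    have h2 : deriv P z = -(f (U0 z)) := by have := hU0ode z; linarith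
    rwa [h2] at h1
  -- derivative of W
  have hFW : ∀ u, HasDerivAt W (-(f u * deriv φ u)) u := by
    have hWfun : W = fun u => -(∫ s in αm..u, f s * deriv φ s) := funext hW
    intro u
    rw [hWfun]
    exact (intervalIntegral.integral_hasDerivAt_right
      ((hfcont.mul hφ'cont).intervalIntegrable _ _)
      ((hfcont.mul hφ'cont).stronglyMeasurableAtFilter _ _)
      (hfcont.mul hφ'cont).continuousAt).neg
  have hWdiff : Differentiable ℝ W := fun u => (hFW u).differentiableAt
  have hWcont : Continuous W := hWdiff.continuous
  have hWαm : W αm = 0 := by rw [hW]; simp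
  -- energy identity : P z ^ 2 = 2 * W (U0 z)
  have key : ∀ z, P z ^ 2 = 2 * W (U0 z) := by
    set E : ℝ → ℝ := fun z => P z ^ 2 - 2 * W (U0 z) with hE
    have hE' : ∀ z, HasDerivAt E 0 z := by
      intro z
      have h1 : HasDerivAt (fun z => P z ^ 2) ((2 : ℕ) * P z ^ 1 * (-(f (U0 z)))) z :=
        (hPd z).pow 2
      have h2 : HasDerivAt (fun z => W (U0 z)) (-(f (U0 z) * deriv φ (U0 z)) * d z) z :=
        (hFW (U0 z)).comp z (hU0diff z).hasDerivAt
      have h3 := h1.sub (h2.const_mul 2)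
      have h4 : (2 : ℕ) * P z ^ 1 * (-(f (U0 z))) - 2 * (-(f (U0 z) * deriv φ (U0 z)) * d z) = 0 := by
        rw [hchain z]; push_cast; ring
      rw [h4] at h3
      exact h3
    have hEc : ∀ z, E z = E 0 :=
      fun z => is_const_of_deriv_eq_zero (fun x => (hE' x).differentiableAt)
        (fun x => (hE' x).deriv) z 0
    have hlim : Tendsto E atBot (nhds 0) := by
      have h1 : Tendsto (fun z => P z ^ 2) atBot (nhds 0) := by
        simpa using hU0d.pow 2
      have h2 : Tendsto (fun z => W (U0 z)) atBot (nhds (W αm)) :=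
        (hWcont.tendsto αm).comp hU0m
      have h3 := h1.sub (h2.const_mul 2)
      simpa [hWαm] using h3
    have hE0 : E 0 = 0 := by
      have hc : Tendsto E atBot (nhds (E 0)) := by
        have : E = fun _ => E 0 := funext hEc
        rw [this]; exact tendsto_const_nhds
      exact tendsto_nhds_unique hc hlim
    intro z
    have h := hEc z
    rw [hE0] at h
    have : P z ^ 2 - 2 * W (U0 z) = 0 := h
    linarith
  -- derivative of U0 is nonnegative
  have hd0 : ∀ z, 0 ≤ d z := by
    intro z
    have h := (hU0diff z).hasDerivAt
    rw [hasDerivAt_iff_tendsto_slope] at h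
    have h2 : Tendsto (slope U0 z) (nhdsWithin z (Ioi z)) (nhds (d z)) :=
      h.mono_left (nhdsWithin_mono z fun x hx => ne_of_gt hx)
    refine ge_of_tendsto h2 ?_
    filter_upwards [self_mem_nhdsWithin] with x hx
    rw [slope_def_field]
    exact div_nonneg (sub_nonneg.mpr (hU0mono.monotone (le_of_lt hx)))
      (sub_nonneg.mpr (le_of_lt hx))
  have hP0 : ∀ z, 0 ≤ P z := by
    intro z
    rw [hchain z]
    exact mul_nonneg (hφ'pos _).le (hd0 z)
  have hPsqrt : ∀ z, P z = Real.sqrt (2 * W (U0 z)) := by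
    intro z
    rw [← key z, Real.sqrt_sq (hP0 z)]
  -- range of U0
  have hrange : range U0 = Ioo αm αp := by
    apply Subset.antisymm
    · rintro _ ⟨z, rfl⟩
      constructor
      · have h1 : αm ≤ U0 (z - 1) :=
          le_of_tendsto hU0m (eventually_atBot.2 ⟨z - 1, fun y hy => hU0mono.monotone hy⟩)
        exact lt_of_le_of_lt h1 (hU0mono (by linarith))
      · have h1 : U0 (z + 1) ≤ αp :=
          ge_of_tendsto hU0p (eventually_atTop.2 ⟨z + 1, fun y hy => hU0mono.monotone hy⟩)
        exact lt_of_lt_of_le (hU0mono (by linarith)) h1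
    · intro u hu
      obtain ⟨a, ha⟩ := (hU0m.eventually_lt_const hu.1).exists
      obtain ⟨b, hb⟩ := (hU0p.eventually_const_lt hu.2).exists
      have hab : a ≤ b := (hU0mono.lt_iff_lt.mp (ha.trans hb)).le
      obtain ⟨z, _, hz⟩ := intermediate_value_Icc hab hU0cont.continuousOn
        ⟨le_of_lt ha, le_of_lt hb⟩
      exact ⟨z, hz⟩
  -- change of variables
  have hCOV : ∀ g : ℝ → ℝ, (∫ u in Ioo αm αp, g u) = ∫ z, d z * g (U0 z) := by
    intro g
    have h := integral_image_eq_integral_abs_deriv_smul MeasurableSet.univ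
      (fun x _ => (hU0diff x).hasDerivAt.hasDerivWithinAt) hU0mono.injective.injOn g
    rw [image_univ, hrange] at h
    rw [h, Measure.restrict_univ]
    exact integral_congr_ae (Eventually.of_forall fun x => by
      simp only [smul_eq_mul]
      rw [abs_of_nonneg (hd0 x)])
  have hnum : (∫ z : ℝ, (deriv φ (U0 z) * d z) ^ 2)
      = ∫ u in Ioo αm αp, deriv φ u * Real.sqrt (2 * W u) := by
    refine Eq.trans ?_ (hCOV (fun u => deriv φ u * Real.sqrt (2 * W u))).symm
    refine integral_congr_ae (Eventually.of_forall fun z => ?_)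
    show (deriv φ (U0 z) * d z) ^ 2 = d z * (deriv φ (U0 z) * Real.sqrt (2 * W (U0 z)))
    rw [← hPsqrt z, hchain z]; ring
  have hden : (∫ z : ℝ, deriv φ (U0 z) * d z ^ 2)
      = ∫ u in Ioo αm αp, Real.sqrt (2 * W u) := by
    refine Eq.trans ?_ (hCOV (fun u => Real.sqrt (2 * W u))).symm
    refine integral_congr_ae (Eventually.of_forall fun z => ?_)
    show deriv φ (U0 z) * d z ^ 2 = d z * Real.sqrt (2 * W (U0 z))
    rw [← hPsqrt z, hchain z]; ring
  -- pull out √2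
  have hIoo1 : (∫ u in Ioo αm αp, deriv φ u * Real.sqrt (2 * W u))
      = Real.sqrt 2 * ∫ u in Ioo αm αp, deriv φ u * Real.sqrt (W u) := by
    rw [← integral_const_mul]
    refine integral_congr_ae (Eventually.of_forall fun u => ?_)
    simp only [Real.sqrt_mul (by norm_num : (0:ℝ) ≤ 2)]; ring
  have hIoo2 : (∫ u in Ioo αm αp, Real.sqrt (2 * W u))
      = Real.sqrt 2 * ∫ u in Ioo αm αp, Real.sqrt (W u) := by
    rw [← integral_const_mul]
    refine integral_congr_ae (Eventually.of_forall fun u => ?_)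
    simp only [Real.sqrt_mul (by norm_num : (0:ℝ) ≤ 2)]
  have hint1 : (∫ u in αm..αp, deriv φ u * Real.sqrt (W u))
      = ∫ u in Ioo αm αp, deriv φ u * Real.sqrt (W u) := by
    rw [intervalIntegral.integral_of_le hmp.le, integral_Ioc_eq_integral_Ioo]
  have hint2 : (∫ u in αm..αp, Real.sqrt (W u)) = ∫ u in Ioo αm αp, Real.sqrt (W u) := by
    rw [intervalIntegral.integral_of_le hmp.le, integral_Ioc_eq_integral_Ioo]
  have hfinal1 : (∫ z : ℝ, (deriv φ (U0 z) * d z) ^ 2) / (∫ z : ℝ, deriv φ (U0 z) * d z ^ 2)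
      = (∫ u in αm..αp, deriv φ u * Real.sqrt (W u)) / (∫ u in αm..αp, Real.sqrt (W u)) := by
    rw [hnum, hden, hIoo1, hIoo2, hint1, hint2,
      mul_div_mul_left _ _ (ne_of_gt (Real.sqrt_pos.mpr (by norm_num : (0:ℝ) < 2)))]
  -- sign analysis of f and positivity of W
  have hfαm : f αm = 0 := (hzeros αm).mpr (Or.inl rfl)
  have hfαp : f αp = 0 := (hzeros αp).mpr (Or.inr (Or.inr rfl))
  have hfneg : ∀ s ∈ Ioo αm αc, f s < 0 := by
    intro s hs
    have hder := (hfd αm).hasDerivAt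
    rw [hasDerivAt_iff_tendsto_slope] at hder
    have hder' : Tendsto (slope f αm) (nhdsWithin αm (Ioi αm)) (nhds (deriv f αm)) :=
      hder.mono_left (nhdsWithin_mono αm fun x hx => ne_of_gt hx)
    have hev : ∀ᶠ t in nhdsWithin αm (Ioi αm), slope f αm t < 0 :=
      hder'.eventually_lt_const hfm
    have hmem : Ioo αm s ∈ nhdsWithin αm (Ioi αm) := Ioo_mem_nhdsGT hs.1
    obtain ⟨t, ht, hts⟩ := (hev.and (eventually_of_mem hmem fun x hx => hx)).exists
    have h1 : 0 < t - αm := sub_pos.mpr hts.1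
    rw [slope_def_field, hfαm, sub_zero] at ht
    have htneg : f t < 0 := by
      have h2 := mul_neg_of_neg_of_pos ht h1
      rwa [div_mul_cancel₀ _ (ne_of_gt h1)] at h2
    rcases lt_trichotomy (f s) 0 with h | h | h
    · exact h
    · exfalso
      rcases (hzeros s).mp h with rfl | rfl | rfl
      · exact lt_irrefl _ hs.1
      · exact lt_irrefl _ hs.2
      · exact absurd (hs.2.trans hcp) (lt_irrefl _)
    · exfalso
      obtain ⟨c, hc, hfc0⟩ := intermediate_value_Icc hts.2.le hfcont.continuousOn
        ⟨htneg.le, h.le⟩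
      rcases (hzeros c).mp hfc0 with rfl | rfl | rfl
      · linarith [hc.1, hts.1]
      · linarith [hc.2, hs.2]
      · linarith [hc.2, hs.2, hcp]
  have hfpos : ∀ s ∈ Ioo αc αp, 0 < f s := by
    intro s hs
    have hder := (hfd αp).hasDerivAt
    rw [hasDerivAt_iff_tendsto_slope] at hder
    have hder' : Tendsto (slope f αp) (nhdsWithin αp (Iio αp)) (nhds (deriv f αp)) :=
      hder.mono_left (nhdsWithin_mono αp fun x hx => ne_of_lt hx)
    have hev : ∀ᶠ t in nhdsWithin αp (Iio αp), slope f αp t < 0 :=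
      hder'.eventually_lt_const hfp
    have hmem : Ioo s αp ∈ nhdsWithin αp (Iio αp) := Ioo_mem_nhdsLT hs.2
    obtain ⟨t, ht, hts⟩ := (hev.and (eventually_of_mem hmem fun x hx => hx)).exists
    have h1 : t - αp < 0 := sub_neg.mpr hts.2
    rw [slope_def_field, hfαp, sub_zero] at ht
    have htpos : 0 < f t := by
      have h2 := mul_pos_of_neg_of_neg ht h1
      rwa [div_mul_cancel₀ _ (ne_of_lt h1)] at h2
    rcases lt_trichotomy (f s) 0 with h | h | h
    · exfalso
      obtain ⟨c, hc, hfc0⟩ := intermediate_value_Icc hts.1.le hfcont.continuousOn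
        ⟨h.le, htpos.le⟩
      rcases (hzeros c).mp hfc0 with rfl | rfl | rfl
      · linarith [hc.1, hs.1, hmc]
      · linarith [hc.1, hs.1]
      · linarith [hc.2, hts.2]
    · exfalso
      rcases (hzeros s).mp h with rfl | rfl | rfl
      · exact absurd (hmc.trans hs.1) (lt_irrefl _)
      · exact lt_irrefl _ hs.1
      · exact lt_irrefl _ hs.2
    · exact h
  have hWval : ∀ u, W u = ∫ s in αm..u, -(f s * deriv φ s) := by
    intro u; rw [hW, ← intervalIntegral.integral_neg]
  have hbal' : (∫ s in αm..αp, f s * deriv φ s) = 0 := by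
    rw [← hbal]; exact intervalIntegral.integral_congr fun s _ => mul_comm _ _
  have hWright : ∀ u, W u = ∫ s in u..αp, f s * deriv φ s := by
    intro u
    have hadd : (∫ s in αm..u, f s * deriv φ s) + ∫ s in u..αp, f s * deriv φ s
        = ∫ s in αm..αp, f s * deriv φ s :=
      intervalIntegral.integral_add_adjacent_intervals
        ((hfcont.mul hφ'cont).intervalIntegrable αm u) ((hfcont.mul hφ'cont).intervalIntegrable u αp)
    rw [hbal'] at hadd
    rw [hW]; linarith
  have hWpos : ∀ u ∈ Ioo αm αp, 0 < W u := by
    intro u hu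
    rcases le_or_gt u αc with h | h
    · rw [hWval]
      apply intervalIntegral.intervalIntegral_pos_of_pos_on
        (((hfcont.mul hφ'cont).neg).intervalIntegrable _ _) _ hu.1
      intro x hx
      have hx' : x ∈ Ioo αm αc := ⟨hx.1, lt_of_lt_of_le hx.2 h⟩
      have h1 := hfneg x hx'
      have h2 := hφ'pos x
      show 0 < -(f x * deriv φ x)
      nlinarith
    · rw [hWright]
      apply intervalIntegral.intervalIntegral_pos_of_pos_on
        ((hfcont.mul hφ'cont).intervalIntegrable _ _) _ hu.2
      intro x hx
      exact mul_pos (hfpos x ⟨h.trans hx.1, hx.2⟩) (hφ'pos x)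
  refine ⟨hfinal1, fun hid => ?_⟩
  have hφid : deriv φ = fun _ => (1 : ℝ) := by
    have hphi : φ = fun u => u := funext hid
    rw [hphi]; funext u; simp
  have hI : 0 < ∫ u in αm..αp, Real.sqrt (W u) := by
    apply intervalIntegral.intervalIntegral_pos_of_pos_on
      ((Real.continuous_sqrt.comp hWcont).intervalIntegrable _ _) _ hmp
    intro x hx
    exact Real.sqrt_pos.mpr (hWpos x hx)
  rw [hfinal1, hφid]
  simp only [one_mul]
  exact div_self (ne_of_gt hI)
end

section
/- Strict negativity of the linearization near the stable states. Let U_0 be as in the standing-wave hypotheses. Then there exists b > 0 such that f'(U_0(z)) + (φ'(U_0))''(z) < 0 for every z ∈ R with U_0(z) ∈ [α_-, α_- + b] ∪ [α_+ - b, α_+], where (φ'(U_0))''(z) = φ'''(U_0(z)) (U_0'(z))^2 + φ''(U_0(z)) U_0''(z) denotes the second derivative in z of the function z ↦ φ'(U_0(z)). -/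
open MeasureTheory Real Set Filter

/-- Strict negativity of the linearization near the stable
states: there is `b > 0` with `f'(U₀(z)) + (φ'(U₀))''(z) < 0` whenever
`U₀(z) ∈ [α₋, α₋+b] ∪ [α₊-b, α₊]`. -/
theorem linearization_negative_near_stable_states
    (f : ℝ → ℝ) (αm αc αp : ℝ)
    (hf : ContDiff ℝ 2 f)
    (hαs : αm < αc ∧ αc < αp)
    (hzeros : ∀ s : ℝ, f s = 0 ↔ s = αm ∨ s = αc ∨ s = αp)
    (hfm : deriv f αm < 0) (hfp : deriv f αp < 0) (hfc : 0 < deriv f αc)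
    (hfbelow : ∀ s : ℝ, s < αm → 0 < f s) (hfabove : ∀ s : ℝ, αp < s → f s < 0)
    (φ : ℝ → ℝ) (Cφ : ℝ) (hCφ : 0 < Cφ)
    (hφ : ContDiff ℝ 4 φ) (hφ' : ∀ s : ℝ, Cφ ≤ deriv φ s)
    (hbal : ∫ s in αm..αp, deriv φ s * f s = 0)
    (U0 : ℝ → ℝ)
    (hU0bdd : ∃ M : ℝ, ∀ z : ℝ, |U0 z| ≤ M)
    (hU0mono : StrictMono U0)
    (hU0C2 : ContDiff ℝ 2 U0)
    (hU0ode : ∀ z : ℝ, deriv (deriv (fun y => φ (U0 y))) z + f (U0 z) = 0)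
    (hU0m : Tendsto U0 atBot (nhds αm))
    (hU0p : Tendsto U0 atTop (nhds αp))
    (hU0d : Tendsto (fun z => deriv (fun y => φ (U0 y)) z) atBot (nhds 0))
    :
    ∃ b > (0 : ℝ), ∀ z : ℝ,
      U0 z ∈ Icc αm (αm + b) ∪ Icc (αp - b) αp →
      deriv f (U0 z) + deriv (deriv (fun y => deriv φ (U0 y))) z < 0 := by
  -- Basic smoothness facts
  have hU0diff : Differentiable ℝ U0 := hU0C2.differentiable (by norm_num)
  have hU0'C1 : ContDiff ℝ 1 (deriv U0) := by
    rw [show (2 : WithTop ℕ∞) = 1 + 1 by norm_num, contDiff_succ_iff_deriv] at hU0C2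
    exact hU0C2.2.2
  have hU0'diff : Differentiable ℝ (deriv U0) := hU0'C1.differentiable (by norm_num)
  have hφdiff : Differentiable ℝ φ := hφ.differentiable (by norm_num)
  have hφ1C3 : ContDiff ℝ 3 (deriv φ) := by
    have h4 := hφ
    rw [show (4 : WithTop ℕ∞) = 3 + 1 by norm_num, contDiff_succ_iff_deriv] at h4
    exact h4.2.2
  have hφ2C2 : ContDiff ℝ 2 (deriv (deriv φ)) := by
    rw [show (3 : WithTop ℕ∞) = 2 + 1 by norm_num, contDiff_succ_iff_deriv] at hφ1C3
    exact hφ1C3.2.2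
  have hφ3C1 : ContDiff ℝ 1 (deriv (deriv (deriv φ))) := by
    rw [show (2 : WithTop ℕ∞) = 1 + 1 by norm_num, contDiff_succ_iff_deriv] at hφ2C2
    exact hφ2C2.2.2
  have hφ1diff : Differentiable ℝ (deriv φ) := hφ1C3.differentiable (by norm_num)
  have hφ2diff : Differentiable ℝ (deriv (deriv φ)) := hφ2C2.differentiable (by norm_num)
  have hf1C1 : ContDiff ℝ 1 (deriv f) := by
    have h2 := hf
    rw [show (2 : WithTop ℕ∞) = 1 + 1 by norm_num, contDiff_succ_iff_deriv] at h2
    exact h2.2.2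
  have hφ1pos : ∀ x : ℝ, 0 < deriv φ x := fun x => lt_of_lt_of_le hCφ (hφ' x)
  have hU0has : ∀ z : ℝ, HasDerivAt U0 (deriv U0 z) z := fun z => (hU0diff z).hasDerivAt
  -- chain rule for φ ∘ U0
  have hφU0has : ∀ z : ℝ, HasDerivAt (fun y => φ (U0 y)) (deriv φ (U0 z) * deriv U0 z) z :=
    fun z => (hφdiff (U0 z)).hasDerivAt.comp z (hU0has z)
  set V : ℝ → ℝ := deriv (fun y => φ (U0 y)) with hVdef
  have hVeq : ∀ z : ℝ, V z = deriv φ (U0 z) * deriv U0 z := fun z => (hφU0has z).deriv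
  -- second derivative of φ ∘ U0
  have hWhas : ∀ z : ℝ, HasDerivAt (fun z => deriv φ (U0 z) * deriv U0 z)
      (deriv (deriv φ) (U0 z) * deriv U0 z * deriv U0 z + deriv φ (U0 z) * deriv (deriv U0) z) z := by
    intro z
    exact ((hφ1diff (U0 z)).hasDerivAt.comp z (hU0has z)).mul (hU0'diff z).hasDerivAt
  have hVfun : V = fun z => deriv φ (U0 z) * deriv U0 z := funext hVeq
  have hV' : ∀ z : ℝ, deriv V z
      = deriv (deriv φ) (U0 z) * deriv U0 z * deriv U0 z + deriv φ (U0 z) * deriv (deriv U0) z := by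
    intro z; rw [hVfun]; exact (hWhas z).deriv
  have hkey : ∀ z : ℝ,
      deriv (deriv φ) (U0 z) * deriv U0 z * deriv U0 z + deriv φ (U0 z) * deriv (deriv U0) z
        = - f (U0 z) := by
    intro z
    have h1 := hU0ode z
    have h2 := hV' z
    linarith
  -- V is differentiable with derivative -f(U0 z)
  have hVhas : ∀ z : ℝ, HasDerivAt V (- f (U0 z)) z := by
    intro z
    have : HasDerivAt V
        (deriv (deriv φ) (U0 z) * deriv U0 z * deriv U0 z + deriv φ (U0 z) * deriv (deriv U0) z) z := by
      rw [hVfun]; exact hWhas z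
    rwa [hkey z] at this
  -- first integral
  set G : ℝ → ℝ := fun x => ∫ s in αm..x, deriv φ s * f s with hGdef
  have hGint : Continuous (fun s => deriv φ s * f s) := hφ1C3.continuous.mul hf.continuous
  have hGhas : ∀ x : ℝ, HasDerivAt G (deriv φ x * f x) x := fun x =>
    intervalIntegral.integral_hasDerivAt_right (hGint.intervalIntegrable _ _)
      (hGint.stronglyMeasurableAtFilter _ _) hGint.continuousAt
  have hGcont : Continuous G :=
    Differentiable.continuous (fun x => (hGhas x).differentiableAt)
  -- H = V^2/2 + G ∘ U0 is constant
  set H : ℝ → ℝ := fun z => V z ^ 2 / 2 + G (U0 z) with hHdef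
  have hHhas : ∀ z : ℝ, HasDerivAt H 0 z := by
    intro z
    have h1 : HasDerivAt (fun z => V z ^ 2 / 2)
        ((2 * V z ^ 1 * (- f (U0 z))) / 2) z := ((hVhas z).pow 2).div_const 2
    have h2 : HasDerivAt (fun z => G (U0 z))
        (deriv φ (U0 z) * f (U0 z) * deriv U0 z) z :=
      (hGhas (U0 z)).comp z (hU0has z)
    have h3 := h1.add h2
    exact h3.congr_deriv (by rw [hVeq z]; ring)
  have hHconst : ∀ z : ℝ, H z = H 0 := fun z =>
    is_const_of_deriv_eq_zero (fun x => (hHhas x).differentiableAt)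
      (fun x => (hHhas x).deriv) z 0
  have hHlim : Tendsto H atBot (nhds ((0:ℝ) ^ 2 / 2 + G αm)) := by
    exact ((hU0d.pow 2).div_const 2).add ((hGcont.tendsto αm).comp hU0m)
  have hGαm : G αm = 0 := intervalIntegral.integral_same
  have hH0 : H 0 = 0 := by
    have h1 : Tendsto H atBot (nhds (H 0)) :=
      (tendsto_congr hHconst).mpr tendsto_const_nhds
    have := tendsto_nhds_unique h1 hHlim
    rw [this, hGαm]; norm_num
  have hVsq : ∀ z : ℝ, V z ^ 2 = -2 * G (U0 z) := by
    intro z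
    have h1 := hHconst z
    rw [hH0] at h1
    have : V z ^ 2 / 2 + G (U0 z) = 0 := h1
    linarith
  -- V tends to 0 at +∞
  have hGαp : G αp = 0 := hbal
  have hGtop : Tendsto (fun z => G (U0 z)) atTop (nhds 0) := by
    have := (hGcont.tendsto αp).comp hU0p
    rwa [hGαp] at this
  have hVsqTop : Tendsto (fun z => V z ^ 2) atTop (nhds 0) := by
    have h1 : Tendsto (fun z => -2 * G (U0 z)) atTop (nhds ((-2 : ℝ) * 0)) :=
      hGtop.const_mul (-2)
    rw [mul_zero] at h1
    exact (tendsto_congr hVsq).mpr h1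
  have hVTop : Tendsto V atTop (nhds 0) := by
    rw [tendsto_zero_iff_abs_tendsto_zero]
    have h1 : Tendsto (fun z => Real.sqrt (V z ^ 2)) atTop (nhds (Real.sqrt 0)) :=
      (Real.continuous_sqrt.tendsto 0).comp hVsqTop
    simp only [Real.sqrt_sq_eq_abs, Real.sqrt_zero] at h1
    exact h1
  -- limits of U0'
  have hU0'eq : (fun z => V z / deriv φ (U0 z)) = deriv U0 := by
    funext z
    rw [hVeq z]
    exact mul_div_cancel_left₀ _ (hφ1pos (U0 z)).ne'
  have hU0'lim : ∀ (l : Filter ℝ) (a : ℝ), Tendsto U0 l (nhds a) → Tendsto V l (nhds 0) →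
      Tendsto (deriv U0) l (nhds 0) := by
    intro l a hUa hVl
    have hden : Tendsto (fun z => deriv φ (U0 z)) l (nhds (deriv φ a)) :=
      (hφ1C3.continuous.tendsto a).comp hUa
    have := Tendsto.div hVl hden (hφ1pos a).ne'
    rw [zero_div] at this
    rw [← hU0'eq]
    exact this
  have hU0'bot : Tendsto (deriv U0) atBot (nhds 0) := hU0'lim atBot αm hU0m hU0d
  have hU0'top : Tendsto (deriv U0) atTop (nhds 0) := hU0'lim atTop αp hU0p hVTop
  -- limits of U0''
  have hU0''eq : ∀ z : ℝ, deriv (deriv U0) z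
      = (- f (U0 z) - deriv (deriv φ) (U0 z) * deriv U0 z * deriv U0 z) / deriv φ (U0 z) := by
    intro z
    rw [eq_div_iff (hφ1pos (U0 z)).ne']
    linarith [hkey z]
  have hfαm : f αm = 0 := (hzeros αm).mpr (Or.inl rfl)
  have hfαp : f αp = 0 := (hzeros αp).mpr (Or.inr (Or.inr rfl))
  have hU0''lim : ∀ (l : Filter ℝ) (a : ℝ), f a = 0 → Tendsto U0 l (nhds a) →
      Tendsto (deriv U0) l (nhds 0) → Tendsto (deriv (deriv U0)) l (nhds 0) := by
    intro l a hfa hUa hU'l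
    have hnum : Tendsto (fun z => - f (U0 z) - deriv (deriv φ) (U0 z) * deriv U0 z * deriv U0 z)
        l (nhds (- f a - deriv (deriv φ) a * 0 * 0)) := by
      exact (((hf.continuous.tendsto a).comp hUa).neg).sub
        ((((hφ2C2.continuous.tendsto a).comp hUa).mul hU'l).mul hU'l)
    have hden : Tendsto (fun z => deriv φ (U0 z)) l (nhds (deriv φ a)) :=
      (hφ1C3.continuous.tendsto a).comp hUa
    have h2 := Tendsto.div hnum hden (hφ1pos a).ne'
    have h3 : Tendsto (fun z => (- f (U0 z) - deriv (deriv φ) (U0 z) * deriv U0 z * deriv U0 z)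
        / deriv φ (U0 z)) l (nhds 0) := by
      have he : (- f a - deriv (deriv φ) a * 0 * 0) / deriv φ a = 0 := by
        rw [hfa]; ring
      rw [← he]; exact h2
    exact (tendsto_congr hU0''eq).mpr h3
  have hU0''bot := hU0''lim atBot αm hfαm hU0m hU0'bot
  have hU0''top := hU0''lim atTop αp hfαp hU0p hU0'top
  -- second derivative of φ' ∘ U0
  have hψeq : deriv (fun y => deriv φ (U0 y)) = fun z => deriv (deriv φ) (U0 z) * deriv U0 z := by
    funext z
    exact ((hφ1diff (U0 z)).hasDerivAt.comp z (hU0has z)).deriv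
  have hψ'eq : ∀ z : ℝ, deriv (deriv (fun y => deriv φ (U0 y))) z
      = deriv (deriv (deriv φ)) (U0 z) * deriv U0 z * deriv U0 z
        + deriv (deriv φ) (U0 z) * deriv (deriv U0) z := by
    intro z
    rw [hψeq]
    exact (((hφ2diff (U0 z)).hasDerivAt.comp z (hU0has z)).mul (hU0'diff z).hasDerivAt).deriv
  -- limits of the full linearization expression
  have hglim : ∀ (l : Filter ℝ) (a : ℝ), Tendsto U0 l (nhds a) →
      Tendsto (deriv U0) l (nhds 0) → Tendsto (deriv (deriv U0)) l (nhds 0) →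
      Tendsto (fun z => deriv f (U0 z) + deriv (deriv (fun y => deriv φ (U0 y))) z) l
        (nhds (deriv f a)) := by
    intro l a hUa hU'l hU''l
    have h1 : Tendsto (fun z => deriv f (U0 z)
        + (deriv (deriv (deriv φ)) (U0 z) * deriv U0 z * deriv U0 z
          + deriv (deriv φ) (U0 z) * deriv (deriv U0) z)) l
        (nhds (deriv f a + (deriv (deriv (deriv φ)) a * 0 * 0 + deriv (deriv φ) a * 0))) := by
      exact ((hf1C1.continuous.tendsto a).comp hUa).add
        (((((hφ3C1.continuous.tendsto a).comp hUa).mul hU'l).mul hU'l).add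
          (((hφ2C2.continuous.tendsto a).comp hUa).mul hU''l))
    have h2 : deriv f a + (deriv (deriv (deriv φ)) a * 0 * 0 + deriv (deriv φ) a * 0)
        = deriv f a := by ring
    rw [h2] at h1
    refine Tendsto.congr (fun z => ?_) h1
    rw [hψ'eq z]
  have hgbot := hglim atBot αm hU0m hU0'bot hU0''bot
  have hgtop := hglim atTop αp hU0p hU0'top hU0''top
  -- eventual negativity
  obtain ⟨T1, hT1⟩ := eventually_atBot.mp (hgbot.eventually_lt_const hfm)
  obtain ⟨T2, hT2⟩ := eventually_atTop.mp (hgtop.eventually_lt_const hfp)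
  -- strict bounds on U0
  have hlow : ∀ z : ℝ, αm < U0 z := by
    intro z
    have h1 : αm ≤ U0 (z - 1) :=
      le_of_tendsto hU0m (eventually_atBot.mpr ⟨z - 1, fun y hy => (hU0mono.le_iff_le).mpr hy⟩)
    exact lt_of_le_of_lt h1 (hU0mono (by linarith))
  have hhigh : ∀ z : ℝ, U0 z < αp := by
    intro z
    have h1 : U0 (z + 1) ≤ αp :=
      ge_of_tendsto hU0p (eventually_atTop.mpr ⟨z + 1, fun y hy => (hU0mono.le_iff_le).mpr hy⟩)
    exact lt_of_lt_of_le (hU0mono (by linarith)) h1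
  refine ⟨min (U0 T1 - αm) (αp - U0 T2), lt_min (by linarith [hlow T1]) (by linarith [hhigh T2]), ?_⟩
  intro z hz
  rcases hz with h | h
  · have hb : U0 z ≤ U0 T1 := by
      have := min_le_left (U0 T1 - αm) (αp - U0 T2)
      have := h.2
      linarith
    exact hT1 z ((hU0mono.le_iff_le).mp hb)
  · have hb : U0 T2 ≤ U0 z := by
      have := min_le_right (U0 T1 - αm) (αp - U0 T2)
      have := h.1
      linarith
    exact hT2 z ((hU0mono.le_iff_le).mp hb)
end
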